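/- arXiv:2408.02968 — 4 statements merged into one kernel-verified Lean document; each statement's English description precedes it below -/
import Mathlib

section
/- Let ζ = exp(2πi/15) and consider the first pentadecagonal triangle with vertices A = ζ¹², B = 1, C = ζ¹¹ in ℂ (its angles are ∠A = 11π/15, ∠B = π/15, ∠C = π/5). With side lengths a = dist(B,C), b = dist(C,A), c = dist(A,B), define the internal bisector foot C₁ = (a·A + b·B)/(a+b) and the external bisector feet A₂ = (c·C − b·B)/(c−b), B₂ = (c·C − a·A)/(c−a). Then dist(C₁, A₂) = dist(C₁, B₂); that is, the bisectral triangle A₂B₂C₁ of the first pentadecagonal triangle is isosceles. -/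
set_option maxHeartbeats 4000000
set_option maxRecDepth 20000
set_option linter.unreachableTactic false
set_option linter.unusedTactic false
set_option linter.unnecessarySeqFocus false

lemma twosin (θ : ℝ) : ((2 * Real.sin θ : ℝ) : ℂ) = -Complex.I * (Complex.exp (θ * Complex.I) - Complex.exp (-(θ * Complex.I))) := by
  rw [show -((θ:ℂ) * Complex.I) = ((-θ:ℝ):ℂ) * Complex.I by push_cast; ring,
    Complex.exp_mul_I, Complex.exp_mul_I, ← Complex.ofReal_cos, ← Complex.ofReal_sin,
    ← Complex.ofReal_cos, ← Complex.ofReal_sin, Real.cos_neg, Real.sin_neg]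
  push_cast
  linear_combination (2 * Complex.sin (θ:ℂ)) * Complex.I_sq

lemma sqr_real (x y : ℝ) (hx : 0 ≤ x) (hy : 0 ≤ y) (h : (x:ℂ)^2 = (y:ℂ)^2) : x = y := by
  have h2 : x^2 = y^2 := by exact_mod_cast h
  have h3 : (x - y) * (x + y) = 0 := by linear_combination h2
  rcases mul_eq_zero.mp h3 with h4 | h4
  · linarith
  · have hx0 : x = 0 := by linarith
    have hy0 : y = 0 := by linarith
    rw [hx0, hy0]

theorem stmt_15 (ζ A B C : ℂ) (hζ : ζ = Complex.exp (2 * Real.pi * Complex.I / 15))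
    (hA : A = ζ ^ 12) (hB : B = 1) (hC : C = ζ ^ 11)
    (a b c : ℝ) (ha : a = dist B C) (hb : b = dist C A) (hc : c = dist A B)
    (C₁ A₂ B₂ : ℂ)
    (hC₁ : C₁ = ((a : ℂ) * A + (b : ℂ) * B) / ((a : ℂ) + (b : ℂ)))
    (hA₂ : A₂ = ((c : ℂ) * C - (b : ℂ) * B) / ((c : ℂ) - (b : ℂ)))
    (hB₂ : B₂ = ((c : ℂ) * C - (a : ℂ) * A) / ((c : ℂ) - (a : ℂ))) :
    dist C₁ A₂ = dist C₁ B₂ := by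
  have hpi := Real.pi_pos
  have hprim : IsPrimitiveRoot ζ 15 := by
    rw [hζ]; exact Complex.isPrimitiveRoot_exp 15 (by norm_num)
  have h15 : ζ ^ 15 = 1 := hprim.pow_eq_one
  have hζne : ζ ≠ 0 := fun h => by simp [h] at h15
  have habs : ‖ζ‖ = 1 := by
    rw [hζ, Complex.norm_exp]; norm_num
  have hconj : (starRingEnd ℂ) ζ = ζ ^ 14 := by
    have h1 : ζ * (starRingEnd ℂ) ζ = 1 := by
      rw [Complex.mul_conj, Complex.normSq_eq_norm_sq, habs]; norm_num
    have h2 : ζ * ζ ^ 14 = 1 := by linear_combination h15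
    exact mul_left_cancel₀ hζne (h1.trans h2.symm)
  -- powers as exponentials
  have hz2 : ζ ^ 2 = Complex.exp (((4*Real.pi/15 : ℝ):ℂ) * Complex.I) := by
    rw [hζ, ← Complex.exp_nat_mul]; congr 1; push_cast; ring
  have hz13 : ζ ^ 13 = Complex.exp (-(((4*Real.pi/15 : ℝ):ℂ) * Complex.I)) := by
    rw [Complex.exp_neg, ← hz2]
    exact eq_inv_of_mul_eq_one_left (by linear_combination h15)
  have hz8 : ζ ^ 8 = Complex.exp (((16*Real.pi/15 : ℝ):ℂ) * Complex.I) := by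
    rw [hζ, ← Complex.exp_nat_mul]; congr 1; push_cast; ring
  have hz7 : ζ ^ 7 = Complex.exp (-(((16*Real.pi/15 : ℝ):ℂ) * Complex.I)) := by
    rw [Complex.exp_neg, ← hz8]
    exact eq_inv_of_mul_eq_one_left (by linear_combination h15)
  have hz9 : ζ ^ 9 = Complex.exp (((18*Real.pi/15 : ℝ):ℂ) * Complex.I) := by
    rw [hζ, ← Complex.exp_nat_mul]; congr 1; push_cast; ring
  have hz6 : ζ ^ 6 = Complex.exp (-(((18*Real.pi/15 : ℝ):ℂ) * Complex.I)) := by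
    rw [Complex.exp_neg, ← hz9]
    exact eq_inv_of_mul_eq_one_left (by linear_combination h15)
  -- sine expressions
  have hsa : ((2*Real.sin (4*Real.pi/15) : ℝ):ℂ) = -Complex.I * (ζ^2 - ζ^13) := by
    rw [twosin, ← hz2, ← hz13]
  have hsinb : Real.sin (16*Real.pi/15) = -Real.sin (Real.pi/15) := by
    rw [show (16*Real.pi/15) = Real.pi/15 + Real.pi by ring]
    simp [Real.sin_add]
  have hsb : ((2*Real.sin (Real.pi/15) : ℝ):ℂ) = Complex.I * (ζ^8 - ζ^7) := by
    have h := twosin (16*Real.pi/15)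
    rw [hsinb, ← hz8, ← hz7] at h
    push_cast at h ⊢
    linear_combination -h
  have hsinc : Real.sin (18*Real.pi/15) = -Real.sin (Real.pi/5) := by
    rw [show (18*Real.pi/15) = Real.pi/5 + Real.pi by ring]
    simp [Real.sin_add]
  have hsc : ((2*Real.sin (Real.pi/5) : ℝ):ℂ) = Complex.I * (ζ^9 - ζ^6) := by
    have h := twosin (18*Real.pi/15)
    rw [hsinc, ← hz9, ← hz6] at h
    push_cast at h ⊢
    linear_combination -h
  have hp4 : 0 < Real.sin (4*Real.pi/15) := Real.sin_pos_of_pos_of_lt_pi (by positivity) (by linarith)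
  have hp1 : 0 < Real.sin (Real.pi/15) := Real.sin_pos_of_pos_of_lt_pi (by positivity) (by linarith)
  have hp3 : 0 < Real.sin (Real.pi/5) := Real.sin_pos_of_pos_of_lt_pi (by positivity) (by linarith)
  -- side length values
  have hav : a = 2*Real.sin (4*Real.pi/15) := by
    apply sqr_real _ _ (ha ▸ dist_nonneg) (by linarith)
    rw [hsa, ha, hB, hC, Complex.dist_eq, ← Complex.ofReal_pow, Complex.sq_norm,
      ← Complex.mul_conj]
    simp only [map_sub, map_pow, map_one, hconj]
    linear_combination ((-1) + (-1)*ζ^4 + ζ^11 + ζ^15 + (-1)*ζ^19 + ζ^30 + (-1)*ζ^34 + ζ^45 + (-1)*ζ^49 + ζ^60 + (-1)*ζ^64 + ζ^75 + (-1)*ζ^79 + ζ^90 + (-1)*ζ^94 + ζ^105 + (-1)*ζ^109 + ζ^120 + (-1)*ζ^124 + ζ^135 + (-1)*ζ^139 + ζ^150) * h15 + ((-1)*ζ^4 + (2)*ζ^15 + (-1)*ζ^26) * Complex.I_sq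
  have hbv : b = 2*Real.sin (Real.pi/15) := by
    apply sqr_real _ _ (hb ▸ dist_nonneg) (by linarith)
    rw [hsb, hb, hC, hA, Complex.dist_eq, ← Complex.ofReal_pow, Complex.sq_norm,
      ← Complex.mul_conj]
    simp only [map_sub, map_pow, map_one, hconj]
    linear_combination ((-1)*ζ^14 + (2)*ζ^15 + (-1)*ζ^16 + (-1)*ζ^29 + (2)*ζ^30 + (-1)*ζ^31 + (-1)*ζ^44 + (2)*ζ^45 + (-1)*ζ^46 + (-1)*ζ^59 + (2)*ζ^60 + (-1)*ζ^61 + (-1)*ζ^74 + (2)*ζ^75 + (-1)*ζ^76 + (-1)*ζ^89 + (2)*ζ^90 + (-1)*ζ^91 + (-1)*ζ^104 + (2)*ζ^105 + (-1)*ζ^106 + (-1)*ζ^119 + (2)*ζ^120 + (-1)*ζ^121 + (-1)*ζ^134 + (2)*ζ^135 + (-1)*ζ^136 + (-1)*ζ^149 + (2)*ζ^150 + (-1)*ζ^151 + (-1)*ζ^164 + ζ^165) * h15 + ((-1)*ζ^14 + (2)*ζ^15 + (-1)*ζ^16) * Complex.I_sq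
  have hcv : c = 2*Real.sin (Real.pi/5) := by
    apply sqr_real _ _ (hc ▸ dist_nonneg) (by linarith)
    rw [hsc, hc, hA, hB, Complex.dist_eq, ← Complex.ofReal_pow, Complex.sq_norm,
      ← Complex.mul_conj]
    simp only [map_sub, map_pow, map_one, hconj]
    linear_combination ((-1) + ζ^15 + (-1)*ζ^18 + ζ^30 + (-1)*ζ^33 + ζ^45 + (-1)*ζ^48 + ζ^60 + (-1)*ζ^63 + ζ^75 + (-1)*ζ^78 + ζ^90 + (-1)*ζ^93 + ζ^105 + (-1)*ζ^108 + ζ^120 + (-1)*ζ^123 + ζ^135 + (-1)*ζ^138 + ζ^150 + (-1)*ζ^153 + ζ^165) * h15 + ((-1)*ζ^12 + (2)*ζ^15 + (-1)*ζ^18) * Complex.I_sq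
  -- inequalities
  have hmono := Real.strictMonoOn_sin
  have hbc : Real.sin (Real.pi/15) < Real.sin (Real.pi/5) :=
    hmono ⟨by linarith, by linarith⟩ ⟨by linarith, by linarith⟩ (by linarith)
  have hca0 : Real.sin (Real.pi/5) < Real.sin (4*Real.pi/15) :=
    hmono ⟨by linarith, by linarith⟩ ⟨by linarith, by linarith⟩ (by linarith)
  have hab' : (a:ℂ) + (b:ℂ) ≠ 0 := by
    have h0 : a + b ≠ 0 := by rw [hav, hbv]; nlinarith
    exact_mod_cast h0
  have hcb' : (c:ℂ) - (b:ℂ) ≠ 0 := by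
    have h0 : c - b ≠ 0 := by rw [hcv, hbv]; nlinarith
    exact_mod_cast h0
  have hca' : (c:ℂ) - (a:ℂ) ≠ 0 := by
    have h0 : c - a ≠ 0 := by rw [hcv, hav]; nlinarith
    exact_mod_cast h0
  have haC : (a:ℂ) = -Complex.I * (ζ^2 - ζ^13) := by rw [hav]; exact hsa
  have hbC : (b:ℂ) = Complex.I * (ζ^8 - ζ^7) := by rw [hbv]; exact hsb
  have hcC : (c:ℂ) = Complex.I * (ζ^9 - ζ^6) := by rw [hcv]; exact hsc
  have key : (((a:ℂ) * ζ^12 + (b:ℂ)) * ((c:ℂ) - (b:ℂ)) - ((a:ℂ) + (b:ℂ)) * ((c:ℂ) * ζ^11 - (b:ℂ))) *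
      (((a:ℂ) * (ζ^14)^12 + (b:ℂ)) * ((c:ℂ) - (b:ℂ)) - ((a:ℂ) + (b:ℂ)) * ((c:ℂ) * (ζ^14)^11 - (b:ℂ))) *
      (((c:ℂ) - (a:ℂ)) * ((c:ℂ) - (a:ℂ))) =
      (((a:ℂ) * ζ^12 + (b:ℂ)) * ((c:ℂ) - (a:ℂ)) - ((a:ℂ) + (b:ℂ)) * ((c:ℂ) * ζ^11 - (a:ℂ) * ζ^12)) *
      (((a:ℂ) * (ζ^14)^12 + (b:ℂ)) * ((c:ℂ) - (a:ℂ)) - ((a:ℂ) + (b:ℂ)) * ((c:ℂ) * (ζ^14)^11 - (a:ℂ) * (ζ^14)^12)) *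
      (((c:ℂ) - (b:ℂ)) * ((c:ℂ) - (b:ℂ))) := by
    linear_combination ((4)*(b:ℂ)^2*(c:ℂ)^3 + (-6)*(b:ℂ)^3*(c:ℂ)^2 + (2)*(b:ℂ)^4*(c:ℂ) + (-4)*(a:ℂ)*(b:ℂ)*(c:ℂ)^3 + (2)*(a:ℂ)*(b:ℂ)^3*(c:ℂ) + (-2)*(a:ℂ)*(b:ℂ)^4 + (-4)*(a:ℂ)^2*(c:ℂ)^3 + (6)*(a:ℂ)^2*(b:ℂ)*(c:ℂ)^2 + (-2)*(a:ℂ)^2*(b:ℂ)^2*(c:ℂ) + (2)*(a:ℂ)^3*(c:ℂ)^2 + (-2)*(a:ℂ)^3*(b:ℂ)*(c:ℂ) + (2)*(a:ℂ)^3*(b:ℂ)^2 + (8)*Complex.I^2*(c:ℂ)^3 + (-10)*Complex.I^2*(b:ℂ)*(c:ℂ)^2 + (2)*Complex.I^2*(b:ℂ)^2*(c:ℂ) + (-4)*Complex.I^2*(a:ℂ)*(c:ℂ)^2 + (2)*Complex.I^2*(a:ℂ)*(b:ℂ)*(c:ℂ) + (-4)*Complex.I^2*(a:ℂ)*(b:ℂ)^2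 + (-1)*ζ*(b:ℂ)^3*(c:ℂ)^2 + ζ*(b:ℂ)^4*(c:ℂ) + (2)*ζ*(a:ℂ)*(b:ℂ)*(c:ℂ)^3 + (-3)*ζ*(a:ℂ)*(b:ℂ)^2*(c:ℂ)^2 + ζ*(a:ℂ)*(b:ℂ)^3*(c:ℂ) + (2)*ζ*(a:ℂ)^2*(c:ℂ)^3 + (-3)*ζ*(a:ℂ)^2*(b:ℂ)*(c:ℂ)^2 + ζ*(a:ℂ)^2*(b:ℂ)^2*(c:ℂ) + (-1)*ζ*(a:ℂ)^3*(c:ℂ)^2 + ζ*(a:ℂ)^3*(b:ℂ)*(c:ℂ) + (-2)*ζ*Complex.I*(b:ℂ)*(c:ℂ)^3 + (3)*ζ*Complex.I*(b:ℂ)^2*(c:ℂ)^2 + (-2)*ζ*Complex.I*(b:ℂ)^3*(c:ℂ) + ζ*Complex.I*(b:ℂ)^4 + (-2)*ζ*Complex.I*(a:ℂ)*(c:ℂ)^3 + (2)*ζ*Complex.I*(a:ℂ)*(b:ℂ)*(c:ℂ)^2 + ζ*Complex.I*(a:ℂ)^2*(c:ℂ)^2 + (-1)*ζ*Complex.I*(a:ℂ)^2*(b:ℂ)^2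 + (-4)*ζ*Complex.I^2*(c:ℂ)^3 + (5)*ζ*Complex.I^2*(b:ℂ)*(c:ℂ)^2 + (-1)*ζ*Complex.I^2*(b:ℂ)^2*(c:ℂ) + (2)*ζ*Complex.I^2*(a:ℂ)*(c:ℂ)^2 + (-1)*ζ*Complex.I^2*(a:ℂ)*(b:ℂ)*(c:ℂ) + (-1)*ζ*Complex.I^2*(a:ℂ)*(b:ℂ)^2 + (-3)*ζ*Complex.I^3*(c:ℂ)^2 + (3)*ζ*Complex.I^3*(b:ℂ)^2 + (4)*ζ^2*Complex.I*(b:ℂ)*(c:ℂ)^3 + (3)*ζ^2*Complex.I*(b:ℂ)^2*(c:ℂ)^2 + (-3)*ζ^2*Complex.I*(b:ℂ)^3*(c:ℂ) + (2)*ζ^2*Complex.I*(b:ℂ)^4 + (4)*ζ^2*Complex.I*(a:ℂ)*(c:ℂ)^3 + (-5)*ζ^2*Complex.I*(a:ℂ)*(b:ℂ)*(c:ℂ)^2 + ζ^2*Complex.I*(a:ℂ)*(b:ℂ)^2*(c:ℂ) + (-2)*ζ^2*Complex.I*(a:ℂ)^2*(c:ℂ)^2 + ζ^2*Complex.I*(a:ℂ)^2*(b:ℂ)*(c:ℂ)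 + (-2)*ζ^2*Complex.I*(a:ℂ)^2*(b:ℂ)^2 + (6)*ζ^2*Complex.I^3*(c:ℂ)^2 + (-2)*ζ^2*Complex.I^3*(b:ℂ)*(c:ℂ) + (6)*ζ^2*Complex.I^3*(b:ℂ)^2 + ζ^3*(b:ℂ)^3*(c:ℂ)^2 + (-1)*ζ^3*(b:ℂ)^4*(c:ℂ) + (-1)*ζ^3*(a:ℂ)*(b:ℂ)^3*(c:ℂ) + ζ^3*(a:ℂ)*(b:ℂ)^4 + (-1)*ζ^3*(a:ℂ)^2*(b:ℂ)*(c:ℂ)^2 + ζ^3*(a:ℂ)^2*(b:ℂ)^2*(c:ℂ) + ζ^3*(a:ℂ)^3*(b:ℂ)*(c:ℂ) + (-1)*ζ^3*(a:ℂ)^3*(b:ℂ)^2 + (-2)*ζ^3*Complex.I*(b:ℂ)*(c:ℂ)^3 + (3)*ζ^3*Complex.I*(b:ℂ)^2*(c:ℂ)^2 + (-1)*ζ^3*Complex.I*(b:ℂ)^3*(c:ℂ) + (-2)*ζ^3*Complex.I*(a:ℂ)*(c:ℂ)^3 + (3)*ζ^3*Complex.I*(a:ℂ)*(b:ℂ)*(c:ℂ)^2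 + (-1)*ζ^3*Complex.I*(a:ℂ)*(b:ℂ)^2*(c:ℂ) + ζ^3*Complex.I*(a:ℂ)^2*(c:ℂ)^2 + (-1)*ζ^3*Complex.I*(a:ℂ)^2*(b:ℂ)*(c:ℂ) + (2)*ζ^3*Complex.I^2*(c:ℂ)^3 + (-1)*ζ^3*Complex.I^2*(b:ℂ)*(c:ℂ)^2 + (-1)*ζ^3*Complex.I^2*(b:ℂ)^2*(c:ℂ) + (-1)*ζ^3*Complex.I^2*(a:ℂ)*(c:ℂ)^2 + (-1)*ζ^3*Complex.I^2*(a:ℂ)*(b:ℂ)*(c:ℂ) + (2)*ζ^3*Complex.I^2*(a:ℂ)*(b:ℂ)^2 + (-3)*ζ^3*Complex.I^3*(c:ℂ)^2 + (2)*ζ^3*Complex.I^3*(b:ℂ)*(c:ℂ) + ζ^3*Complex.I^3*(b:ℂ)^2 + (-2)*ζ^4*(b:ℂ)^2*(c:ℂ)^3 + (3)*ζ^4*(b:ℂ)^3*(c:ℂ)^2 + (-1)*ζ^4*(b:ℂ)^4*(c:ℂ) + (3)*ζ^4*(a:ℂ)*(b:ℂ)^2*(c:ℂ)^2 + (-1)*ζ^4*(a:ℂ)*(b:ℂ)^3*(c:ℂ)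 + ζ^4*(a:ℂ)^2*(b:ℂ)*(c:ℂ)^2 + (-1)*ζ^4*(a:ℂ)^2*(b:ℂ)^2*(c:ℂ) + (-1)*ζ^4*(a:ℂ)^3*(b:ℂ)*(c:ℂ) + (-4)*ζ^4*Complex.I^2*(c:ℂ)^3 + (4)*ζ^4*Complex.I^2*(b:ℂ)*(c:ℂ)^2 + (2)*ζ^4*Complex.I^2*(a:ℂ)*(c:ℂ)^2 + (2)*ζ^4*Complex.I^2*(a:ℂ)*(b:ℂ)^2 + ζ^5*Complex.I*(b:ℂ)^3*(c:ℂ) + (-1)*ζ^5*Complex.I*(b:ℂ)^4 + ζ^5*Complex.I*(a:ℂ)*(b:ℂ)*(c:ℂ)^2 + (-1)*ζ^5*Complex.I*(a:ℂ)*(b:ℂ)^2*(c:ℂ) + (-1)*ζ^5*Complex.I*(a:ℂ)^2*(b:ℂ)*(c:ℂ) + ζ^5*Complex.I*(a:ℂ)^2*(b:ℂ)^2 + (2)*ζ^5*Complex.I^2*(c:ℂ)^3 + (-3)*ζ^5*Complex.I^2*(b:ℂ)*(c:ℂ)^2 + ζ^5*Complex.I^2*(b:ℂ)^2*(c:ℂ)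 + (-1)*ζ^5*Complex.I^2*(a:ℂ)*(c:ℂ)^2 + ζ^5*Complex.I^2*(a:ℂ)*(b:ℂ)*(c:ℂ) + ζ^5*Complex.I^3*(c:ℂ)^2 + ζ^5*Complex.I^3*(b:ℂ)*(c:ℂ) + (-3)*ζ^5*Complex.I^3*(b:ℂ)^2 + (-3)*ζ^6*Complex.I*(b:ℂ)^2*(c:ℂ)^2 + ζ^6*Complex.I*(b:ℂ)^3*(c:ℂ) + (-1)*ζ^6*Complex.I*(a:ℂ)*(b:ℂ)*(c:ℂ)^2 + ζ^6*Complex.I*(a:ℂ)*(b:ℂ)^2*(c:ℂ) + ζ^6*Complex.I*(a:ℂ)^2*(b:ℂ)*(c:ℂ) + (-2)*ζ^6*Complex.I^3*(c:ℂ)^2 + (-3)*ζ^6*Complex.I^3*(b:ℂ)^2 + (-1)*ζ^7*Complex.I^2*(a:ℂ)*(b:ℂ)^2 + ζ^7*Complex.I^3*(c:ℂ)^2 + (-1)*ζ^7*Complex.I^3*(b:ℂ)*(c:ℂ) + (-1)*ζ^8*Complex.I^2*(a:ℂ)*(b:ℂ)^2 + (-1)*ζ^8*Complex.I^3*(c:ℂ)^2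 + ζ^8*Complex.I^3*(b:ℂ)*(c:ℂ) + (3)*ζ^9*Complex.I*(b:ℂ)^2*(c:ℂ)^2 + (-1)*ζ^9*Complex.I*(b:ℂ)^3*(c:ℂ) + ζ^9*Complex.I*(a:ℂ)*(b:ℂ)*(c:ℂ)^2 + (-1)*ζ^9*Complex.I*(a:ℂ)*(b:ℂ)^2*(c:ℂ) + (-1)*ζ^9*Complex.I*(a:ℂ)^2*(b:ℂ)*(c:ℂ) + (2)*ζ^9*Complex.I^3*(c:ℂ)^2 + (3)*ζ^9*Complex.I^3*(b:ℂ)^2 + (-1)*ζ^10*Complex.I*(b:ℂ)^3*(c:ℂ) + ζ^10*Complex.I*(b:ℂ)^4 + (-1)*ζ^10*Complex.I*(a:ℂ)*(b:ℂ)*(c:ℂ)^2 + ζ^10*Complex.I*(a:ℂ)*(b:ℂ)^2*(c:ℂ) + ζ^10*Complex.I*(a:ℂ)^2*(b:ℂ)*(c:ℂ) + (-1)*ζ^10*Complex.I*(a:ℂ)^2*(b:ℂ)^2 + (2)*ζ^10*Complex.I^2*(c:ℂ)^3 + (-3)*ζ^10*Complex.I^2*(b:ℂ)*(c:ℂ)^2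 + ζ^10*Complex.I^2*(b:ℂ)^2*(c:ℂ) + (-1)*ζ^10*Complex.I^2*(a:ℂ)*(c:ℂ)^2 + ζ^10*Complex.I^2*(a:ℂ)*(b:ℂ)*(c:ℂ) + (-1)*ζ^10*Complex.I^3*(c:ℂ)^2 + (-1)*ζ^10*Complex.I^3*(b:ℂ)*(c:ℂ) + (3)*ζ^10*Complex.I^3*(b:ℂ)^2 + (-2)*ζ^11*(b:ℂ)^2*(c:ℂ)^3 + (3)*ζ^11*(b:ℂ)^3*(c:ℂ)^2 + (-1)*ζ^11*(b:ℂ)^4*(c:ℂ) + (3)*ζ^11*(a:ℂ)*(b:ℂ)^2*(c:ℂ)^2 + (-1)*ζ^11*(a:ℂ)*(b:ℂ)^3*(c:ℂ) + ζ^11*(a:ℂ)^2*(b:ℂ)*(c:ℂ)^2 + (-1)*ζ^11*(a:ℂ)^2*(b:ℂ)^2*(c:ℂ) + (-1)*ζ^11*(a:ℂ)^3*(b:ℂ)*(c:ℂ) + (-4)*ζ^11*Complex.I^2*(c:ℂ)^3 + (4)*ζ^11*Complex.I^2*(b:ℂ)*(c:ℂ)^2 + (2)*ζ^11*Complex.I^2*(a:ℂ)*(c:ℂ)^2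 + (2)*ζ^11*Complex.I^2*(a:ℂ)*(b:ℂ)^2 + ζ^12*(b:ℂ)^3*(c:ℂ)^2 + (-1)*ζ^12*(b:ℂ)^4*(c:ℂ) + (-1)*ζ^12*(a:ℂ)*(b:ℂ)^3*(c:ℂ) + ζ^12*(a:ℂ)*(b:ℂ)^4 + (-1)*ζ^12*(a:ℂ)^2*(b:ℂ)*(c:ℂ)^2 + ζ^12*(a:ℂ)^2*(b:ℂ)^2*(c:ℂ) + ζ^12*(a:ℂ)^3*(b:ℂ)*(c:ℂ) + (-1)*ζ^12*(a:ℂ)^3*(b:ℂ)^2 + (2)*ζ^12*Complex.I*(b:ℂ)*(c:ℂ)^3 + (-3)*ζ^12*Complex.I*(b:ℂ)^2*(c:ℂ)^2 + ζ^12*Complex.I*(b:ℂ)^3*(c:ℂ) + (2)*ζ^12*Complex.I*(a:ℂ)*(c:ℂ)^3 + (-3)*ζ^12*Complex.I*(a:ℂ)*(b:ℂ)*(c:ℂ)^2 + ζ^12*Complex.I*(a:ℂ)*(b:ℂ)^2*(c:ℂ) + (-1)*ζ^12*Complex.I*(a:ℂ)^2*(c:ℂ)^2 + ζ^12*Complex.I*(a:ℂ)^2*(b:ℂ)*(c:ℂ)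 + (2)*ζ^12*Complex.I^2*(c:ℂ)^3 + (-1)*ζ^12*Complex.I^2*(b:ℂ)*(c:ℂ)^2 + (-1)*ζ^12*Complex.I^2*(b:ℂ)^2*(c:ℂ) + (-1)*ζ^12*Complex.I^2*(a:ℂ)*(c:ℂ)^2 + (-1)*ζ^12*Complex.I^2*(a:ℂ)*(b:ℂ)*(c:ℂ) + (2)*ζ^12*Complex.I^2*(a:ℂ)*(b:ℂ)^2 + (3)*ζ^12*Complex.I^3*(c:ℂ)^2 + (-2)*ζ^12*Complex.I^3*(b:ℂ)*(c:ℂ) + (-1)*ζ^12*Complex.I^3*(b:ℂ)^2 + (-4)*ζ^13*Complex.I*(b:ℂ)*(c:ℂ)^3 + (-3)*ζ^13*Complex.I*(b:ℂ)^2*(c:ℂ)^2 + (3)*ζ^13*Complex.I*(b:ℂ)^3*(c:ℂ) + (-2)*ζ^13*Complex.I*(b:ℂ)^4 + (-4)*ζ^13*Complex.I*(a:ℂ)*(c:ℂ)^3 + (5)*ζ^13*Complex.I*(a:ℂ)*(b:ℂ)*(c:ℂ)^2 + (-1)*ζ^13*Complex.I*(a:ℂ)*(b:ℂ)^2*(c:ℂ)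 + (2)*ζ^13*Complex.I*(a:ℂ)^2*(c:ℂ)^2 + (-1)*ζ^13*Complex.I*(a:ℂ)^2*(b:ℂ)*(c:ℂ) + (2)*ζ^13*Complex.I*(a:ℂ)^2*(b:ℂ)^2 + (-6)*ζ^13*Complex.I^3*(c:ℂ)^2 + (2)*ζ^13*Complex.I^3*(b:ℂ)*(c:ℂ) + (-6)*ζ^13*Complex.I^3*(b:ℂ)^2 + (-1)*ζ^14*(b:ℂ)^3*(c:ℂ)^2 + ζ^14*(b:ℂ)^4*(c:ℂ) + (2)*ζ^14*(a:ℂ)*(b:ℂ)*(c:ℂ)^3 + (-3)*ζ^14*(a:ℂ)*(b:ℂ)^2*(c:ℂ)^2 + ζ^14*(a:ℂ)*(b:ℂ)^3*(c:ℂ) + (2)*ζ^14*(a:ℂ)^2*(c:ℂ)^3 + (-3)*ζ^14*(a:ℂ)^2*(b:ℂ)*(c:ℂ)^2 + ζ^14*(a:ℂ)^2*(b:ℂ)^2*(c:ℂ) + (-1)*ζ^14*(a:ℂ)^3*(c:ℂ)^2 + ζ^14*(a:ℂ)^3*(b:ℂ)*(c:ℂ) + (2)*ζ^14*Complex.I*(b:ℂ)*(c:ℂ)^3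 + (-3)*ζ^14*Complex.I*(b:ℂ)^2*(c:ℂ)^2 + (2)*ζ^14*Complex.I*(b:ℂ)^3*(c:ℂ) + (-1)*ζ^14*Complex.I*(b:ℂ)^4 + (2)*ζ^14*Complex.I*(a:ℂ)*(c:ℂ)^3 + (-2)*ζ^14*Complex.I*(a:ℂ)*(b:ℂ)*(c:ℂ)^2 + (-1)*ζ^14*Complex.I*(a:ℂ)^2*(c:ℂ)^2 + ζ^14*Complex.I*(a:ℂ)^2*(b:ℂ)^2 + (-4)*ζ^14*Complex.I^2*(c:ℂ)^3 + (5)*ζ^14*Complex.I^2*(b:ℂ)*(c:ℂ)^2 + (-1)*ζ^14*Complex.I^2*(b:ℂ)^2*(c:ℂ) + (2)*ζ^14*Complex.I^2*(a:ℂ)*(c:ℂ)^2 + (-1)*ζ^14*Complex.I^2*(a:ℂ)*(b:ℂ)*(c:ℂ) + (-1)*ζ^14*Complex.I^2*(a:ℂ)*(b:ℂ)^2 + (3)*ζ^14*Complex.I^3*(c:ℂ)^2 + (-3)*ζ^14*Complex.I^3*(b:ℂ)^2) * haC + ((4)*(b:ℂ)^2*(c:ℂ)^3 + (-2)*(b:ℂ)^3*(c:ℂ)^2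 + (10)*Complex.I^2*(b:ℂ)*(c:ℂ)^2 + (-6)*Complex.I^2*(b:ℂ)^2*(c:ℂ) + (4)*Complex.I^2*(b:ℂ)^3 + (2)*Complex.I^4*(c:ℂ) + (6)*Complex.I^4*(b:ℂ) + (2)*ζ*Complex.I*(b:ℂ)^2*(c:ℂ)^2 + (-2)*ζ*Complex.I*(b:ℂ)^3*(c:ℂ) + (2)*ζ*Complex.I^2*(c:ℂ)^3 + ζ*Complex.I^2*(b:ℂ)*(c:ℂ)^2 + (-2)*ζ*Complex.I^2*(b:ℂ)^2*(c:ℂ) + ζ*Complex.I^2*(b:ℂ)^3 + (2)*ζ*Complex.I^3*(c:ℂ)^2 + (-1)*ζ*Complex.I^3*(b:ℂ)*(c:ℂ) + ζ*Complex.I^3*(b:ℂ)^2 + ζ*Complex.I^4*(c:ℂ) + (6)*ζ*Complex.I^4*(b:ℂ) + (4)*ζ*Complex.I^5 + (-6)*ζ^2*Complex.I*(b:ℂ)*(c:ℂ)^3 + (9)*ζ^2*Complex.I*(b:ℂ)^2*(c:ℂ)^2 + (-3)*ζ^2*Complex.I*(b:ℂ)^3*(c:ℂ) + (-2)*ζ^2*Complex.I^2*(c:ℂ)^3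 + (2)*ζ^2*Complex.I^2*(b:ℂ)*(c:ℂ)^2 + ζ^2*Complex.I^3*(c:ℂ)^2 + ζ^2*Complex.I^4*(c:ℂ) + (-1)*ζ^2*Complex.I^4*(b:ℂ) + (4)*ζ^2*Complex.I^5 + (2)*ζ^3*Complex.I*(b:ℂ)*(c:ℂ)^3 + (-1)*ζ^3*Complex.I*(b:ℂ)^3*(c:ℂ) + (-1)*ζ^3*Complex.I^2*(b:ℂ)*(c:ℂ)^2 + (2)*ζ^3*Complex.I^2*(b:ℂ)^2*(c:ℂ) + (-2)*ζ^3*Complex.I^2*(b:ℂ)^3 + (5)*ζ^3*Complex.I^3*(c:ℂ)^2 + (-2)*ζ^3*Complex.I^3*(b:ℂ)*(c:ℂ) + (2)*ζ^3*Complex.I^3*(b:ℂ)^2 + (-1)*ζ^3*Complex.I^4*(c:ℂ) + (-4)*ζ^3*Complex.I^4*(b:ℂ) + (4)*ζ^3*Complex.I^5 + (-2)*ζ^4*(b:ℂ)^2*(c:ℂ)^3 + ζ^4*(b:ℂ)^3*(c:ℂ)^2 + (-2)*ζ^4*Complex.I*(b:ℂ)*(c:ℂ)^3 + ζ^4*Complex.I*(b:ℂ)^2*(c:ℂ)^2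 + (-7)*ζ^4*Complex.I^2*(b:ℂ)*(c:ℂ)^2 + (3)*ζ^4*Complex.I^2*(b:ℂ)^2*(c:ℂ) + (-2)*ζ^4*Complex.I^2*(b:ℂ)^3 + (-6)*ζ^4*Complex.I^3*(c:ℂ)^2 + ζ^4*Complex.I^3*(b:ℂ)*(c:ℂ) + (-1)*ζ^4*Complex.I^4*(c:ℂ) + (-7)*ζ^4*Complex.I^4*(b:ℂ) + (-3)*ζ^4*Complex.I^5 + (-1)*ζ^5*Complex.I*(b:ℂ)^2*(c:ℂ)^2 + ζ^5*Complex.I*(b:ℂ)^3*(c:ℂ) + (-6)*ζ^5*Complex.I^2*(c:ℂ)^3 + (6)*ζ^5*Complex.I^2*(b:ℂ)*(c:ℂ)^2 + (-1)*ζ^5*Complex.I^2*(b:ℂ)^2*(c:ℂ) + (-2)*ζ^5*Complex.I^3*(c:ℂ)^2 + (3)*ζ^5*Complex.I^3*(b:ℂ)*(c:ℂ) + (-2)*ζ^5*Complex.I^3*(b:ℂ)^2 + (-1)*ζ^5*Complex.I^4*(c:ℂ) + (-3)*ζ^5*Complex.I^4*(b:ℂ) + (-3)*ζ^5*Complex.I^5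 + (2)*ζ^6*Complex.I*(b:ℂ)*(c:ℂ)^3 + (-3)*ζ^6*Complex.I*(b:ℂ)^2*(c:ℂ)^2 + ζ^6*Complex.I*(b:ℂ)^3*(c:ℂ) + (6)*ζ^6*Complex.I^2*(c:ℂ)^3 + (-7)*ζ^6*Complex.I^2*(b:ℂ)*(c:ℂ)^2 + ζ^6*Complex.I^2*(b:ℂ)^2*(c:ℂ) + (-3)*ζ^6*Complex.I^3*(c:ℂ)^2 + (2)*ζ^6*Complex.I^3*(b:ℂ)*(c:ℂ) + (-1)*ζ^6*Complex.I^3*(b:ℂ)^2 + ζ^6*Complex.I^4*(b:ℂ) + (-7)*ζ^6*Complex.I^5 + (-4)*ζ^7*Complex.I*(b:ℂ)*(c:ℂ)^3 + (2)*ζ^7*Complex.I*(b:ℂ)^2*(c:ℂ)^2 + ζ^7*Complex.I^2*(b:ℂ)*(c:ℂ)^2 + ζ^7*Complex.I^2*(b:ℂ)^3 + (-6)*ζ^7*Complex.I^3*(c:ℂ)^2 + (3)*ζ^7*Complex.I^3*(b:ℂ)*(c:ℂ) + (-3)*ζ^7*Complex.I^3*(b:ℂ)^2 + (5)*ζ^7*Complex.I^4*(b:ℂ)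 + (4)*ζ^8*Complex.I*(b:ℂ)*(c:ℂ)^3 + (-2)*ζ^8*Complex.I*(b:ℂ)^2*(c:ℂ)^2 + ζ^8*Complex.I^2*(b:ℂ)*(c:ℂ)^2 + ζ^8*Complex.I^2*(b:ℂ)^3 + (6)*ζ^8*Complex.I^3*(c:ℂ)^2 + (-3)*ζ^8*Complex.I^3*(b:ℂ)*(c:ℂ) + (3)*ζ^8*Complex.I^3*(b:ℂ)^2 + (5)*ζ^8*Complex.I^4*(b:ℂ) + (-2)*ζ^9*Complex.I*(b:ℂ)*(c:ℂ)^3 + (3)*ζ^9*Complex.I*(b:ℂ)^2*(c:ℂ)^2 + (-1)*ζ^9*Complex.I*(b:ℂ)^3*(c:ℂ) + (6)*ζ^9*Complex.I^2*(c:ℂ)^3 + (-7)*ζ^9*Complex.I^2*(b:ℂ)*(c:ℂ)^2 + ζ^9*Complex.I^2*(b:ℂ)^2*(c:ℂ) + (3)*ζ^9*Complex.I^3*(c:ℂ)^2 + (-2)*ζ^9*Complex.I^3*(b:ℂ)*(c:ℂ) + ζ^9*Complex.I^3*(b:ℂ)^2 + ζ^9*Complex.I^4*(b:ℂ) + (7)*ζ^9*Complex.I^5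 + ζ^10*Complex.I*(b:ℂ)^2*(c:ℂ)^2 + (-1)*ζ^10*Complex.I*(b:ℂ)^3*(c:ℂ) + (-6)*ζ^10*Complex.I^2*(c:ℂ)^3 + (6)*ζ^10*Complex.I^2*(b:ℂ)*(c:ℂ)^2 + (-1)*ζ^10*Complex.I^2*(b:ℂ)^2*(c:ℂ) + (2)*ζ^10*Complex.I^3*(c:ℂ)^2 + (-3)*ζ^10*Complex.I^3*(b:ℂ)*(c:ℂ) + (2)*ζ^10*Complex.I^3*(b:ℂ)^2 + (-1)*ζ^10*Complex.I^4*(c:ℂ) + (-3)*ζ^10*Complex.I^4*(b:ℂ) + (3)*ζ^10*Complex.I^5 + (-2)*ζ^11*(b:ℂ)^2*(c:ℂ)^3 + ζ^11*(b:ℂ)^3*(c:ℂ)^2 + (2)*ζ^11*Complex.I*(b:ℂ)*(c:ℂ)^3 + (-1)*ζ^11*Complex.I*(b:ℂ)^2*(c:ℂ)^2 + (-7)*ζ^11*Complex.I^2*(b:ℂ)*(c:ℂ)^2 + (3)*ζ^11*Complex.I^2*(b:ℂ)^2*(c:ℂ) + (-2)*ζ^11*Complex.I^2*(b:ℂ)^3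 + (6)*ζ^11*Complex.I^3*(c:ℂ)^2 + (-1)*ζ^11*Complex.I^3*(b:ℂ)*(c:ℂ) + (-1)*ζ^11*Complex.I^4*(c:ℂ) + (-7)*ζ^11*Complex.I^4*(b:ℂ) + (3)*ζ^11*Complex.I^5 + (-2)*ζ^12*Complex.I*(b:ℂ)*(c:ℂ)^3 + ζ^12*Complex.I*(b:ℂ)^3*(c:ℂ) + (-1)*ζ^12*Complex.I^2*(b:ℂ)*(c:ℂ)^2 + (2)*ζ^12*Complex.I^2*(b:ℂ)^2*(c:ℂ) + (-2)*ζ^12*Complex.I^2*(b:ℂ)^3 + (-5)*ζ^12*Complex.I^3*(c:ℂ)^2 + (2)*ζ^12*Complex.I^3*(b:ℂ)*(c:ℂ) + (-2)*ζ^12*Complex.I^3*(b:ℂ)^2 + (-1)*ζ^12*Complex.I^4*(c:ℂ) + (-4)*ζ^12*Complex.I^4*(b:ℂ) + (-4)*ζ^12*Complex.I^5 + (6)*ζ^13*Complex.I*(b:ℂ)*(c:ℂ)^3 + (-9)*ζ^13*Complex.I*(b:ℂ)^2*(c:ℂ)^2 + (3)*ζ^13*Complex.I*(b:ℂ)^3*(c:ℂ)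 + (-2)*ζ^13*Complex.I^2*(c:ℂ)^3 + (2)*ζ^13*Complex.I^2*(b:ℂ)*(c:ℂ)^2 + (-1)*ζ^13*Complex.I^3*(c:ℂ)^2 + ζ^13*Complex.I^4*(c:ℂ) + (-1)*ζ^13*Complex.I^4*(b:ℂ) + (-4)*ζ^13*Complex.I^5 + (-2)*ζ^14*Complex.I*(b:ℂ)^2*(c:ℂ)^2 + (2)*ζ^14*Complex.I*(b:ℂ)^3*(c:ℂ) + (2)*ζ^14*Complex.I^2*(c:ℂ)^3 + ζ^14*Complex.I^2*(b:ℂ)*(c:ℂ)^2 + (-2)*ζ^14*Complex.I^2*(b:ℂ)^2*(c:ℂ) + ζ^14*Complex.I^2*(b:ℂ)^3 + (-2)*ζ^14*Complex.I^3*(c:ℂ)^2 + ζ^14*Complex.I^3*(b:ℂ)*(c:ℂ) + (-1)*ζ^14*Complex.I^3*(b:ℂ)^2 + ζ^14*Complex.I^4*(c:ℂ) + (6)*ζ^14*Complex.I^4*(b:ℂ) + (-4)*ζ^14*Complex.I^5) * hbC + ((-3)*ζ*Complex.I^4*(c:ℂ) + (-1)*ζ*Complex.I^5 + ζ^2*Complex.I^4*(c:ℂ)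 + (-3)*ζ^2*Complex.I^5 + (3)*ζ^4*Complex.I^4*(c:ℂ) + (-1)*ζ^4*Complex.I^5 + (4)*ζ^5*Complex.I^5 + (-1)*ζ^7*Complex.I^4*(c:ℂ) + (3)*ζ^7*Complex.I^5 + (-1)*ζ^8*Complex.I^4*(c:ℂ) + (-3)*ζ^8*Complex.I^5 + (-4)*ζ^10*Complex.I^5 + (3)*ζ^11*Complex.I^4*(c:ℂ) + ζ^11*Complex.I^5 + ζ^13*Complex.I^4*(c:ℂ) + (3)*ζ^13*Complex.I^5 + (-3)*ζ^14*Complex.I^4*(c:ℂ) + ζ^14*Complex.I^5) * hcC + ((2)*(b:ℂ)^3*(c:ℂ)^3 + (-1)*(b:ℂ)^4*(c:ℂ)^2 + (2)*(a:ℂ)*(b:ℂ)^2*(c:ℂ)^3 + (-2)*(a:ℂ)*(b:ℂ)^3*(c:ℂ)^2 + (-4)*(a:ℂ)^2*(b:ℂ)*(c:ℂ)^3 + (3)*(a:ℂ)^2*(b:ℂ)^2*(c:ℂ)^2 + (-1)*(a:ℂ)^2*(b:ℂ)^4 + (-4)*(a:ℂ)^3*(c:ℂ)^3 + (6)*(a:ℂ)^3*(b:ℂ)*(c:ℂ)^2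 + (-2)*(a:ℂ)^3*(b:ℂ)^2*(c:ℂ) + (2)*(a:ℂ)^4*(c:ℂ)^2 + (-2)*(a:ℂ)^4*(b:ℂ)*(c:ℂ) + (a:ℂ)^4*(b:ℂ)^2 + (10)*Complex.I^2*(b:ℂ)^2*(c:ℂ)^2 + (-6)*Complex.I^2*(b:ℂ)^3*(c:ℂ) + (4)*Complex.I^2*(b:ℂ)^4 + (8)*Complex.I^2*(a:ℂ)*(c:ℂ)^3 + (-10)*Complex.I^2*(a:ℂ)*(b:ℂ)*(c:ℂ)^2 + (2)*Complex.I^2*(a:ℂ)*(b:ℂ)^2*(c:ℂ) + (-4)*Complex.I^2*(a:ℂ)^2*(c:ℂ)^2 + (2)*Complex.I^2*(a:ℂ)^2*(b:ℂ)*(c:ℂ) + (-4)*Complex.I^2*(a:ℂ)^2*(b:ℂ)^2 + (2)*Complex.I^4*(b:ℂ)*(c:ℂ) + (6)*Complex.I^4*(b:ℂ)^2 + (-1)*ζ*(a:ℂ)*(b:ℂ)^3*(c:ℂ)^2 + ζ*(a:ℂ)*(b:ℂ)^4*(c:ℂ) + (2)*ζ*(a:ℂ)^2*(b:ℂ)*(c:ℂ)^3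 + (-3)*ζ*(a:ℂ)^2*(b:ℂ)^2*(c:ℂ)^2 + ζ*(a:ℂ)^2*(b:ℂ)^3*(c:ℂ) + (2)*ζ*(a:ℂ)^3*(c:ℂ)^3 + (-3)*ζ*(a:ℂ)^3*(b:ℂ)*(c:ℂ)^2 + ζ*(a:ℂ)^3*(b:ℂ)^2*(c:ℂ) + (-1)*ζ*(a:ℂ)^4*(c:ℂ)^2 + ζ*(a:ℂ)^4*(b:ℂ)*(c:ℂ) + (2)*ζ*Complex.I*(b:ℂ)^3*(c:ℂ)^2 + (-2)*ζ*Complex.I*(b:ℂ)^4*(c:ℂ) + (-2)*ζ*Complex.I*(a:ℂ)*(b:ℂ)*(c:ℂ)^3 + (3)*ζ*Complex.I*(a:ℂ)*(b:ℂ)^2*(c:ℂ)^2 + (-2)*ζ*Complex.I*(a:ℂ)*(b:ℂ)^3*(c:ℂ) + ζ*Complex.I*(a:ℂ)*(b:ℂ)^4 + (-2)*ζ*Complex.I*(a:ℂ)^2*(c:ℂ)^3 + (2)*ζ*Complex.I*(a:ℂ)^2*(b:ℂ)*(c:ℂ)^2 + ζ*Complex.I*(a:ℂ)^3*(c:ℂ)^2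 + (-1)*ζ*Complex.I*(a:ℂ)^3*(b:ℂ)^2 + (2)*ζ*Complex.I^2*(b:ℂ)*(c:ℂ)^3 + ζ*Complex.I^2*(b:ℂ)^2*(c:ℂ)^2 + (-2)*ζ*Complex.I^2*(b:ℂ)^3*(c:ℂ) + ζ*Complex.I^2*(b:ℂ)^4 + (-4)*ζ*Complex.I^2*(a:ℂ)*(c:ℂ)^3 + (5)*ζ*Complex.I^2*(a:ℂ)*(b:ℂ)*(c:ℂ)^2 + (-1)*ζ*Complex.I^2*(a:ℂ)*(b:ℂ)^2*(c:ℂ) + (2)*ζ*Complex.I^2*(a:ℂ)^2*(c:ℂ)^2 + (-1)*ζ*Complex.I^2*(a:ℂ)^2*(b:ℂ)*(c:ℂ) + (-1)*ζ*Complex.I^2*(a:ℂ)^2*(b:ℂ)^2 + (2)*ζ*Complex.I^3*(b:ℂ)*(c:ℂ)^2 + (-1)*ζ*Complex.I^3*(b:ℂ)^2*(c:ℂ) + ζ*Complex.I^3*(b:ℂ)^3 + (-3)*ζ*Complex.I^3*(a:ℂ)*(c:ℂ)^2 + (3)*ζ*Complex.I^3*(a:ℂ)*(b:ℂ)^2 +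 (-3)*ζ*Complex.I^4*(c:ℂ)^2 + ζ*Complex.I^4*(b:ℂ)*(c:ℂ) + (6)*ζ*Complex.I^4*(b:ℂ)^2 + (-1)*ζ*Complex.I^5*(c:ℂ) + (4)*ζ*Complex.I^5*(b:ℂ) + (-2)*ζ^2*Complex.I*(b:ℂ)^2*(c:ℂ)^3 + (3)*ζ^2*Complex.I*(b:ℂ)^3*(c:ℂ)^2 + (-1)*ζ^2*Complex.I*(b:ℂ)^4*(c:ℂ) + (3)*ζ^2*Complex.I*(a:ℂ)*(b:ℂ)^2*(c:ℂ)^2 + (-1)*ζ^2*Complex.I*(a:ℂ)*(b:ℂ)^3*(c:ℂ) + ζ^2*Complex.I*(a:ℂ)^2*(b:ℂ)*(c:ℂ)^2 + (-1)*ζ^2*Complex.I*(a:ℂ)^2*(b:ℂ)^2*(c:ℂ) + (-1)*ζ^2*Complex.I*(a:ℂ)^3*(b:ℂ)*(c:ℂ) + (-2)*ζ^2*Complex.I^2*(b:ℂ)*(c:ℂ)^3 + (2)*ζ^2*Complex.I^2*(b:ℂ)^2*(c:ℂ)^2 + (8)*ζ^2*Complex.I^3*(c:ℂ)^3 + (-9)*ζ^2*Complex.I^3*(b:ℂ)*(c:ℂ)^2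 + (2)*ζ^2*Complex.I^3*(b:ℂ)^2*(c:ℂ) + (2)*ζ^2*Complex.I^3*(a:ℂ)*(c:ℂ)^2 + (2)*ζ^2*Complex.I^3*(a:ℂ)*(b:ℂ)^2 + ζ^2*Complex.I^4*(c:ℂ)^2 + ζ^2*Complex.I^4*(b:ℂ)*(c:ℂ) + (-1)*ζ^2*Complex.I^4*(b:ℂ)^2 + (-3)*ζ^2*Complex.I^5*(c:ℂ) + (4)*ζ^2*Complex.I^5*(b:ℂ) + ζ^3*(a:ℂ)*(b:ℂ)^3*(c:ℂ)^2 + (-1)*ζ^3*(a:ℂ)*(b:ℂ)^4*(c:ℂ) + (-1)*ζ^3*(a:ℂ)^2*(b:ℂ)^3*(c:ℂ) + ζ^3*(a:ℂ)^2*(b:ℂ)^4 + (-1)*ζ^3*(a:ℂ)^3*(b:ℂ)*(c:ℂ)^2 + ζ^3*(a:ℂ)^3*(b:ℂ)^2*(c:ℂ) + ζ^3*(a:ℂ)^4*(b:ℂ)*(c:ℂ) + (-1)*ζ^3*(a:ℂ)^4*(b:ℂ)^2 + (2)*ζ^3*Complex.I*(b:ℂ)^2*(c:ℂ)^3 + (-1)*ζ^3*Complex.I*(b:ℂ)^3*(c:ℂ)^2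 + (-2)*ζ^3*Complex.I^2*(b:ℂ)*(c:ℂ)^3 + (2)*ζ^3*Complex.I^2*(b:ℂ)^2*(c:ℂ)^2 + (-1)*ζ^3*Complex.I^2*(b:ℂ)^4 + ζ^3*Complex.I^2*(a:ℂ)*(b:ℂ)*(c:ℂ)^2 + (-1)*ζ^3*Complex.I^2*(a:ℂ)*(b:ℂ)^2*(c:ℂ) + (-1)*ζ^3*Complex.I^2*(a:ℂ)^2*(b:ℂ)*(c:ℂ) + ζ^3*Complex.I^2*(a:ℂ)^2*(b:ℂ)^2 + (-4)*ζ^3*Complex.I^3*(c:ℂ)^3 + (10)*ζ^3*Complex.I^3*(b:ℂ)*(c:ℂ)^2 + (-3)*ζ^3*Complex.I^3*(b:ℂ)^2*(c:ℂ) + (2)*ζ^3*Complex.I^3*(b:ℂ)^3 + (-1)*ζ^3*Complex.I^3*(a:ℂ)*(c:ℂ)^2 + ζ^3*Complex.I^3*(a:ℂ)*(b:ℂ)*(c:ℂ) + (-3)*ζ^3*Complex.I^4*(c:ℂ)^2 + (-1)*ζ^3*Complex.I^4*(b:ℂ)*(c:ℂ) + (-1)*ζ^3*Complex.I^4*(b:ℂ)^2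 + (4)*ζ^3*Complex.I^5*(b:ℂ) + (-2)*ζ^4*(b:ℂ)^3*(c:ℂ)^3 + ζ^4*(b:ℂ)^4*(c:ℂ)^2 + (-2)*ζ^4*(a:ℂ)*(b:ℂ)^2*(c:ℂ)^3 + (3)*ζ^4*(a:ℂ)*(b:ℂ)^3*(c:ℂ)^2 + (-1)*ζ^4*(a:ℂ)*(b:ℂ)^4*(c:ℂ) + (3)*ζ^4*(a:ℂ)^2*(b:ℂ)^2*(c:ℂ)^2 + (-1)*ζ^4*(a:ℂ)^2*(b:ℂ)^3*(c:ℂ) + ζ^4*(a:ℂ)^3*(b:ℂ)*(c:ℂ)^2 + (-1)*ζ^4*(a:ℂ)^3*(b:ℂ)^2*(c:ℂ) + (-1)*ζ^4*(a:ℂ)^4*(b:ℂ)*(c:ℂ) + (-2)*ζ^4*Complex.I*(b:ℂ)^2*(c:ℂ)^3 + ζ^4*Complex.I*(b:ℂ)^3*(c:ℂ)^2 + (4)*ζ^4*Complex.I^2*(b:ℂ)*(c:ℂ)^3 + (-4)*ζ^4*Complex.I^2*(b:ℂ)^2*(c:ℂ)^2 + (-1)*ζ^4*Complex.I^2*(a:ℂ)*(b:ℂ)*(c:ℂ)^2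 + ζ^4*Complex.I^2*(a:ℂ)*(b:ℂ)^2*(c:ℂ) + ζ^4*Complex.I^2*(a:ℂ)^2*(b:ℂ)*(c:ℂ) + (-6)*ζ^4*Complex.I^3*(b:ℂ)*(c:ℂ)^2 + ζ^4*Complex.I^3*(b:ℂ)^2*(c:ℂ) + (9)*ζ^4*Complex.I^4*(c:ℂ)^2 + (-3)*ζ^4*Complex.I^4*(b:ℂ)*(c:ℂ) + (-1)*ζ^4*Complex.I^4*(b:ℂ)^2 + (-1)*ζ^4*Complex.I^5*(c:ℂ) + (-3)*ζ^4*Complex.I^5*(b:ℂ) + (-8)*ζ^5*Complex.I^2*(b:ℂ)*(c:ℂ)^3 + (9)*ζ^5*Complex.I^2*(b:ℂ)^2*(c:ℂ)^2 + (-2)*ζ^5*Complex.I^2*(b:ℂ)^3*(c:ℂ) + (2)*ζ^5*Complex.I^3*(c:ℂ)^3 + (-3)*ζ^5*Complex.I^3*(b:ℂ)*(c:ℂ)^2 + (2)*ζ^5*Complex.I^3*(b:ℂ)^2*(c:ℂ) + (-2)*ζ^5*Complex.I^3*(b:ℂ)^3 + (-1)*ζ^5*Complex.I^3*(a:ℂ)*(b:ℂ)^2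 + (-3)*ζ^5*Complex.I^4*(c:ℂ)^2 + ζ^5*Complex.I^4*(b:ℂ)*(c:ℂ) + (-2)*ζ^5*Complex.I^4*(b:ℂ)^2 + (4)*ζ^5*Complex.I^5*(c:ℂ) + (-3)*ζ^5*Complex.I^5*(b:ℂ) + (6)*ζ^6*Complex.I^2*(b:ℂ)*(c:ℂ)^3 + (-7)*ζ^6*Complex.I^2*(b:ℂ)^2*(c:ℂ)^2 + ζ^6*Complex.I^2*(b:ℂ)^3*(c:ℂ) + (-4)*ζ^6*Complex.I^3*(c:ℂ)^3 + ζ^6*Complex.I^3*(b:ℂ)*(c:ℂ)^2 + (2)*ζ^6*Complex.I^3*(b:ℂ)^2*(c:ℂ) + (-1)*ζ^6*Complex.I^3*(b:ℂ)^3 + (-1)*ζ^6*Complex.I^3*(a:ℂ)*(b:ℂ)^2 + ζ^6*Complex.I^4*(b:ℂ)^2 + (-7)*ζ^6*Complex.I^5*(b:ℂ) + ζ^7*Complex.I^2*(b:ℂ)^2*(c:ℂ)^2 + ζ^7*Complex.I^2*(b:ℂ)^3*(c:ℂ) + ζ^7*Complex.I^2*(a:ℂ)*(b:ℂ)*(c:ℂ)^2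 + (-1)*ζ^7*Complex.I^2*(a:ℂ)*(b:ℂ)^2*(c:ℂ) + (-1)*ζ^7*Complex.I^2*(a:ℂ)^2*(b:ℂ)*(c:ℂ) + (2)*ζ^7*Complex.I^3*(c:ℂ)^3 + ζ^7*Complex.I^3*(b:ℂ)*(c:ℂ)^2 + (-2)*ζ^7*Complex.I^3*(b:ℂ)^2*(c:ℂ) + ζ^7*Complex.I^3*(b:ℂ)^3 + ζ^7*Complex.I^4*(b:ℂ)*(c:ℂ) + (2)*ζ^7*Complex.I^4*(b:ℂ)^2 + (2)*ζ^7*Complex.I^5*(c:ℂ) + (6)*ζ^7*Complex.I^5*(b:ℂ) + (-1)*ζ^7*Complex.I^6 + (-1)*ζ^8*Complex.I^2*(b:ℂ)^3*(c:ℂ) + ζ^8*Complex.I^2*(b:ℂ)^4 + (-1)*ζ^8*Complex.I^2*(a:ℂ)*(b:ℂ)*(c:ℂ)^2 + ζ^8*Complex.I^2*(a:ℂ)*(b:ℂ)^2*(c:ℂ) + ζ^8*Complex.I^2*(a:ℂ)^2*(b:ℂ)*(c:ℂ) + (-1)*ζ^8*Complex.I^2*(a:ℂ)^2*(b:ℂ)^2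 + (2)*ζ^8*Complex.I^3*(c:ℂ)^3 + (-3)*ζ^8*Complex.I^3*(b:ℂ)*(c:ℂ)^2 + ζ^8*Complex.I^3*(b:ℂ)^2*(c:ℂ) + (-1)*ζ^8*Complex.I^3*(a:ℂ)*(c:ℂ)^2 + ζ^8*Complex.I^3*(a:ℂ)*(b:ℂ)*(c:ℂ) + (-1)*ζ^8*Complex.I^4*(c:ℂ)^2 + (-1)*ζ^8*Complex.I^4*(b:ℂ)*(c:ℂ) + (3)*ζ^8*Complex.I^4*(b:ℂ)^2 + (-3)*ζ^8*Complex.I^5*(c:ℂ) + ζ^8*Complex.I^6 + (-2)*ζ^9*Complex.I*(b:ℂ)^2*(c:ℂ)^3 + (3)*ζ^9*Complex.I*(b:ℂ)^3*(c:ℂ)^2 + (-1)*ζ^9*Complex.I*(b:ℂ)^4*(c:ℂ) + (3)*ζ^9*Complex.I*(a:ℂ)*(b:ℂ)^2*(c:ℂ)^2 + (-1)*ζ^9*Complex.I*(a:ℂ)*(b:ℂ)^3*(c:ℂ) + ζ^9*Complex.I*(a:ℂ)^2*(b:ℂ)*(c:ℂ)^2 + (-1)*ζ^9*Complex.I*(a:ℂ)^2*(b:ℂ)^2*(c:ℂ)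 + (-1)*ζ^9*Complex.I*(a:ℂ)^3*(b:ℂ)*(c:ℂ) + (-4)*ζ^9*Complex.I^3*(c:ℂ)^3 + (4)*ζ^9*Complex.I^3*(b:ℂ)*(c:ℂ)^2 + (2)*ζ^9*Complex.I^3*(a:ℂ)*(c:ℂ)^2 + (2)*ζ^9*Complex.I^3*(a:ℂ)*(b:ℂ)^2 + ζ^10*Complex.I*(b:ℂ)^3*(c:ℂ)^2 + (-1)*ζ^10*Complex.I*(b:ℂ)^4*(c:ℂ) + (-1)*ζ^10*Complex.I*(a:ℂ)*(b:ℂ)^3*(c:ℂ) + ζ^10*Complex.I*(a:ℂ)*(b:ℂ)^4 + (-1)*ζ^10*Complex.I*(a:ℂ)^2*(b:ℂ)*(c:ℂ)^2 + ζ^10*Complex.I*(a:ℂ)^2*(b:ℂ)^2*(c:ℂ) + ζ^10*Complex.I*(a:ℂ)^3*(b:ℂ)*(c:ℂ) + (-1)*ζ^10*Complex.I*(a:ℂ)^3*(b:ℂ)^2 + (2)*ζ^10*Complex.I^2*(b:ℂ)*(c:ℂ)^3 + (-3)*ζ^10*Complex.I^2*(b:ℂ)^2*(c:ℂ)^2 +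 ζ^10*Complex.I^2*(b:ℂ)^3*(c:ℂ) + (2)*ζ^10*Complex.I^2*(a:ℂ)*(c:ℂ)^3 + (-3)*ζ^10*Complex.I^2*(a:ℂ)*(b:ℂ)*(c:ℂ)^2 + ζ^10*Complex.I^2*(a:ℂ)*(b:ℂ)^2*(c:ℂ) + (-1)*ζ^10*Complex.I^2*(a:ℂ)^2*(c:ℂ)^2 + ζ^10*Complex.I^2*(a:ℂ)^2*(b:ℂ)*(c:ℂ) + (2)*ζ^10*Complex.I^3*(c:ℂ)^3 + (-1)*ζ^10*Complex.I^3*(b:ℂ)*(c:ℂ)^2 + (-1)*ζ^10*Complex.I^3*(b:ℂ)^2*(c:ℂ) + (-1)*ζ^10*Complex.I^3*(a:ℂ)*(c:ℂ)^2 + (-1)*ζ^10*Complex.I^3*(a:ℂ)*(b:ℂ)*(c:ℂ) + (2)*ζ^10*Complex.I^3*(a:ℂ)*(b:ℂ)^2 + (3)*ζ^10*Complex.I^4*(c:ℂ)^2 + (-2)*ζ^10*Complex.I^4*(b:ℂ)*(c:ℂ) + (-1)*ζ^10*Complex.I^4*(b:ℂ)^2 + (-4)*ζ^11*Complex.I^2*(b:ℂ)*(c:ℂ)^3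 + (-3)*ζ^11*Complex.I^2*(b:ℂ)^2*(c:ℂ)^2 + (3)*ζ^11*Complex.I^2*(b:ℂ)^3*(c:ℂ) + (-2)*ζ^11*Complex.I^2*(b:ℂ)^4 + (-4)*ζ^11*Complex.I^2*(a:ℂ)*(c:ℂ)^3 + (5)*ζ^11*Complex.I^2*(a:ℂ)*(b:ℂ)*(c:ℂ)^2 + (-1)*ζ^11*Complex.I^2*(a:ℂ)*(b:ℂ)^2*(c:ℂ) + (2)*ζ^11*Complex.I^2*(a:ℂ)^2*(c:ℂ)^2 + (-1)*ζ^11*Complex.I^2*(a:ℂ)^2*(b:ℂ)*(c:ℂ) + (2)*ζ^11*Complex.I^2*(a:ℂ)^2*(b:ℂ)^2 + (-6)*ζ^11*Complex.I^4*(c:ℂ)^2 + (2)*ζ^11*Complex.I^4*(b:ℂ)*(c:ℂ) + (-6)*ζ^11*Complex.I^4*(b:ℂ)^2 + (-1)*ζ^12*Complex.I*(b:ℂ)^3*(c:ℂ)^2 + ζ^12*Complex.I*(b:ℂ)^4*(c:ℂ) + (2)*ζ^12*Complex.I*(a:ℂ)*(b:ℂ)*(c:ℂ)^3 + (-3)*ζ^12*Complex.I*(a:ℂ)*(b:ℂ)^2*(c:ℂ)^2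 + ζ^12*Complex.I*(a:ℂ)*(b:ℂ)^3*(c:ℂ) + (2)*ζ^12*Complex.I*(a:ℂ)^2*(c:ℂ)^3 + (-3)*ζ^12*Complex.I*(a:ℂ)^2*(b:ℂ)*(c:ℂ)^2 + ζ^12*Complex.I*(a:ℂ)^2*(b:ℂ)^2*(c:ℂ) + (-1)*ζ^12*Complex.I*(a:ℂ)^3*(c:ℂ)^2 + ζ^12*Complex.I*(a:ℂ)^3*(b:ℂ)*(c:ℂ) + (2)*ζ^12*Complex.I^2*(b:ℂ)*(c:ℂ)^3 + (-3)*ζ^12*Complex.I^2*(b:ℂ)^2*(c:ℂ)^2 + (2)*ζ^12*Complex.I^2*(b:ℂ)^3*(c:ℂ) + (-1)*ζ^12*Complex.I^2*(b:ℂ)^4 + (2)*ζ^12*Complex.I^2*(a:ℂ)*(c:ℂ)^3 + (-2)*ζ^12*Complex.I^2*(a:ℂ)*(b:ℂ)*(c:ℂ)^2 + (-1)*ζ^12*Complex.I^2*(a:ℂ)^2*(c:ℂ)^2 + ζ^12*Complex.I^2*(a:ℂ)^2*(b:ℂ)^2 + (-4)*ζ^12*Complex.I^3*(c:ℂ)^3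 + (5)*ζ^12*Complex.I^3*(b:ℂ)*(c:ℂ)^2 + (-1)*ζ^12*Complex.I^3*(b:ℂ)^2*(c:ℂ) + (2)*ζ^12*Complex.I^3*(a:ℂ)*(c:ℂ)^2 + (-1)*ζ^12*Complex.I^3*(a:ℂ)*(b:ℂ)*(c:ℂ) + (-1)*ζ^12*Complex.I^3*(a:ℂ)*(b:ℂ)^2 + (3)*ζ^12*Complex.I^4*(c:ℂ)^2 + (-3)*ζ^12*Complex.I^4*(b:ℂ)^2 + (-1)*ζ^14*(a:ℂ)*(b:ℂ)^3*(c:ℂ)^2 + ζ^14*(a:ℂ)*(b:ℂ)^4*(c:ℂ) + (2)*ζ^14*(a:ℂ)^2*(b:ℂ)*(c:ℂ)^3 + (-3)*ζ^14*(a:ℂ)^2*(b:ℂ)^2*(c:ℂ)^2 + ζ^14*(a:ℂ)^2*(b:ℂ)^3*(c:ℂ) + (2)*ζ^14*(a:ℂ)^3*(c:ℂ)^3 + (-3)*ζ^14*(a:ℂ)^3*(b:ℂ)*(c:ℂ)^2 + ζ^14*(a:ℂ)^3*(b:ℂ)^2*(c:ℂ) + (-1)*ζ^14*(a:ℂ)^4*(c:ℂ)^2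 + ζ^14*(a:ℂ)^4*(b:ℂ)*(c:ℂ) + (2)*ζ^15*(b:ℂ)^3*(c:ℂ)^3 + (-1)*ζ^15*(b:ℂ)^4*(c:ℂ)^2 + (2)*ζ^15*(a:ℂ)*(b:ℂ)^2*(c:ℂ)^3 + (-2)*ζ^15*(a:ℂ)*(b:ℂ)^3*(c:ℂ)^2 + (-4)*ζ^15*(a:ℂ)^2*(b:ℂ)*(c:ℂ)^3 + (3)*ζ^15*(a:ℂ)^2*(b:ℂ)^2*(c:ℂ)^2 + (-1)*ζ^15*(a:ℂ)^2*(b:ℂ)^4 + (-4)*ζ^15*(a:ℂ)^3*(c:ℂ)^3 + (6)*ζ^15*(a:ℂ)^3*(b:ℂ)*(c:ℂ)^2 + (-2)*ζ^15*(a:ℂ)^3*(b:ℂ)^2*(c:ℂ) + (2)*ζ^15*(a:ℂ)^4*(c:ℂ)^2 + (-2)*ζ^15*(a:ℂ)^4*(b:ℂ)*(c:ℂ) + ζ^15*(a:ℂ)^4*(b:ℂ)^2 + (-1)*ζ^16*(a:ℂ)*(b:ℂ)^3*(c:ℂ)^2 + ζ^16*(a:ℂ)*(b:ℂ)^4*(c:ℂ)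 + (2)*ζ^16*(a:ℂ)^2*(b:ℂ)*(c:ℂ)^3 + (-3)*ζ^16*(a:ℂ)^2*(b:ℂ)^2*(c:ℂ)^2 + ζ^16*(a:ℂ)^2*(b:ℂ)^3*(c:ℂ) + (2)*ζ^16*(a:ℂ)^3*(c:ℂ)^3 + (-3)*ζ^16*(a:ℂ)^3*(b:ℂ)*(c:ℂ)^2 + ζ^16*(a:ℂ)^3*(b:ℂ)^2*(c:ℂ) + (-1)*ζ^16*(a:ℂ)^4*(c:ℂ)^2 + ζ^16*(a:ℂ)^4*(b:ℂ)*(c:ℂ) + ζ^18*(a:ℂ)*(b:ℂ)^3*(c:ℂ)^2 + (-1)*ζ^18*(a:ℂ)*(b:ℂ)^4*(c:ℂ) + (-1)*ζ^18*(a:ℂ)^2*(b:ℂ)^3*(c:ℂ) + ζ^18*(a:ℂ)^2*(b:ℂ)^4 + (-1)*ζ^18*(a:ℂ)^3*(b:ℂ)*(c:ℂ)^2 + ζ^18*(a:ℂ)^3*(b:ℂ)^2*(c:ℂ) + ζ^18*(a:ℂ)^4*(b:ℂ)*(c:ℂ) + (-1)*ζ^18*(a:ℂ)^4*(b:ℂ)^2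 + (-2)*ζ^19*(b:ℂ)^3*(c:ℂ)^3 + ζ^19*(b:ℂ)^4*(c:ℂ)^2 + (-2)*ζ^19*(a:ℂ)*(b:ℂ)^2*(c:ℂ)^3 + (3)*ζ^19*(a:ℂ)*(b:ℂ)^3*(c:ℂ)^2 + (-1)*ζ^19*(a:ℂ)*(b:ℂ)^4*(c:ℂ) + (3)*ζ^19*(a:ℂ)^2*(b:ℂ)^2*(c:ℂ)^2 + (-1)*ζ^19*(a:ℂ)^2*(b:ℂ)^3*(c:ℂ) + ζ^19*(a:ℂ)^3*(b:ℂ)*(c:ℂ)^2 + (-1)*ζ^19*(a:ℂ)^3*(b:ℂ)^2*(c:ℂ) + (-1)*ζ^19*(a:ℂ)^4*(b:ℂ)*(c:ℂ) + (-1)*ζ^29*(a:ℂ)*(b:ℂ)^3*(c:ℂ)^2 + ζ^29*(a:ℂ)*(b:ℂ)^4*(c:ℂ) + (2)*ζ^29*(a:ℂ)^2*(b:ℂ)*(c:ℂ)^3 + (-3)*ζ^29*(a:ℂ)^2*(b:ℂ)^2*(c:ℂ)^2 + ζ^29*(a:ℂ)^2*(b:ℂ)^3*(c:ℂ) + (2)*ζ^29*(a:ℂ)^3*(c:ℂ)^3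 + (-3)*ζ^29*(a:ℂ)^3*(b:ℂ)*(c:ℂ)^2 + ζ^29*(a:ℂ)^3*(b:ℂ)^2*(c:ℂ) + (-1)*ζ^29*(a:ℂ)^4*(c:ℂ)^2 + ζ^29*(a:ℂ)^4*(b:ℂ)*(c:ℂ) + (2)*ζ^30*(b:ℂ)^3*(c:ℂ)^3 + (-1)*ζ^30*(b:ℂ)^4*(c:ℂ)^2 + (2)*ζ^30*(a:ℂ)*(b:ℂ)^2*(c:ℂ)^3 + (-2)*ζ^30*(a:ℂ)*(b:ℂ)^3*(c:ℂ)^2 + (-4)*ζ^30*(a:ℂ)^2*(b:ℂ)*(c:ℂ)^3 + (3)*ζ^30*(a:ℂ)^2*(b:ℂ)^2*(c:ℂ)^2 + (-1)*ζ^30*(a:ℂ)^2*(b:ℂ)^4 + (-4)*ζ^30*(a:ℂ)^3*(c:ℂ)^3 + (6)*ζ^30*(a:ℂ)^3*(b:ℂ)*(c:ℂ)^2 + (-2)*ζ^30*(a:ℂ)^3*(b:ℂ)^2*(c:ℂ) + (2)*ζ^30*(a:ℂ)^4*(c:ℂ)^2 + (-2)*ζ^30*(a:ℂ)^4*(b:ℂ)*(c:ℂ)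 + ζ^30*(a:ℂ)^4*(b:ℂ)^2 + (-1)*ζ^31*(a:ℂ)*(b:ℂ)^3*(c:ℂ)^2 + ζ^31*(a:ℂ)*(b:ℂ)^4*(c:ℂ) + (2)*ζ^31*(a:ℂ)^2*(b:ℂ)*(c:ℂ)^3 + (-3)*ζ^31*(a:ℂ)^2*(b:ℂ)^2*(c:ℂ)^2 + ζ^31*(a:ℂ)^2*(b:ℂ)^3*(c:ℂ) + (2)*ζ^31*(a:ℂ)^3*(c:ℂ)^3 + (-3)*ζ^31*(a:ℂ)^3*(b:ℂ)*(c:ℂ)^2 + ζ^31*(a:ℂ)^3*(b:ℂ)^2*(c:ℂ) + (-1)*ζ^31*(a:ℂ)^4*(c:ℂ)^2 + ζ^31*(a:ℂ)^4*(b:ℂ)*(c:ℂ) + ζ^33*(a:ℂ)*(b:ℂ)^3*(c:ℂ)^2 + (-1)*ζ^33*(a:ℂ)*(b:ℂ)^4*(c:ℂ) + (-1)*ζ^33*(a:ℂ)^2*(b:ℂ)^3*(c:ℂ) + ζ^33*(a:ℂ)^2*(b:ℂ)^4 + (-1)*ζ^33*(a:ℂ)^3*(b:ℂ)*(c:ℂ)^2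 + ζ^33*(a:ℂ)^3*(b:ℂ)^2*(c:ℂ) + ζ^33*(a:ℂ)^4*(b:ℂ)*(c:ℂ) + (-1)*ζ^33*(a:ℂ)^4*(b:ℂ)^2 + (-2)*ζ^34*(b:ℂ)^3*(c:ℂ)^3 + ζ^34*(b:ℂ)^4*(c:ℂ)^2 + (-2)*ζ^34*(a:ℂ)*(b:ℂ)^2*(c:ℂ)^3 + (3)*ζ^34*(a:ℂ)*(b:ℂ)^3*(c:ℂ)^2 + (-1)*ζ^34*(a:ℂ)*(b:ℂ)^4*(c:ℂ) + (3)*ζ^34*(a:ℂ)^2*(b:ℂ)^2*(c:ℂ)^2 + (-1)*ζ^34*(a:ℂ)^2*(b:ℂ)^3*(c:ℂ) + ζ^34*(a:ℂ)^3*(b:ℂ)*(c:ℂ)^2 + (-1)*ζ^34*(a:ℂ)^3*(b:ℂ)^2*(c:ℂ) + (-1)*ζ^34*(a:ℂ)^4*(b:ℂ)*(c:ℂ) + (-1)*ζ^44*(a:ℂ)*(b:ℂ)^3*(c:ℂ)^2 + ζ^44*(a:ℂ)*(b:ℂ)^4*(c:ℂ) + (2)*ζ^44*(a:ℂ)^2*(b:ℂ)*(c:ℂ)^3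 + (-3)*ζ^44*(a:ℂ)^2*(b:ℂ)^2*(c:ℂ)^2 + ζ^44*(a:ℂ)^2*(b:ℂ)^3*(c:ℂ) + (2)*ζ^44*(a:ℂ)^3*(c:ℂ)^3 + (-3)*ζ^44*(a:ℂ)^3*(b:ℂ)*(c:ℂ)^2 + ζ^44*(a:ℂ)^3*(b:ℂ)^2*(c:ℂ) + (-1)*ζ^44*(a:ℂ)^4*(c:ℂ)^2 + ζ^44*(a:ℂ)^4*(b:ℂ)*(c:ℂ) + (2)*ζ^45*(b:ℂ)^3*(c:ℂ)^3 + (-1)*ζ^45*(b:ℂ)^4*(c:ℂ)^2 + (2)*ζ^45*(a:ℂ)*(b:ℂ)^2*(c:ℂ)^3 + (-2)*ζ^45*(a:ℂ)*(b:ℂ)^3*(c:ℂ)^2 + (-4)*ζ^45*(a:ℂ)^2*(b:ℂ)*(c:ℂ)^3 + (3)*ζ^45*(a:ℂ)^2*(b:ℂ)^2*(c:ℂ)^2 + (-1)*ζ^45*(a:ℂ)^2*(b:ℂ)^4 + (-4)*ζ^45*(a:ℂ)^3*(c:ℂ)^3 + (6)*ζ^45*(a:ℂ)^3*(b:ℂ)*(c:ℂ)^2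 + (-2)*ζ^45*(a:ℂ)^3*(b:ℂ)^2*(c:ℂ) + (2)*ζ^45*(a:ℂ)^4*(c:ℂ)^2 + (-2)*ζ^45*(a:ℂ)^4*(b:ℂ)*(c:ℂ) + ζ^45*(a:ℂ)^4*(b:ℂ)^2 + (-1)*ζ^46*(a:ℂ)*(b:ℂ)^3*(c:ℂ)^2 + ζ^46*(a:ℂ)*(b:ℂ)^4*(c:ℂ) + (2)*ζ^46*(a:ℂ)^2*(b:ℂ)*(c:ℂ)^3 + (-3)*ζ^46*(a:ℂ)^2*(b:ℂ)^2*(c:ℂ)^2 + ζ^46*(a:ℂ)^2*(b:ℂ)^3*(c:ℂ) + (2)*ζ^46*(a:ℂ)^3*(c:ℂ)^3 + (-3)*ζ^46*(a:ℂ)^3*(b:ℂ)*(c:ℂ)^2 + ζ^46*(a:ℂ)^3*(b:ℂ)^2*(c:ℂ) + (-1)*ζ^46*(a:ℂ)^4*(c:ℂ)^2 + ζ^46*(a:ℂ)^4*(b:ℂ)*(c:ℂ) + ζ^48*(a:ℂ)*(b:ℂ)^3*(c:ℂ)^2 + (-1)*ζ^48*(a:ℂ)*(b:ℂ)^4*(c:ℂ)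 + (-1)*ζ^48*(a:ℂ)^2*(b:ℂ)^3*(c:ℂ) + ζ^48*(a:ℂ)^2*(b:ℂ)^4 + (-1)*ζ^48*(a:ℂ)^3*(b:ℂ)*(c:ℂ)^2 + ζ^48*(a:ℂ)^3*(b:ℂ)^2*(c:ℂ) + ζ^48*(a:ℂ)^4*(b:ℂ)*(c:ℂ) + (-1)*ζ^48*(a:ℂ)^4*(b:ℂ)^2 + (-2)*ζ^49*(b:ℂ)^3*(c:ℂ)^3 + ζ^49*(b:ℂ)^4*(c:ℂ)^2 + (-2)*ζ^49*(a:ℂ)*(b:ℂ)^2*(c:ℂ)^3 + (3)*ζ^49*(a:ℂ)*(b:ℂ)^3*(c:ℂ)^2 + (-1)*ζ^49*(a:ℂ)*(b:ℂ)^4*(c:ℂ) + (3)*ζ^49*(a:ℂ)^2*(b:ℂ)^2*(c:ℂ)^2 + (-1)*ζ^49*(a:ℂ)^2*(b:ℂ)^3*(c:ℂ) + ζ^49*(a:ℂ)^3*(b:ℂ)*(c:ℂ)^2 + (-1)*ζ^49*(a:ℂ)^3*(b:ℂ)^2*(c:ℂ) + (-1)*ζ^49*(a:ℂ)^4*(b:ℂ)*(c:ℂ)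 + (-1)*ζ^59*(a:ℂ)*(b:ℂ)^3*(c:ℂ)^2 + ζ^59*(a:ℂ)*(b:ℂ)^4*(c:ℂ) + (2)*ζ^59*(a:ℂ)^2*(b:ℂ)*(c:ℂ)^3 + (-3)*ζ^59*(a:ℂ)^2*(b:ℂ)^2*(c:ℂ)^2 + ζ^59*(a:ℂ)^2*(b:ℂ)^3*(c:ℂ) + (2)*ζ^59*(a:ℂ)^3*(c:ℂ)^3 + (-3)*ζ^59*(a:ℂ)^3*(b:ℂ)*(c:ℂ)^2 + ζ^59*(a:ℂ)^3*(b:ℂ)^2*(c:ℂ) + (-1)*ζ^59*(a:ℂ)^4*(c:ℂ)^2 + ζ^59*(a:ℂ)^4*(b:ℂ)*(c:ℂ) + (2)*ζ^60*(b:ℂ)^3*(c:ℂ)^3 + (-1)*ζ^60*(b:ℂ)^4*(c:ℂ)^2 + (2)*ζ^60*(a:ℂ)*(b:ℂ)^2*(c:ℂ)^3 + (-2)*ζ^60*(a:ℂ)*(b:ℂ)^3*(c:ℂ)^2 + (-4)*ζ^60*(a:ℂ)^2*(b:ℂ)*(c:ℂ)^3 + (3)*ζ^60*(a:ℂ)^2*(b:ℂ)^2*(c:ℂ)^2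 + (-1)*ζ^60*(a:ℂ)^2*(b:ℂ)^4 + (-4)*ζ^60*(a:ℂ)^3*(c:ℂ)^3 + (6)*ζ^60*(a:ℂ)^3*(b:ℂ)*(c:ℂ)^2 + (-2)*ζ^60*(a:ℂ)^3*(b:ℂ)^2*(c:ℂ) + (2)*ζ^60*(a:ℂ)^4*(c:ℂ)^2 + (-2)*ζ^60*(a:ℂ)^4*(b:ℂ)*(c:ℂ) + ζ^60*(a:ℂ)^4*(b:ℂ)^2 + (-1)*ζ^61*(a:ℂ)*(b:ℂ)^3*(c:ℂ)^2 + ζ^61*(a:ℂ)*(b:ℂ)^4*(c:ℂ) + (2)*ζ^61*(a:ℂ)^2*(b:ℂ)*(c:ℂ)^3 + (-3)*ζ^61*(a:ℂ)^2*(b:ℂ)^2*(c:ℂ)^2 + ζ^61*(a:ℂ)^2*(b:ℂ)^3*(c:ℂ) + (2)*ζ^61*(a:ℂ)^3*(c:ℂ)^3 + (-3)*ζ^61*(a:ℂ)^3*(b:ℂ)*(c:ℂ)^2 + ζ^61*(a:ℂ)^3*(b:ℂ)^2*(c:ℂ) + (-1)*ζ^61*(a:ℂ)^4*(c:ℂ)^2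 + ζ^61*(a:ℂ)^4*(b:ℂ)*(c:ℂ) + ζ^63*(a:ℂ)*(b:ℂ)^3*(c:ℂ)^2 + (-1)*ζ^63*(a:ℂ)*(b:ℂ)^4*(c:ℂ) + (-1)*ζ^63*(a:ℂ)^2*(b:ℂ)^3*(c:ℂ) + ζ^63*(a:ℂ)^2*(b:ℂ)^4 + (-1)*ζ^63*(a:ℂ)^3*(b:ℂ)*(c:ℂ)^2 + ζ^63*(a:ℂ)^3*(b:ℂ)^2*(c:ℂ) + ζ^63*(a:ℂ)^4*(b:ℂ)*(c:ℂ) + (-1)*ζ^63*(a:ℂ)^4*(b:ℂ)^2 + (-2)*ζ^64*(b:ℂ)^3*(c:ℂ)^3 + ζ^64*(b:ℂ)^4*(c:ℂ)^2 + (-2)*ζ^64*(a:ℂ)*(b:ℂ)^2*(c:ℂ)^3 + (3)*ζ^64*(a:ℂ)*(b:ℂ)^3*(c:ℂ)^2 + (-1)*ζ^64*(a:ℂ)*(b:ℂ)^4*(c:ℂ) + (3)*ζ^64*(a:ℂ)^2*(b:ℂ)^2*(c:ℂ)^2 + (-1)*ζ^64*(a:ℂ)^2*(b:ℂ)^3*(c:ℂ)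 + ζ^64*(a:ℂ)^3*(b:ℂ)*(c:ℂ)^2 + (-1)*ζ^64*(a:ℂ)^3*(b:ℂ)^2*(c:ℂ) + (-1)*ζ^64*(a:ℂ)^4*(b:ℂ)*(c:ℂ) + (-1)*ζ^74*(a:ℂ)*(b:ℂ)^3*(c:ℂ)^2 + ζ^74*(a:ℂ)*(b:ℂ)^4*(c:ℂ) + (2)*ζ^74*(a:ℂ)^2*(b:ℂ)*(c:ℂ)^3 + (-3)*ζ^74*(a:ℂ)^2*(b:ℂ)^2*(c:ℂ)^2 + ζ^74*(a:ℂ)^2*(b:ℂ)^3*(c:ℂ) + (2)*ζ^74*(a:ℂ)^3*(c:ℂ)^3 + (-3)*ζ^74*(a:ℂ)^3*(b:ℂ)*(c:ℂ)^2 + ζ^74*(a:ℂ)^3*(b:ℂ)^2*(c:ℂ) + (-1)*ζ^74*(a:ℂ)^4*(c:ℂ)^2 + ζ^74*(a:ℂ)^4*(b:ℂ)*(c:ℂ) + (2)*ζ^75*(b:ℂ)^3*(c:ℂ)^3 + (-1)*ζ^75*(b:ℂ)^4*(c:ℂ)^2 + (2)*ζ^75*(a:ℂ)*(b:ℂ)^2*(c:ℂ)^3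 + (-2)*ζ^75*(a:ℂ)*(b:ℂ)^3*(c:ℂ)^2 + (-4)*ζ^75*(a:ℂ)^2*(b:ℂ)*(c:ℂ)^3 + (3)*ζ^75*(a:ℂ)^2*(b:ℂ)^2*(c:ℂ)^2 + (-1)*ζ^75*(a:ℂ)^2*(b:ℂ)^4 + (-4)*ζ^75*(a:ℂ)^3*(c:ℂ)^3 + (6)*ζ^75*(a:ℂ)^3*(b:ℂ)*(c:ℂ)^2 + (-2)*ζ^75*(a:ℂ)^3*(b:ℂ)^2*(c:ℂ) + (2)*ζ^75*(a:ℂ)^4*(c:ℂ)^2 + (-2)*ζ^75*(a:ℂ)^4*(b:ℂ)*(c:ℂ) + ζ^75*(a:ℂ)^4*(b:ℂ)^2 + (-1)*ζ^76*(a:ℂ)*(b:ℂ)^3*(c:ℂ)^2 + ζ^76*(a:ℂ)*(b:ℂ)^4*(c:ℂ) + (2)*ζ^76*(a:ℂ)^2*(b:ℂ)*(c:ℂ)^3 + (-3)*ζ^76*(a:ℂ)^2*(b:ℂ)^2*(c:ℂ)^2 + ζ^76*(a:ℂ)^2*(b:ℂ)^3*(c:ℂ) + (2)*ζ^76*(a:ℂ)^3*(c:ℂ)^3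 + (-3)*ζ^76*(a:ℂ)^3*(b:ℂ)*(c:ℂ)^2 + ζ^76*(a:ℂ)^3*(b:ℂ)^2*(c:ℂ) + (-1)*ζ^76*(a:ℂ)^4*(c:ℂ)^2 + ζ^76*(a:ℂ)^4*(b:ℂ)*(c:ℂ) + ζ^78*(a:ℂ)*(b:ℂ)^3*(c:ℂ)^2 + (-1)*ζ^78*(a:ℂ)*(b:ℂ)^4*(c:ℂ) + (-1)*ζ^78*(a:ℂ)^2*(b:ℂ)^3*(c:ℂ) + ζ^78*(a:ℂ)^2*(b:ℂ)^4 + (-1)*ζ^78*(a:ℂ)^3*(b:ℂ)*(c:ℂ)^2 + ζ^78*(a:ℂ)^3*(b:ℂ)^2*(c:ℂ) + ζ^78*(a:ℂ)^4*(b:ℂ)*(c:ℂ) + (-1)*ζ^78*(a:ℂ)^4*(b:ℂ)^2 + (-2)*ζ^79*(b:ℂ)^3*(c:ℂ)^3 + ζ^79*(b:ℂ)^4*(c:ℂ)^2 + (-2)*ζ^79*(a:ℂ)*(b:ℂ)^2*(c:ℂ)^3 + (3)*ζ^79*(a:ℂ)*(b:ℂ)^3*(c:ℂ)^2 + (-1)*ζ^79*(a:ℂ)*(b:ℂ)^4*(c:ℂ)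 + (3)*ζ^79*(a:ℂ)^2*(b:ℂ)^2*(c:ℂ)^2 + (-1)*ζ^79*(a:ℂ)^2*(b:ℂ)^3*(c:ℂ) + ζ^79*(a:ℂ)^3*(b:ℂ)*(c:ℂ)^2 + (-1)*ζ^79*(a:ℂ)^3*(b:ℂ)^2*(c:ℂ) + (-1)*ζ^79*(a:ℂ)^4*(b:ℂ)*(c:ℂ) + (-1)*ζ^89*(a:ℂ)*(b:ℂ)^3*(c:ℂ)^2 + ζ^89*(a:ℂ)*(b:ℂ)^4*(c:ℂ) + (2)*ζ^89*(a:ℂ)^2*(b:ℂ)*(c:ℂ)^3 + (-3)*ζ^89*(a:ℂ)^2*(b:ℂ)^2*(c:ℂ)^2 + ζ^89*(a:ℂ)^2*(b:ℂ)^3*(c:ℂ) + (2)*ζ^89*(a:ℂ)^3*(c:ℂ)^3 + (-3)*ζ^89*(a:ℂ)^3*(b:ℂ)*(c:ℂ)^2 + ζ^89*(a:ℂ)^3*(b:ℂ)^2*(c:ℂ) + (-1)*ζ^89*(a:ℂ)^4*(c:ℂ)^2 + ζ^89*(a:ℂ)^4*(b:ℂ)*(c:ℂ) + (2)*ζ^90*(b:ℂ)^3*(c:ℂ)^3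 + (-1)*ζ^90*(b:ℂ)^4*(c:ℂ)^2 + (2)*ζ^90*(a:ℂ)*(b:ℂ)^2*(c:ℂ)^3 + (-2)*ζ^90*(a:ℂ)*(b:ℂ)^3*(c:ℂ)^2 + (-4)*ζ^90*(a:ℂ)^2*(b:ℂ)*(c:ℂ)^3 + (3)*ζ^90*(a:ℂ)^2*(b:ℂ)^2*(c:ℂ)^2 + (-1)*ζ^90*(a:ℂ)^2*(b:ℂ)^4 + (-4)*ζ^90*(a:ℂ)^3*(c:ℂ)^3 + (6)*ζ^90*(a:ℂ)^3*(b:ℂ)*(c:ℂ)^2 + (-2)*ζ^90*(a:ℂ)^3*(b:ℂ)^2*(c:ℂ) + (2)*ζ^90*(a:ℂ)^4*(c:ℂ)^2 + (-2)*ζ^90*(a:ℂ)^4*(b:ℂ)*(c:ℂ) + ζ^90*(a:ℂ)^4*(b:ℂ)^2 + (-1)*ζ^91*(a:ℂ)*(b:ℂ)^3*(c:ℂ)^2 + ζ^91*(a:ℂ)*(b:ℂ)^4*(c:ℂ) + (2)*ζ^91*(a:ℂ)^2*(b:ℂ)*(c:ℂ)^3 + (-3)*ζ^91*(a:ℂ)^2*(b:ℂ)^2*(c:ℂ)^2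 + ζ^91*(a:ℂ)^2*(b:ℂ)^3*(c:ℂ) + (2)*ζ^91*(a:ℂ)^3*(c:ℂ)^3 + (-3)*ζ^91*(a:ℂ)^3*(b:ℂ)*(c:ℂ)^2 + ζ^91*(a:ℂ)^3*(b:ℂ)^2*(c:ℂ) + (-1)*ζ^91*(a:ℂ)^4*(c:ℂ)^2 + ζ^91*(a:ℂ)^4*(b:ℂ)*(c:ℂ) + ζ^93*(a:ℂ)*(b:ℂ)^3*(c:ℂ)^2 + (-1)*ζ^93*(a:ℂ)*(b:ℂ)^4*(c:ℂ) + (-1)*ζ^93*(a:ℂ)^2*(b:ℂ)^3*(c:ℂ) + ζ^93*(a:ℂ)^2*(b:ℂ)^4 + (-1)*ζ^93*(a:ℂ)^3*(b:ℂ)*(c:ℂ)^2 + ζ^93*(a:ℂ)^3*(b:ℂ)^2*(c:ℂ) + ζ^93*(a:ℂ)^4*(b:ℂ)*(c:ℂ) + (-1)*ζ^93*(a:ℂ)^4*(b:ℂ)^2 + (-2)*ζ^94*(b:ℂ)^3*(c:ℂ)^3 + ζ^94*(b:ℂ)^4*(c:ℂ)^2 + (-2)*ζ^94*(a:ℂ)*(b:ℂ)^2*(c:ℂ)^3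 + (3)*ζ^94*(a:ℂ)*(b:ℂ)^3*(c:ℂ)^2 + (-1)*ζ^94*(a:ℂ)*(b:ℂ)^4*(c:ℂ) + (3)*ζ^94*(a:ℂ)^2*(b:ℂ)^2*(c:ℂ)^2 + (-1)*ζ^94*(a:ℂ)^2*(b:ℂ)^3*(c:ℂ) + ζ^94*(a:ℂ)^3*(b:ℂ)*(c:ℂ)^2 + (-1)*ζ^94*(a:ℂ)^3*(b:ℂ)^2*(c:ℂ) + (-1)*ζ^94*(a:ℂ)^4*(b:ℂ)*(c:ℂ) + (-1)*ζ^104*(a:ℂ)*(b:ℂ)^3*(c:ℂ)^2 + ζ^104*(a:ℂ)*(b:ℂ)^4*(c:ℂ) + (2)*ζ^104*(a:ℂ)^2*(b:ℂ)*(c:ℂ)^3 + (-3)*ζ^104*(a:ℂ)^2*(b:ℂ)^2*(c:ℂ)^2 + ζ^104*(a:ℂ)^2*(b:ℂ)^3*(c:ℂ) + (2)*ζ^104*(a:ℂ)^3*(c:ℂ)^3 + (-3)*ζ^104*(a:ℂ)^3*(b:ℂ)*(c:ℂ)^2 + ζ^104*(a:ℂ)^3*(b:ℂ)^2*(c:ℂ)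 + (-1)*ζ^104*(a:ℂ)^4*(c:ℂ)^2 + ζ^104*(a:ℂ)^4*(b:ℂ)*(c:ℂ) + (2)*ζ^105*(b:ℂ)^3*(c:ℂ)^3 + (-1)*ζ^105*(b:ℂ)^4*(c:ℂ)^2 + (2)*ζ^105*(a:ℂ)*(b:ℂ)^2*(c:ℂ)^3 + (-2)*ζ^105*(a:ℂ)*(b:ℂ)^3*(c:ℂ)^2 + (-4)*ζ^105*(a:ℂ)^2*(b:ℂ)*(c:ℂ)^3 + (3)*ζ^105*(a:ℂ)^2*(b:ℂ)^2*(c:ℂ)^2 + (-1)*ζ^105*(a:ℂ)^2*(b:ℂ)^4 + (-4)*ζ^105*(a:ℂ)^3*(c:ℂ)^3 + (6)*ζ^105*(a:ℂ)^3*(b:ℂ)*(c:ℂ)^2 + (-2)*ζ^105*(a:ℂ)^3*(b:ℂ)^2*(c:ℂ) + (2)*ζ^105*(a:ℂ)^4*(c:ℂ)^2 + (-2)*ζ^105*(a:ℂ)^4*(b:ℂ)*(c:ℂ) + ζ^105*(a:ℂ)^4*(b:ℂ)^2 + (-1)*ζ^106*(a:ℂ)*(b:ℂ)^3*(c:ℂ)^2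 + ζ^106*(a:ℂ)*(b:ℂ)^4*(c:ℂ) + (2)*ζ^106*(a:ℂ)^2*(b:ℂ)*(c:ℂ)^3 + (-3)*ζ^106*(a:ℂ)^2*(b:ℂ)^2*(c:ℂ)^2 + ζ^106*(a:ℂ)^2*(b:ℂ)^3*(c:ℂ) + (2)*ζ^106*(a:ℂ)^3*(c:ℂ)^3 + (-3)*ζ^106*(a:ℂ)^3*(b:ℂ)*(c:ℂ)^2 + ζ^106*(a:ℂ)^3*(b:ℂ)^2*(c:ℂ) + (-1)*ζ^106*(a:ℂ)^4*(c:ℂ)^2 + ζ^106*(a:ℂ)^4*(b:ℂ)*(c:ℂ) + ζ^108*(a:ℂ)*(b:ℂ)^3*(c:ℂ)^2 + (-1)*ζ^108*(a:ℂ)*(b:ℂ)^4*(c:ℂ) + (-1)*ζ^108*(a:ℂ)^2*(b:ℂ)^3*(c:ℂ) + ζ^108*(a:ℂ)^2*(b:ℂ)^4 + (-1)*ζ^108*(a:ℂ)^3*(b:ℂ)*(c:ℂ)^2 + ζ^108*(a:ℂ)^3*(b:ℂ)^2*(c:ℂ) + ζ^108*(a:ℂ)^4*(b:ℂ)*(c:ℂ)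 + (-1)*ζ^108*(a:ℂ)^4*(b:ℂ)^2 + (-2)*ζ^109*(b:ℂ)^3*(c:ℂ)^3 + ζ^109*(b:ℂ)^4*(c:ℂ)^2 + (-2)*ζ^109*(a:ℂ)*(b:ℂ)^2*(c:ℂ)^3 + (3)*ζ^109*(a:ℂ)*(b:ℂ)^3*(c:ℂ)^2 + (-1)*ζ^109*(a:ℂ)*(b:ℂ)^4*(c:ℂ) + (3)*ζ^109*(a:ℂ)^2*(b:ℂ)^2*(c:ℂ)^2 + (-1)*ζ^109*(a:ℂ)^2*(b:ℂ)^3*(c:ℂ) + ζ^109*(a:ℂ)^3*(b:ℂ)*(c:ℂ)^2 + (-1)*ζ^109*(a:ℂ)^3*(b:ℂ)^2*(c:ℂ) + (-1)*ζ^109*(a:ℂ)^4*(b:ℂ)*(c:ℂ) + (-1)*ζ^119*(a:ℂ)*(b:ℂ)^3*(c:ℂ)^2 + ζ^119*(a:ℂ)*(b:ℂ)^4*(c:ℂ) + (2)*ζ^119*(a:ℂ)^2*(b:ℂ)*(c:ℂ)^3 + (-3)*ζ^119*(a:ℂ)^2*(b:ℂ)^2*(c:ℂ)^2 + ζ^119*(a:ℂ)^2*(b:ℂ)^3*(c:ℂ)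 + (2)*ζ^119*(a:ℂ)^3*(c:ℂ)^3 + (-3)*ζ^119*(a:ℂ)^3*(b:ℂ)*(c:ℂ)^2 + ζ^119*(a:ℂ)^3*(b:ℂ)^2*(c:ℂ) + (-1)*ζ^119*(a:ℂ)^4*(c:ℂ)^2 + ζ^119*(a:ℂ)^4*(b:ℂ)*(c:ℂ) + (2)*ζ^120*(b:ℂ)^3*(c:ℂ)^3 + (-1)*ζ^120*(b:ℂ)^4*(c:ℂ)^2 + (2)*ζ^120*(a:ℂ)*(b:ℂ)^2*(c:ℂ)^3 + (-2)*ζ^120*(a:ℂ)*(b:ℂ)^3*(c:ℂ)^2 + (-4)*ζ^120*(a:ℂ)^2*(b:ℂ)*(c:ℂ)^3 + (3)*ζ^120*(a:ℂ)^2*(b:ℂ)^2*(c:ℂ)^2 + (-1)*ζ^120*(a:ℂ)^2*(b:ℂ)^4 + (-4)*ζ^120*(a:ℂ)^3*(c:ℂ)^3 + (6)*ζ^120*(a:ℂ)^3*(b:ℂ)*(c:ℂ)^2 + (-2)*ζ^120*(a:ℂ)^3*(b:ℂ)^2*(c:ℂ) + (2)*ζ^120*(a:ℂ)^4*(c:ℂ)^2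 + (-2)*ζ^120*(a:ℂ)^4*(b:ℂ)*(c:ℂ) + ζ^120*(a:ℂ)^4*(b:ℂ)^2 + (-1)*ζ^121*(a:ℂ)*(b:ℂ)^3*(c:ℂ)^2 + ζ^121*(a:ℂ)*(b:ℂ)^4*(c:ℂ) + (2)*ζ^121*(a:ℂ)^2*(b:ℂ)*(c:ℂ)^3 + (-3)*ζ^121*(a:ℂ)^2*(b:ℂ)^2*(c:ℂ)^2 + ζ^121*(a:ℂ)^2*(b:ℂ)^3*(c:ℂ) + (2)*ζ^121*(a:ℂ)^3*(c:ℂ)^3 + (-3)*ζ^121*(a:ℂ)^3*(b:ℂ)*(c:ℂ)^2 + ζ^121*(a:ℂ)^3*(b:ℂ)^2*(c:ℂ) + (-1)*ζ^121*(a:ℂ)^4*(c:ℂ)^2 + ζ^121*(a:ℂ)^4*(b:ℂ)*(c:ℂ) + ζ^123*(a:ℂ)*(b:ℂ)^3*(c:ℂ)^2 + (-1)*ζ^123*(a:ℂ)*(b:ℂ)^4*(c:ℂ) + (-1)*ζ^123*(a:ℂ)^2*(b:ℂ)^3*(c:ℂ) + ζ^123*(a:ℂ)^2*(b:ℂ)^4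 + (-1)*ζ^123*(a:ℂ)^3*(b:ℂ)*(c:ℂ)^2 + ζ^123*(a:ℂ)^3*(b:ℂ)^2*(c:ℂ) + ζ^123*(a:ℂ)^4*(b:ℂ)*(c:ℂ) + (-1)*ζ^123*(a:ℂ)^4*(b:ℂ)^2 + (-2)*ζ^124*(b:ℂ)^3*(c:ℂ)^3 + ζ^124*(b:ℂ)^4*(c:ℂ)^2 + (-2)*ζ^124*(a:ℂ)*(b:ℂ)^2*(c:ℂ)^3 + (3)*ζ^124*(a:ℂ)*(b:ℂ)^3*(c:ℂ)^2 + (-1)*ζ^124*(a:ℂ)*(b:ℂ)^4*(c:ℂ) + (3)*ζ^124*(a:ℂ)^2*(b:ℂ)^2*(c:ℂ)^2 + (-1)*ζ^124*(a:ℂ)^2*(b:ℂ)^3*(c:ℂ) + ζ^124*(a:ℂ)^3*(b:ℂ)*(c:ℂ)^2 + (-1)*ζ^124*(a:ℂ)^3*(b:ℂ)^2*(c:ℂ) + (-1)*ζ^124*(a:ℂ)^4*(b:ℂ)*(c:ℂ) + (-1)*ζ^134*(a:ℂ)*(b:ℂ)^3*(c:ℂ)^2 + ζ^134*(a:ℂ)*(b:ℂ)^4*(c:ℂ)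 + (2)*ζ^134*(a:ℂ)^2*(b:ℂ)*(c:ℂ)^3 + (-3)*ζ^134*(a:ℂ)^2*(b:ℂ)^2*(c:ℂ)^2 + ζ^134*(a:ℂ)^2*(b:ℂ)^3*(c:ℂ) + (2)*ζ^134*(a:ℂ)^3*(c:ℂ)^3 + (-3)*ζ^134*(a:ℂ)^3*(b:ℂ)*(c:ℂ)^2 + ζ^134*(a:ℂ)^3*(b:ℂ)^2*(c:ℂ) + (-1)*ζ^134*(a:ℂ)^4*(c:ℂ)^2 + ζ^134*(a:ℂ)^4*(b:ℂ)*(c:ℂ) + (2)*ζ^135*(b:ℂ)^3*(c:ℂ)^3 + (-1)*ζ^135*(b:ℂ)^4*(c:ℂ)^2 + (2)*ζ^135*(a:ℂ)*(b:ℂ)^2*(c:ℂ)^3 + (-2)*ζ^135*(a:ℂ)*(b:ℂ)^3*(c:ℂ)^2 + (-4)*ζ^135*(a:ℂ)^2*(b:ℂ)*(c:ℂ)^3 + (3)*ζ^135*(a:ℂ)^2*(b:ℂ)^2*(c:ℂ)^2 + (-1)*ζ^135*(a:ℂ)^2*(b:ℂ)^4 + (-4)*ζ^135*(a:ℂ)^3*(c:ℂ)^3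 + (6)*ζ^135*(a:ℂ)^3*(b:ℂ)*(c:ℂ)^2 + (-2)*ζ^135*(a:ℂ)^3*(b:ℂ)^2*(c:ℂ) + (2)*ζ^135*(a:ℂ)^4*(c:ℂ)^2 + (-2)*ζ^135*(a:ℂ)^4*(b:ℂ)*(c:ℂ) + ζ^135*(a:ℂ)^4*(b:ℂ)^2 + (-1)*ζ^136*(a:ℂ)*(b:ℂ)^3*(c:ℂ)^2 + ζ^136*(a:ℂ)*(b:ℂ)^4*(c:ℂ) + (2)*ζ^136*(a:ℂ)^2*(b:ℂ)*(c:ℂ)^3 + (-3)*ζ^136*(a:ℂ)^2*(b:ℂ)^2*(c:ℂ)^2 + ζ^136*(a:ℂ)^2*(b:ℂ)^3*(c:ℂ) + (2)*ζ^136*(a:ℂ)^3*(c:ℂ)^3 + (-3)*ζ^136*(a:ℂ)^3*(b:ℂ)*(c:ℂ)^2 + ζ^136*(a:ℂ)^3*(b:ℂ)^2*(c:ℂ) + (-1)*ζ^136*(a:ℂ)^4*(c:ℂ)^2 + ζ^136*(a:ℂ)^4*(b:ℂ)*(c:ℂ) + ζ^138*(a:ℂ)*(b:ℂ)^3*(c:ℂ)^2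 + (-1)*ζ^138*(a:ℂ)*(b:ℂ)^4*(c:ℂ) + (-1)*ζ^138*(a:ℂ)^2*(b:ℂ)^3*(c:ℂ) + ζ^138*(a:ℂ)^2*(b:ℂ)^4 + (-1)*ζ^138*(a:ℂ)^3*(b:ℂ)*(c:ℂ)^2 + ζ^138*(a:ℂ)^3*(b:ℂ)^2*(c:ℂ) + ζ^138*(a:ℂ)^4*(b:ℂ)*(c:ℂ) + (-1)*ζ^138*(a:ℂ)^4*(b:ℂ)^2 + (-2)*ζ^139*(b:ℂ)^3*(c:ℂ)^3 + ζ^139*(b:ℂ)^4*(c:ℂ)^2 + (-2)*ζ^139*(a:ℂ)*(b:ℂ)^2*(c:ℂ)^3 + (3)*ζ^139*(a:ℂ)*(b:ℂ)^3*(c:ℂ)^2 + (-1)*ζ^139*(a:ℂ)*(b:ℂ)^4*(c:ℂ) + (3)*ζ^139*(a:ℂ)^2*(b:ℂ)^2*(c:ℂ)^2 + (-1)*ζ^139*(a:ℂ)^2*(b:ℂ)^3*(c:ℂ) + ζ^139*(a:ℂ)^3*(b:ℂ)*(c:ℂ)^2 + (-1)*ζ^139*(a:ℂ)^3*(b:ℂ)^2*(c:ℂ)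 + (-1)*ζ^139*(a:ℂ)^4*(b:ℂ)*(c:ℂ) + (-1)*ζ^149*(a:ℂ)*(b:ℂ)^3*(c:ℂ)^2 + ζ^149*(a:ℂ)*(b:ℂ)^4*(c:ℂ) + (2)*ζ^149*(a:ℂ)^2*(b:ℂ)*(c:ℂ)^3 + (-3)*ζ^149*(a:ℂ)^2*(b:ℂ)^2*(c:ℂ)^2 + ζ^149*(a:ℂ)^2*(b:ℂ)^3*(c:ℂ) + (2)*ζ^149*(a:ℂ)^3*(c:ℂ)^3 + (-3)*ζ^149*(a:ℂ)^3*(b:ℂ)*(c:ℂ)^2 + ζ^149*(a:ℂ)^3*(b:ℂ)^2*(c:ℂ) + (-1)*ζ^149*(a:ℂ)^4*(c:ℂ)^2 + ζ^149*(a:ℂ)^4*(b:ℂ)*(c:ℂ) + (2)*ζ^150*(b:ℂ)^3*(c:ℂ)^3 + (-1)*ζ^150*(b:ℂ)^4*(c:ℂ)^2 + (2)*ζ^150*(a:ℂ)*(b:ℂ)^2*(c:ℂ)^3 + (-2)*ζ^150*(a:ℂ)*(b:ℂ)^3*(c:ℂ)^2 + (-4)*ζ^150*(a:ℂ)^2*(b:ℂ)*(c:ℂ)^3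 + (3)*ζ^150*(a:ℂ)^2*(b:ℂ)^2*(c:ℂ)^2 + (-1)*ζ^150*(a:ℂ)^2*(b:ℂ)^4 + (-4)*ζ^150*(a:ℂ)^3*(c:ℂ)^3 + (6)*ζ^150*(a:ℂ)^3*(b:ℂ)*(c:ℂ)^2 + (-2)*ζ^150*(a:ℂ)^3*(b:ℂ)^2*(c:ℂ) + (2)*ζ^150*(a:ℂ)^4*(c:ℂ)^2 + (-2)*ζ^150*(a:ℂ)^4*(b:ℂ)*(c:ℂ) + ζ^150*(a:ℂ)^4*(b:ℂ)^2 + (-1)*ζ^151*(a:ℂ)*(b:ℂ)^3*(c:ℂ)^2 + ζ^151*(a:ℂ)*(b:ℂ)^4*(c:ℂ) + (2)*ζ^151*(a:ℂ)^2*(b:ℂ)*(c:ℂ)^3 + (-3)*ζ^151*(a:ℂ)^2*(b:ℂ)^2*(c:ℂ)^2 + ζ^151*(a:ℂ)^2*(b:ℂ)^3*(c:ℂ) + (2)*ζ^151*(a:ℂ)^3*(c:ℂ)^3 + (-3)*ζ^151*(a:ℂ)^3*(b:ℂ)*(c:ℂ)^2 + ζ^151*(a:ℂ)^3*(b:ℂ)^2*(c:ℂ)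 + (-1)*ζ^151*(a:ℂ)^4*(c:ℂ)^2 + ζ^151*(a:ℂ)^4*(b:ℂ)*(c:ℂ) + ζ^153*(a:ℂ)*(b:ℂ)^3*(c:ℂ)^2 + (-1)*ζ^153*(a:ℂ)*(b:ℂ)^4*(c:ℂ) + (-1)*ζ^153*(a:ℂ)^2*(b:ℂ)^3*(c:ℂ) + ζ^153*(a:ℂ)^2*(b:ℂ)^4 + (-1)*ζ^153*(a:ℂ)^3*(b:ℂ)*(c:ℂ)^2 + ζ^153*(a:ℂ)^3*(b:ℂ)^2*(c:ℂ) + ζ^153*(a:ℂ)^4*(b:ℂ)*(c:ℂ) + (-1)*ζ^153*(a:ℂ)^4*(b:ℂ)^2 + (-1)*ζ^164*(a:ℂ)*(b:ℂ)^3*(c:ℂ)^2 + ζ^164*(a:ℂ)*(b:ℂ)^4*(c:ℂ) + (2)*ζ^164*(a:ℂ)^2*(b:ℂ)*(c:ℂ)^3 + (-3)*ζ^164*(a:ℂ)^2*(b:ℂ)^2*(c:ℂ)^2 + ζ^164*(a:ℂ)^2*(b:ℂ)^3*(c:ℂ) + (2)*ζ^164*(a:ℂ)^3*(c:ℂ)^3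 + (-3)*ζ^164*(a:ℂ)^3*(b:ℂ)*(c:ℂ)^2 + ζ^164*(a:ℂ)^3*(b:ℂ)^2*(c:ℂ) + (-1)*ζ^164*(a:ℂ)^4*(c:ℂ)^2 + ζ^164*(a:ℂ)^4*(b:ℂ)*(c:ℂ) + (-2)*ζ^165*(a:ℂ)^2*(b:ℂ)*(c:ℂ)^3 + (3)*ζ^165*(a:ℂ)^2*(b:ℂ)^2*(c:ℂ)^2 + (-1)*ζ^165*(a:ℂ)^2*(b:ℂ)^4 + (-2)*ζ^165*(a:ℂ)^3*(c:ℂ)^3 + (4)*ζ^165*(a:ℂ)^3*(b:ℂ)*(c:ℂ)^2 + (-2)*ζ^165*(a:ℂ)^3*(b:ℂ)^2*(c:ℂ) + ζ^165*(a:ℂ)^4*(c:ℂ)^2 + (-2)*ζ^165*(a:ℂ)^4*(b:ℂ)*(c:ℂ) + ζ^165*(a:ℂ)^4*(b:ℂ)^2) * h15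
  -- main reduction
  rw [Complex.dist_eq, Complex.dist_eq, Complex.norm_def, Complex.norm_def]
  congr 1
  apply Complex.ofReal_injective
  rw [← Complex.mul_conj, ← Complex.mul_conj]
  rw [hC₁, hA₂, hB₂, hA, hB, hC]
  simp only [map_div₀, map_add, map_sub, map_mul, map_pow, map_one, Complex.conj_ofReal, hconj]
  rw [div_sub_div _ _ hab' hcb', div_sub_div _ _ hab' hcb', div_sub_div _ _ hab' hca', div_sub_div _ _ hab' hca',
    div_mul_div_comm, div_mul_div_comm, div_eq_div_iff (mul_ne_zero (mul_ne_zero hab' hcb') (mul_ne_zero hab' hcb'))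
    (mul_ne_zero (mul_ne_zero hab' hca') (mul_ne_zero hab' hca'))]
  linear_combination (((a:ℂ) + (b:ℂ)) * ((a:ℂ) + (b:ℂ))) * key
end

section
/- Let ζ = exp(2πi/15) and consider the first pentadecagonal triangle with vertices A = ζ¹², B = 1, C = ζ¹¹ in ℂ (its angles are ∠A = 11π/15, ∠B = π/15, ∠C = π/5). With side lengths a = dist(B,C), b = dist(C,A), c = dist(A,B), define the external bisector feet A₂ = (c·C − b·B)/(c−b) and B₂ = (c·C − a·A)/(c−a). Then dist(A, A₂) = dist(B, B₂); that is, this non-isosceles triangle has two equal external bisectors. -/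
set_option maxHeartbeats 4000000 in
theorem stmt_16 (ζ A B C : ℂ) (hζ : ζ = Complex.exp (2 * Real.pi * Complex.I / 15))
    (hA : A = ζ ^ 12) (hB : B = 1) (hC : C = ζ ^ 11)
    (a b c : ℝ) (ha : a = dist B C) (hb : b = dist C A) (hc : c = dist A B)
    (A₂ B₂ : ℂ)
    (hA₂ : A₂ = ((c : ℂ) * C - (b : ℂ) * B) / ((c : ℂ) - (b : ℂ)))
    (hB₂ : B₂ = ((c : ℂ) * C - (a : ℂ) * A) / ((c : ℂ) - (a : ℂ))) :
    dist A A₂ = dist B B₂ := by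
  have hpi := Real.pi_pos
  have hs : Real.sin (Real.pi / 15) ^ 2 = 1 - Real.cos (Real.pi / 15) ^ 2 := by
    have := Real.sin_sq_add_cos_sq (Real.pi / 15); linarith
  have hck2 : Real.cos (2 * (Real.pi / 15)) = (-1 : ℝ) * Real.sin (Real.pi / 15) ^ 2 + (1 : ℝ) * Real.cos (Real.pi / 15) ^ 2 := by
    rw [show (2 : ℝ) * (Real.pi / 15) = Real.pi / 15 + Real.pi / 15 by ring, Real.cos_add]; ring
  have hsk2 : Real.sin (2 * (Real.pi / 15)) = (2 : ℝ) * Real.cos (Real.pi / 15) * Real.sin (Real.pi / 15) := by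
    rw [show (2 : ℝ) * (Real.pi / 15) = Real.pi / 15 + Real.pi / 15 by ring, Real.sin_add]; ring
  have hck3 : Real.cos (3 * (Real.pi / 15)) = (-3 : ℝ) * Real.cos (Real.pi / 15) * Real.sin (Real.pi / 15) ^ 2 + (1 : ℝ) * Real.cos (Real.pi / 15) ^ 3 := by
    rw [show (3 : ℝ) * (Real.pi / 15) = 2 * (Real.pi / 15) + Real.pi / 15 by ring, Real.cos_add, hck2, hsk2]; ring
  have hsk3 : Real.sin (3 * (Real.pi / 15)) = (-1 : ℝ) * Real.sin (Real.pi / 15) ^ 3 + (3 : ℝ) * Real.cos (Real.pi / 15) ^ 2 * Real.sin (Real.pi / 15) := by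
    rw [show (3 : ℝ) * (Real.pi / 15) = 2 * (Real.pi / 15) + Real.pi / 15 by ring, Real.sin_add, hck2, hsk2]; ring
  have hck4 : Real.cos (4 * (Real.pi / 15)) = (1 : ℝ) * Real.sin (Real.pi / 15) ^ 4 + (-6 : ℝ) * Real.cos (Real.pi / 15) ^ 2 * Real.sin (Real.pi / 15) ^ 2 + (1 : ℝ) * Real.cos (Real.pi / 15) ^ 4 := by
    rw [show (4 : ℝ) * (Real.pi / 15) = 3 * (Real.pi / 15) + Real.pi / 15 by ring, Real.cos_add, hck3, hsk3]; ring
  have hsk4 : Real.sin (4 * (Real.pi / 15)) = (-4 : ℝ) * Real.cos (Real.pi / 15) * Real.sin (Real.pi / 15) ^ 3 + (4 : ℝ) * Real.cos (Real.pi / 15) ^ 3 * Real.sin (Real.pi / 15) := by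
    rw [show (4 : ℝ) * (Real.pi / 15) = 3 * (Real.pi / 15) + Real.pi / 15 by ring, Real.sin_add, hck3, hsk3]; ring
  have hck5 : Real.cos (5 * (Real.pi / 15)) = (5 : ℝ) * Real.cos (Real.pi / 15) * Real.sin (Real.pi / 15) ^ 4 + (-10 : ℝ) * Real.cos (Real.pi / 15) ^ 3 * Real.sin (Real.pi / 15) ^ 2 + (1 : ℝ) * Real.cos (Real.pi / 15) ^ 5 := by
    rw [show (5 : ℝ) * (Real.pi / 15) = 4 * (Real.pi / 15) + Real.pi / 15 by ring, Real.cos_add, hck4, hsk4]; ring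
  have hsk5 : Real.sin (5 * (Real.pi / 15)) = (1 : ℝ) * Real.sin (Real.pi / 15) ^ 5 + (-10 : ℝ) * Real.cos (Real.pi / 15) ^ 2 * Real.sin (Real.pi / 15) ^ 3 + (5 : ℝ) * Real.cos (Real.pi / 15) ^ 4 * Real.sin (Real.pi / 15) := by
    rw [show (5 : ℝ) * (Real.pi / 15) = 4 * (Real.pi / 15) + Real.pi / 15 by ring, Real.sin_add, hck4, hsk4]; ring
  have hck6 : Real.cos (6 * (Real.pi / 15)) = (-1 : ℝ) * Real.sin (Real.pi / 15) ^ 6 + (15 : ℝ) * Real.cos (Real.pi / 15) ^ 2 * Real.sin (Real.pi / 15) ^ 4 + (-15 : ℝ) * Real.cos (Real.pi / 15) ^ 4 * Real.sin (Real.pi / 15) ^ 2 + (1 : ℝ) * Real.cos (Real.pi / 15) ^ 6 := by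
    rw [show (6 : ℝ) * (Real.pi / 15) = 5 * (Real.pi / 15) + Real.pi / 15 by ring, Real.cos_add, hck5, hsk5]; ring
  have hsk6 : Real.sin (6 * (Real.pi / 15)) = (6 : ℝ) * Real.cos (Real.pi / 15) * Real.sin (Real.pi / 15) ^ 5 + (-20 : ℝ) * Real.cos (Real.pi / 15) ^ 3 * Real.sin (Real.pi / 15) ^ 3 + (6 : ℝ) * Real.cos (Real.pi / 15) ^ 5 * Real.sin (Real.pi / 15) := by
    rw [show (6 : ℝ) * (Real.pi / 15) = 5 * (Real.pi / 15) + Real.pi / 15 by ring, Real.sin_add, hck5, hsk5]; ring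
  have hck7 : Real.cos (7 * (Real.pi / 15)) = (-7 : ℝ) * Real.cos (Real.pi / 15) * Real.sin (Real.pi / 15) ^ 6 + (35 : ℝ) * Real.cos (Real.pi / 15) ^ 3 * Real.sin (Real.pi / 15) ^ 4 + (-21 : ℝ) * Real.cos (Real.pi / 15) ^ 5 * Real.sin (Real.pi / 15) ^ 2 + (1 : ℝ) * Real.cos (Real.pi / 15) ^ 7 := by
    rw [show (7 : ℝ) * (Real.pi / 15) = 6 * (Real.pi / 15) + Real.pi / 15 by ring, Real.cos_add, hck6, hsk6]; ring
  have hsk7 : Real.sin (7 * (Real.pi / 15)) = (-1 : ℝ) * Real.sin (Real.pi / 15) ^ 7 + (21 : ℝ) * Real.cos (Real.pi / 15) ^ 2 * Real.sin (Real.pi / 15) ^ 5 + (-35 : ℝ) * Real.cos (Real.pi / 15) ^ 4 * Real.sin (Real.pi / 15) ^ 3 + (7 : ℝ) * Real.cos (Real.pi / 15) ^ 6 * Real.sin (Real.pi / 15) := by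
    rw [show (7 : ℝ) * (Real.pi / 15) = 6 * (Real.pi / 15) + Real.pi / 15 by ring, Real.sin_add, hck6, hsk6]; ring
  have hck8 : Real.cos (8 * (Real.pi / 15)) = (1 : ℝ) * Real.sin (Real.pi / 15) ^ 8 + (-28 : ℝ) * Real.cos (Real.pi / 15) ^ 2 * Real.sin (Real.pi / 15) ^ 6 + (70 : ℝ) * Real.cos (Real.pi / 15) ^ 4 * Real.sin (Real.pi / 15) ^ 4 + (-28 : ℝ) * Real.cos (Real.pi / 15) ^ 6 * Real.sin (Real.pi / 15) ^ 2 + (1 : ℝ) * Real.cos (Real.pi / 15) ^ 8 := by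
    rw [show (8 : ℝ) * (Real.pi / 15) = 7 * (Real.pi / 15) + Real.pi / 15 by ring, Real.cos_add, hck7, hsk7]; ring
  have hsk8 : Real.sin (8 * (Real.pi / 15)) = (-8 : ℝ) * Real.cos (Real.pi / 15) * Real.sin (Real.pi / 15) ^ 7 + (56 : ℝ) * Real.cos (Real.pi / 15) ^ 3 * Real.sin (Real.pi / 15) ^ 5 + (-56 : ℝ) * Real.cos (Real.pi / 15) ^ 5 * Real.sin (Real.pi / 15) ^ 3 + (8 : ℝ) * Real.cos (Real.pi / 15) ^ 7 * Real.sin (Real.pi / 15) := by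
    rw [show (8 : ℝ) * (Real.pi / 15) = 7 * (Real.pi / 15) + Real.pi / 15 by ring, Real.sin_add, hck7, hsk7]; ring
  have hcp5 : Real.cos (5 * (Real.pi / 15)) = 1 / 2 := by
    rw [show (5 : ℝ) * (Real.pi / 15) = Real.pi / 3 by ring, Real.cos_pi_div_three]
  have hq : (16 : ℝ) * Real.cos (Real.pi / 15) ^ 5 - 20 * Real.cos (Real.pi / 15) ^ 3 + 5 * Real.cos (Real.pi / 15) = 1 / 2 := by
    rw [hck5] at hcp5
    linear_combination hcp5 + ((-5 : ℝ) * Real.cos (Real.pi / 15) + (-5 : ℝ) * Real.cos (Real.pi / 15) * Real.sin (Real.pi / 15) ^ 2 + (15 : ℝ) * Real.cos (Real.pi / 15) ^ 3) * hs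
  have hA' : A = (Real.cos (6 * (Real.pi / 15)) : ℂ) - (Real.sin (6 * (Real.pi / 15)) : ℂ) * Complex.I := by
    have h1 : A = Complex.exp (((24 : ℝ) * (Real.pi / 15) : ℝ) * Complex.I) := by
      rw [hA, hζ, ← Complex.exp_nat_mul]
      congr 1; push_cast; ring
    rw [h1, Complex.exp_mul_I, ← Complex.ofReal_cos, ← Complex.ofReal_sin]
    rw [show (24 : ℝ) * (Real.pi / 15) = 2 * Real.pi - 6 * (Real.pi / 15) by ring,
      Real.cos_sub, Real.sin_sub, Real.cos_two_pi, Real.sin_two_pi]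
    push_cast; ring
  have hC' : C = (Real.cos (8 * (Real.pi / 15)) : ℂ) - (Real.sin (8 * (Real.pi / 15)) : ℂ) * Complex.I := by
    have h1 : C = Complex.exp (((22 : ℝ) * (Real.pi / 15) : ℝ) * Complex.I) := by
      rw [hC, hζ, ← Complex.exp_nat_mul]
      congr 1; push_cast; ring
    rw [h1, Complex.exp_mul_I, ← Complex.ofReal_cos, ← Complex.ofReal_sin]
    rw [show (22 : ℝ) * (Real.pi / 15) = 2 * Real.pi - 8 * (Real.pi / 15) by ring,
      Real.cos_sub, Real.sin_sub, Real.cos_two_pi, Real.sin_two_pi]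
    push_cast; ring
  have hp1 : 0 < Real.sin (Real.pi / 15) := Real.sin_pos_of_pos_of_lt_pi (by linarith) (by linarith)
  have hp3 : 0 < Real.sin (3 * (Real.pi / 15)) := Real.sin_pos_of_pos_of_lt_pi (by linarith) (by linarith)
  have hp4 : 0 < Real.sin (4 * (Real.pi / 15)) := Real.sin_pos_of_pos_of_lt_pi (by linarith) (by linarith)
  have ha2 : a ^ 2 = (2 * Real.sin (4 * (Real.pi / 15))) ^ 2 := by
    rw [ha, Complex.dist_eq, Complex.sq_norm, hB, hC']
    rw [show (1 : ℂ) - ((Real.cos (8 * (Real.pi / 15)) : ℂ) - (Real.sin (8 * (Real.pi / 15)) : ℂ) * Complex.I)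
        = ((1 - Real.cos (8 * (Real.pi / 15)) : ℝ) : ℂ) + ((Real.sin (8 * (Real.pi / 15)) : ℝ) : ℂ) * Complex.I by push_cast; ring,
      Complex.normSq_add_mul_I, hck8, hsk8, hsk4]
    linear_combination ((-1 : ℝ) + (-1 : ℝ) * Real.sin (Real.pi / 15) ^ 2 + (-1 : ℝ) * Real.sin (Real.pi / 15) ^ 4 + (-1 : ℝ) * Real.sin (Real.pi / 15) ^ 6 + (1 : ℝ) * Real.sin (Real.pi / 15) ^ 8 + (1 : ℝ) * Real.sin (Real.pi / 15) ^ 10 + (1 : ℝ) * Real.sin (Real.pi / 15) ^ 12 + (1 : ℝ) * Real.sin (Real.pi / 15) ^ 14 + (-1 : ℝ) * Real.cos (Real.pi / 15) ^ 2 + (-2 : ℝ) * Real.cos (Real.pi / 15) ^ 2 * Real.sin (Real.pi / 15) ^ 2 + (-3 : ℝ) * Real.cos (Real.pi / 15) ^ 2 * Real.sin (Real.pi / 15) ^ 4 + (4 : ℝ) * Real.cos (Real.pi / 15) ^ 2 * Real.sin (Real.pi / 15) ^ 6 + (5 : ℝ) * Real.cos (Real.pi / 15) ^ 2 * Real.sin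 (Real.pi / 15) ^ 8 + (6 : ℝ) * Real.cos (Real.pi / 15) ^ 2 * Real.sin (Real.pi / 15) ^ 10 + (7 : ℝ) * Real.cos (Real.pi / 15) ^ 2 * Real.sin (Real.pi / 15) ^ 12 + (-1 : ℝ) * Real.cos (Real.pi / 15) ^ 4 + (-3 : ℝ) * Real.cos (Real.pi / 15) ^ 4 * Real.sin (Real.pi / 15) ^ 2 + (6 : ℝ) * Real.cos (Real.pi / 15) ^ 4 * Real.sin (Real.pi / 15) ^ 4 + (10 : ℝ) * Real.cos (Real.pi / 15) ^ 4 * Real.sin (Real.pi / 15) ^ 6 + (15 : ℝ) * Real.cos (Real.pi / 15) ^ 4 * Real.sin (Real.pi / 15) ^ 8 + (21 : ℝ) * Real.cos (Real.pi / 15) ^ 4 * Real.sin (Real.pi / 15) ^ 10 + (-1 : ℝ) * Real.cos (Real.pi / 15) ^ 6 + (4 : ℝ) * Real.cos (Real.pi / 15) ^ 6 * Real.sin (Real.pi / 15) ^ 2 + (10 : ℝ) * Real.cos (Real.pi / 15) ^ 6 * Real.sin (Real.pi / 15) ^ 4 + (20 : ℝ) * Real.cos (Real.pi / 15) ^ 6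 * Real.sin (Real.pi / 15) ^ 6 + (35 : ℝ) * Real.cos (Real.pi / 15) ^ 6 * Real.sin (Real.pi / 15) ^ 8 + (1 : ℝ) * Real.cos (Real.pi / 15) ^ 8 + (5 : ℝ) * Real.cos (Real.pi / 15) ^ 8 * Real.sin (Real.pi / 15) ^ 2 + (15 : ℝ) * Real.cos (Real.pi / 15) ^ 8 * Real.sin (Real.pi / 15) ^ 4 + (35 : ℝ) * Real.cos (Real.pi / 15) ^ 8 * Real.sin (Real.pi / 15) ^ 6 + (1 : ℝ) * Real.cos (Real.pi / 15) ^ 10 + (6 : ℝ) * Real.cos (Real.pi / 15) ^ 10 * Real.sin (Real.pi / 15) ^ 2 + (21 : ℝ) * Real.cos (Real.pi / 15) ^ 10 * Real.sin (Real.pi / 15) ^ 4 + (1 : ℝ) * Real.cos (Real.pi / 15) ^ 12 + (7 : ℝ) * Real.cos (Real.pi / 15) ^ 12 * Real.sin (Real.pi / 15) ^ 2 + (1 : ℝ) * Real.cos (Real.pi / 15) ^ 14) * hs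
  have ha' : a = 2 * Real.sin (4 * (Real.pi / 15)) := by
    have h0 : (a - 2 * Real.sin (4 * (Real.pi / 15))) * (a + 2 * Real.sin (4 * (Real.pi / 15))) = 0 := by linear_combination ha2
    have hd : 0 ≤ a := ha ▸ dist_nonneg
    rcases mul_eq_zero.mp h0 with h | h <;> linarith
  have hb2 : b ^ 2 = (2 * Real.sin (Real.pi / 15)) ^ 2 := by
    rw [hb, Complex.dist_eq, Complex.sq_norm, hA', hC']
    rw [show ((Real.cos (8 * (Real.pi / 15)) : ℂ) - (Real.sin (8 * (Real.pi / 15)) : ℂ) * Complex.I) - ((Real.cos (6 * (Real.pi / 15)) : ℂ) - (Real.sin (6 * (Real.pi / 15)) : ℂ) * Complex.I)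
        = ((Real.cos (8 * (Real.pi / 15)) - Real.cos (6 * (Real.pi / 15)) : ℝ) : ℂ) + ((Real.sin (6 * (Real.pi / 15)) - Real.sin (8 * (Real.pi / 15)) : ℝ) : ℂ) * Complex.I by push_cast; ring,
      Complex.normSq_add_mul_I, hck8, hsk8, hck6, hsk6]
    linear_combination ((4 : ℝ) * Real.sin (Real.pi / 15) ^ 2 + (4 : ℝ) * Real.sin (Real.pi / 15) ^ 4 + (4 : ℝ) * Real.sin (Real.pi / 15) ^ 6 + (4 : ℝ) * Real.sin (Real.pi / 15) ^ 8 + (4 : ℝ) * Real.sin (Real.pi / 15) ^ 10 + (3 : ℝ) * Real.sin (Real.pi / 15) ^ 12 + (1 : ℝ) * Real.sin (Real.pi / 15) ^ 14 + (4 : ℝ) * Real.cos (Real.pi / 15) ^ 2 * Real.sin (Real.pi / 15) ^ 2 + (8 : ℝ) * Real.cos (Real.pi / 15) ^ 2 * Real.sin (Real.pi / 15) ^ 4 + (12 : ℝ) * Real.cos (Real.pi / 15) ^ 2 * Real.sin (Real.pi / 15) ^ 6 + (16 : ℝ) * Real.cos (Real.pi / 15) ^ 2 * Real.sin (Real.pi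 / 15) ^ 8 + (14 : ℝ) * Real.cos (Real.pi / 15) ^ 2 * Real.sin (Real.pi / 15) ^ 10 + (7 : ℝ) * Real.cos (Real.pi / 15) ^ 2 * Real.sin (Real.pi / 15) ^ 12 + (4 : ℝ) * Real.cos (Real.pi / 15) ^ 4 * Real.sin (Real.pi / 15) ^ 2 + (12 : ℝ) * Real.cos (Real.pi / 15) ^ 4 * Real.sin (Real.pi / 15) ^ 4 + (24 : ℝ) * Real.cos (Real.pi / 15) ^ 4 * Real.sin (Real.pi / 15) ^ 6 + (25 : ℝ) * Real.cos (Real.pi / 15) ^ 4 * Real.sin (Real.pi / 15) ^ 8 + (21 : ℝ) * Real.cos (Real.pi / 15) ^ 4 * Real.sin (Real.pi / 15) ^ 10 + (4 : ℝ) * Real.cos (Real.pi / 15) ^ 6 * Real.sin (Real.pi / 15) ^ 2 + (16 : ℝ) * Real.cos (Real.pi / 15) ^ 6 * Real.sin (Real.pi / 15) ^ 4 + (20 : ℝ) * Real.cos (Real.pi / 15) ^ 6 * Real.sin (Real.pi / 15) ^ 6 + (35 : ℝ) * Real.cos (Real.pi / 15) ^ 6 * Real.sin (Real.pi / 15) ^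 8 + (4 : ℝ) * Real.cos (Real.pi / 15) ^ 8 * Real.sin (Real.pi / 15) ^ 2 + (5 : ℝ) * Real.cos (Real.pi / 15) ^ 8 * Real.sin (Real.pi / 15) ^ 4 + (35 : ℝ) * Real.cos (Real.pi / 15) ^ 8 * Real.sin (Real.pi / 15) ^ 6 + (-2 : ℝ) * Real.cos (Real.pi / 15) ^ 10 * Real.sin (Real.pi / 15) ^ 2 + (21 : ℝ) * Real.cos (Real.pi / 15) ^ 10 * Real.sin (Real.pi / 15) ^ 4 + (-1 : ℝ) * Real.cos (Real.pi / 15) ^ 12 + (7 : ℝ) * Real.cos (Real.pi / 15) ^ 12 * Real.sin (Real.pi / 15) ^ 2 + (1 : ℝ) * Real.cos (Real.pi / 15) ^ 14) * hs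
  have hb' : b = 2 * Real.sin (Real.pi / 15) := by
    have h0 : (b - 2 * Real.sin (Real.pi / 15)) * (b + 2 * Real.sin (Real.pi / 15)) = 0 := by linear_combination hb2
    have hd : 0 ≤ b := hb ▸ dist_nonneg
    rcases mul_eq_zero.mp h0 with h | h <;> linarith
  have hc2 : c ^ 2 = (2 * Real.sin (3 * (Real.pi / 15))) ^ 2 := by
    rw [hc, Complex.dist_eq, Complex.sq_norm, hA', hB]
    rw [show ((Real.cos (6 * (Real.pi / 15)) : ℂ) - (Real.sin (6 * (Real.pi / 15)) : ℂ) * Complex.I) - 1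
        = ((Real.cos (6 * (Real.pi / 15)) - 1 : ℝ) : ℂ) + ((-Real.sin (6 * (Real.pi / 15)) : ℝ) : ℂ) * Complex.I by push_cast; ring,
      Complex.normSq_add_mul_I, hck6, hsk6, hsk3]
    linear_combination ((-1 : ℝ) + (-1 : ℝ) * Real.sin (Real.pi / 15) ^ 2 + (-1 : ℝ) * Real.sin (Real.pi / 15) ^ 4 + (1 : ℝ) * Real.sin (Real.pi / 15) ^ 6 + (1 : ℝ) * Real.sin (Real.pi / 15) ^ 8 + (1 : ℝ) * Real.sin (Real.pi / 15) ^ 10 + (-1 : ℝ) * Real.cos (Real.pi / 15) ^ 2 + (-2 : ℝ) * Real.cos (Real.pi / 15) ^ 2 * Real.sin (Real.pi / 15) ^ 2 + (3 : ℝ) * Real.cos (Real.pi / 15) ^ 2 * Real.sin (Real.pi / 15) ^ 4 + (4 : ℝ) * Real.cos (Real.pi / 15) ^ 2 * Real.sin (Real.pi / 15) ^ 6 + (5 : ℝ) * Real.cos (Real.pi / 15) ^ 2 * Real.sin (Real.pi / 15) ^ 8 + (-1 : ℝ) * Real.cos (Real.pi / 15) ^ 4 + (3 : ℝ) * Real.cos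 (Real.pi / 15) ^ 4 * Real.sin (Real.pi / 15) ^ 2 + (6 : ℝ) * Real.cos (Real.pi / 15) ^ 4 * Real.sin (Real.pi / 15) ^ 4 + (10 : ℝ) * Real.cos (Real.pi / 15) ^ 4 * Real.sin (Real.pi / 15) ^ 6 + (1 : ℝ) * Real.cos (Real.pi / 15) ^ 6 + (4 : ℝ) * Real.cos (Real.pi / 15) ^ 6 * Real.sin (Real.pi / 15) ^ 2 + (10 : ℝ) * Real.cos (Real.pi / 15) ^ 6 * Real.sin (Real.pi / 15) ^ 4 + (1 : ℝ) * Real.cos (Real.pi / 15) ^ 8 + (5 : ℝ) * Real.cos (Real.pi / 15) ^ 8 * Real.sin (Real.pi / 15) ^ 2 + (1 : ℝ) * Real.cos (Real.pi / 15) ^ 10) * hs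
  have hc' : c = 2 * Real.sin (3 * (Real.pi / 15)) := by
    have h0 : (c - 2 * Real.sin (3 * (Real.pi / 15))) * (c + 2 * Real.sin (3 * (Real.pi / 15))) = 0 := by linear_combination hc2
    have hd : 0 ≤ c := hc ▸ dist_nonneg
    rcases mul_eq_zero.mp h0 with h | h <;> linarith
  have hlt1 : Real.sin (Real.pi / 15) < Real.sin (3 * (Real.pi / 15)) :=
    Real.sin_lt_sin_of_lt_of_le_pi_div_two (by linarith) (by linarith) (by linarith)
  have hlt2 : Real.sin (3 * (Real.pi / 15)) < Real.sin (4 * (Real.pi / 15)) :=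
    Real.sin_lt_sin_of_lt_of_le_pi_div_two (by linarith) (by linarith) (by linarith)
  have hbc : b < c := by rw [hb', hc']; linarith
  have hca : c < a := by rw [hc', ha']; linarith
  have hden1 : ((c : ℂ) - (b : ℂ)) = ((c - b : ℝ) : ℂ) := by push_cast; ring
  have hden2 : ((c : ℂ) - (a : ℂ)) = ((c - a : ℝ) : ℂ) := by push_cast; ring
  have hne1 : ((c : ℂ) - (b : ℂ)) ≠ 0 := by rw [hden1]; exact Complex.ofReal_ne_zero.mpr (sub_ne_zero.mpr (ne_of_gt hbc))
  have hne2 : ((c : ℂ) - (a : ℂ)) ≠ 0 := by rw [hden2]; exact Complex.ofReal_ne_zero.mpr (sub_ne_zero.mpr (ne_of_lt hca))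
  have hd1 : A - A₂ = ((c : ℂ) * (A - C) - (b : ℂ) * (A - B)) / ((c : ℂ) - (b : ℂ)) := by
    rw [hA₂]; field_simp; ring
  have hd2 : B - B₂ = ((c : ℂ) * (B - C) - (a : ℂ) * (B - A)) / ((c : ℂ) - (a : ℂ)) := by
    rw [hB₂]; field_simp; ring
  have hn1 : (c : ℂ) * (A - C) - (b : ℂ) * (A - B)
      = ((c * (Real.cos (6 * (Real.pi / 15)) - Real.cos (8 * (Real.pi / 15))) - b * (Real.cos (6 * (Real.pi / 15)) - 1) : ℝ) : ℂ)
      + ((c * (Real.sin (8 * (Real.pi / 15)) - Real.sin (6 * (Real.pi / 15))) + b * Real.sin (6 * (Real.pi / 15)) : ℝ) : ℂ) * Complex.I := by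
    rw [hA', hC', hB]; push_cast; ring
  have hn2 : (c : ℂ) * (B - C) - (a : ℂ) * (B - A)
      = ((c * (1 - Real.cos (8 * (Real.pi / 15))) - a * (1 - Real.cos (6 * (Real.pi / 15))) : ℝ) : ℂ)
      + ((c * Real.sin (8 * (Real.pi / 15)) - a * Real.sin (6 * (Real.pi / 15)) : ℝ) : ℂ) * Complex.I := by
    rw [hA', hC', hB]; push_cast; ring
  rw [Complex.dist_eq, Complex.dist_eq, hd1, hd2, norm_div, norm_div, hden1, hden2,
    Complex.norm_real, Complex.norm_real, Real.norm_eq_abs, Real.norm_eq_abs, abs_of_pos (by linarith : (0:ℝ) < c - b),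
    abs_of_neg (by linarith : c - a < (0:ℝ))]
  rw [div_eq_div_iff (by linarith : (0:ℝ) < c - b).ne' (by linarith : (0:ℝ) < -(c - a)).ne']
  set u := ‖(c : ℂ) * (A - C) - (b : ℂ) * (A - B)‖ with hu
  set v := ‖(c : ℂ) * (B - C) - (a : ℂ) * (B - A)‖ with hv
  have husq : u ^ 2 = (c * (Real.cos (6 * (Real.pi / 15)) - Real.cos (8 * (Real.pi / 15))) - b * (Real.cos (6 * (Real.pi / 15)) - 1)) ^ 2
      + (c * (Real.sin (8 * (Real.pi / 15)) - Real.sin (6 * (Real.pi / 15))) + b * Real.sin (6 * (Real.pi / 15))) ^ 2 := by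
    rw [hu, hn1, Complex.sq_norm, Complex.normSq_add_mul_I]
  have hvsq : v ^ 2 = (c * (1 - Real.cos (8 * (Real.pi / 15))) - a * (1 - Real.cos (6 * (Real.pi / 15)))) ^ 2
      + (c * Real.sin (8 * (Real.pi / 15)) - a * Real.sin (6 * (Real.pi / 15))) ^ 2 := by
    rw [hv, hn2, Complex.sq_norm, Complex.normSq_add_mul_I]
  have hkey : (u * (a - c)) ^ 2 = (v * (c - b)) ^ 2 := by
    rw [mul_pow, mul_pow, husq, hvsq, ha', hb', hc', hck6, hsk6, hck8, hsk8, hsk3, hsk4]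
    linear_combination ((256 : ℝ) + (256 : ℝ) * Real.sin (Real.pi / 15) ^ 2 + (256 : ℝ) * Real.sin (Real.pi / 15) ^ 4 + (256 : ℝ) * Real.sin (Real.pi / 15) ^ 6 + (256 : ℝ) * Real.sin (Real.pi / 15) ^ 8 + (288 : ℝ) * Real.sin (Real.pi / 15) ^ 10 + (304 : ℝ) * Real.sin (Real.pi / 15) ^ 12 + (272 : ℝ) * Real.sin (Real.pi / 15) ^ 14 + (208 : ℝ) * Real.sin (Real.pi / 15) ^ 16 + (112 : ℝ) * Real.sin (Real.pi / 15) ^ 18 + (64 : ℝ) * Real.sin (Real.pi / 15) ^ 20 + (32 : ℝ) * Real.sin (Real.pi / 15) ^ 22 + (-2048 : ℝ) * Real.cos (Real.pi / 15) + (-2048 : ℝ) * Real.cos (Real.pi / 15) * Real.sin (Real.pi / 15) ^ 2 + (-2048 : ℝ) * Real.cos (Real.pi / 15) * Real.sin (Real.pi / 15) ^ 4 + (-2048 : ℝ) * Real.cos (Real.pi / 15) * Real.sin (Real.pi / 15) ^ 6 + (-2048 : ℝ) * Real.cos (Real.pi / 15) * Real.sin (Real.pi / 15) ^ 8 + (-2304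 : ℝ) * Real.cos (Real.pi / 15) * Real.sin (Real.pi / 15) ^ 10 + (-2432 : ℝ) * Real.cos (Real.pi / 15) * Real.sin (Real.pi / 15) ^ 12 + (-2304 : ℝ) * Real.cos (Real.pi / 15) * Real.sin (Real.pi / 15) ^ 14 + (-2176 : ℝ) * Real.cos (Real.pi / 15) * Real.sin (Real.pi / 15) ^ 16 + (-1792 : ℝ) * Real.cos (Real.pi / 15) * Real.sin (Real.pi / 15) ^ 18 + (-1536 : ℝ) * Real.cos (Real.pi / 15) * Real.sin (Real.pi / 15) ^ 20 + (-1152 : ℝ) * Real.cos (Real.pi / 15) * Real.sin (Real.pi / 15) ^ 22 + (-512 : ℝ) * Real.cos (Real.pi / 15) * Real.sin (Real.pi / 15) ^ 24 + (-128 : ℝ) * Real.cos (Real.pi / 15) * Real.sin (Real.pi / 15) ^ 26 + (-9728 : ℝ) * Real.cos (Real.pi / 15) ^ 2 + (-9472 : ℝ) * Real.cos (Real.pi / 15) ^ 2 * Real.sin (Real.pi / 15) ^ 2 + (-9216 : ℝ) * Real.cos (Real.pi / 15) ^ 2 * Real.sin (Real.pi / 15) ^ 4 + (-8960 : ℝ)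 * Real.cos (Real.pi / 15) ^ 2 * Real.sin (Real.pi / 15) ^ 6 + (-8992 : ℝ) * Real.cos (Real.pi / 15) ^ 2 * Real.sin (Real.pi / 15) ^ 8 + (-8384 : ℝ) * Real.cos (Real.pi / 15) ^ 2 * Real.sin (Real.pi / 15) ^ 10 + (-7152 : ℝ) * Real.cos (Real.pi / 15) ^ 2 * Real.sin (Real.pi / 15) ^ 12 + (-5024 : ℝ) * Real.cos (Real.pi / 15) ^ 2 * Real.sin (Real.pi / 15) ^ 14 + (-752 : ℝ) * Real.cos (Real.pi / 15) ^ 2 * Real.sin (Real.pi / 15) ^ 16 + (640 : ℝ) * Real.cos (Real.pi / 15) ^ 2 * Real.sin (Real.pi / 15) ^ 18 + (800 : ℝ) * Real.cos (Real.pi / 15) ^ 2 * Real.sin (Real.pi / 15) ^ 20 + (1088 : ℝ) * Real.cos (Real.pi / 15) ^ 2 * Real.sin (Real.pi / 15) ^ 22 + (768 : ℝ) * Real.cos (Real.pi / 15) ^ 2 * Real.sin (Real.pi / 15) ^ 24 + (256 : ℝ) * Real.cos (Real.pi / 15) ^ 2 * Real.sin (Real.pi / 15) ^ 26 + (49152 :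 ℝ) * Real.cos (Real.pi / 15) ^ 3 + (47104 : ℝ) * Real.cos (Real.pi / 15) ^ 3 * Real.sin (Real.pi / 15) ^ 2 + (45056 : ℝ) * Real.cos (Real.pi / 15) ^ 3 * Real.sin (Real.pi / 15) ^ 4 + (43008 : ℝ) * Real.cos (Real.pi / 15) ^ 3 * Real.sin (Real.pi / 15) ^ 6 + (42752 : ℝ) * Real.cos (Real.pi / 15) ^ 3 * Real.sin (Real.pi / 15) ^ 8 + (41728 : ℝ) * Real.cos (Real.pi / 15) ^ 3 * Real.sin (Real.pi / 15) ^ 10 + (36864 : ℝ) * Real.cos (Real.pi / 15) ^ 3 * Real.sin (Real.pi / 15) ^ 12 + (30464 : ℝ) * Real.cos (Real.pi / 15) ^ 3 * Real.sin (Real.pi / 15) ^ 14 + (13568 : ℝ) * Real.cos (Real.pi / 15) ^ 3 * Real.sin (Real.pi / 15) ^ 16 + (7168 : ℝ) * Real.cos (Real.pi / 15) ^ 3 * Real.sin (Real.pi / 15) ^ 18 + (5504 : ℝ) * Real.cos (Real.pi / 15) ^ 3 * Real.sin (Real.pi / 15) ^ 20 + (2816 : ℝ) * Real.cos (Real.pi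 / 15) ^ 3 * Real.sin (Real.pi / 15) ^ 22 + (384 : ℝ) * Real.cos (Real.pi / 15) ^ 3 * Real.sin (Real.pi / 15) ^ 24 + (126208 : ℝ) * Real.cos (Real.pi / 15) ^ 4 + (116736 : ℝ) * Real.cos (Real.pi / 15) ^ 4 * Real.sin (Real.pi / 15) ^ 2 + (107520 : ℝ) * Real.cos (Real.pi / 15) ^ 4 * Real.sin (Real.pi / 15) ^ 4 + (99424 : ℝ) * Real.cos (Real.pi / 15) ^ 4 * Real.sin (Real.pi / 15) ^ 6 + (88736 : ℝ) * Real.cos (Real.pi / 15) ^ 4 * Real.sin (Real.pi / 15) ^ 8 + (74656 : ℝ) * Real.cos (Real.pi / 15) ^ 4 * Real.sin (Real.pi / 15) ^ 10 + (53936 : ℝ) * Real.cos (Real.pi / 15) ^ 4 * Real.sin (Real.pi / 15) ^ 12 + (5168 : ℝ) * Real.cos (Real.pi / 15) ^ 4 * Real.sin (Real.pi / 15) ^ 14 + (-4992 : ℝ) * Real.cos (Real.pi / 15) ^ 4 * Real.sin (Real.pi / 15) ^ 16 + (-3968 : ℝ) * Real.cos (Real.pi / 15) ^ 4 * Real.sin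 (Real.pi / 15) ^ 18 + (-3008 : ℝ) * Real.cos (Real.pi / 15) ^ 4 * Real.sin (Real.pi / 15) ^ 20 + (-2560 : ℝ) * Real.cos (Real.pi / 15) ^ 4 * Real.sin (Real.pi / 15) ^ 22 + (-256 : ℝ) * Real.cos (Real.pi / 15) ^ 4 * Real.sin (Real.pi / 15) ^ 24 + (-493568 : ℝ) * Real.cos (Real.pi / 15) ^ 5 + (-446464 : ℝ) * Real.cos (Real.pi / 15) ^ 5 * Real.sin (Real.pi / 15) ^ 2 + (-401408 : ℝ) * Real.cos (Real.pi / 15) ^ 5 * Real.sin (Real.pi / 15) ^ 4 + (-362240 : ℝ) * Real.cos (Real.pi / 15) ^ 5 * Real.sin (Real.pi / 15) ^ 6 + (-324096 : ℝ) * Real.cos (Real.pi / 15) ^ 5 * Real.sin (Real.pi / 15) ^ 8 + (-272384 : ℝ) * Real.cos (Real.pi / 15) ^ 5 * Real.sin (Real.pi / 15) ^ 10 + (-211840 : ℝ) * Real.cos (Real.pi / 15) ^ 5 * Real.sin (Real.pi / 15) ^ 12 + (-63232 : ℝ) * Real.cos (Real.pi / 15) ^ 5 * Real.sin (Real.pi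 / 15) ^ 14 + (-1024 : ℝ) * Real.cos (Real.pi / 15) ^ 5 * Real.sin (Real.pi / 15) ^ 16 + (2048 : ℝ) * Real.cos (Real.pi / 15) ^ 5 * Real.sin (Real.pi / 15) ^ 18 + (768 : ℝ) * Real.cos (Real.pi / 15) ^ 5 * Real.sin (Real.pi / 15) ^ 20 + (1664 : ℝ) * Real.cos (Real.pi / 15) ^ 5 * Real.sin (Real.pi / 15) ^ 22 + (-830464 : ℝ) * Real.cos (Real.pi / 15) ^ 6 + (-713728 : ℝ) * Real.cos (Real.pi / 15) ^ 6 * Real.sin (Real.pi / 15) ^ 2 + (-607072 : ℝ) * Real.cos (Real.pi / 15) ^ 6 * Real.sin (Real.pi / 15) ^ 4 + (-505792 : ℝ) * Real.cos (Real.pi / 15) ^ 6 * Real.sin (Real.pi / 15) ^ 6 + (-404192 : ℝ) * Real.cos (Real.pi / 15) ^ 6 * Real.sin (Real.pi / 15) ^ 8 + (-288960 : ℝ) * Real.cos (Real.pi / 15) ^ 6 * Real.sin (Real.pi / 15) ^ 10 + (-47024 : ℝ) * Real.cos (Real.pi / 15) ^ 6 * Real.sin (Real.pi / 15) ^ 12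 + (7296 : ℝ) * Real.cos (Real.pi / 15) ^ 6 * Real.sin (Real.pi / 15) ^ 14 + (1664 : ℝ) * Real.cos (Real.pi / 15) ^ 6 * Real.sin (Real.pi / 15) ^ 16 + (-4864 : ℝ) * Real.cos (Real.pi / 15) ^ 6 * Real.sin (Real.pi / 15) ^ 18 + (-5376 : ℝ) * Real.cos (Real.pi / 15) ^ 6 * Real.sin (Real.pi / 15) ^ 20 + (-3328 : ℝ) * Real.cos (Real.pi / 15) ^ 6 * Real.sin (Real.pi / 15) ^ 22 + (2732032 : ℝ) * Real.cos (Real.pi / 15) ^ 7 + (2285568 : ℝ) * Real.cos (Real.pi / 15) ^ 7 * Real.sin (Real.pi / 15) ^ 2 + (1886464 : ℝ) * Real.cos (Real.pi / 15) ^ 7 * Real.sin (Real.pi / 15) ^ 4 + (1531136 : ℝ) * Real.cos (Real.pi / 15) ^ 7 * Real.sin (Real.pi / 15) ^ 6 + (1193472 : ℝ) * Real.cos (Real.pi / 15) ^ 7 * Real.sin (Real.pi / 15) ^ 8 + (870912 : ℝ) * Real.cos (Real.pi / 15) ^ 7 * Real.sin (Real.pi / 15) ^ 10 + (269568 : ℝ)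 * Real.cos (Real.pi / 15) ^ 7 * Real.sin (Real.pi / 15) ^ 12 + (-25600 : ℝ) * Real.cos (Real.pi / 15) ^ 7 * Real.sin (Real.pi / 15) ^ 14 + (-29696 : ℝ) * Real.cos (Real.pi / 15) ^ 7 * Real.sin (Real.pi / 15) ^ 16 + (-19456 : ℝ) * Real.cos (Real.pi / 15) ^ 7 * Real.sin (Real.pi / 15) ^ 18 + (-2944 : ℝ) * Real.cos (Real.pi / 15) ^ 7 * Real.sin (Real.pi / 15) ^ 20 + (3187712 : ℝ) * Real.cos (Real.pi / 15) ^ 8 + (2473984 : ℝ) * Real.cos (Real.pi / 15) ^ 8 * Real.sin (Real.pi / 15) ^ 2 + (1866672 : ℝ) * Real.cos (Real.pi / 15) ^ 8 * Real.sin (Real.pi / 15) ^ 4 + (1350224 : ℝ) * Real.cos (Real.pi / 15) ^ 8 * Real.sin (Real.pi / 15) ^ 6 + (894256 : ℝ) * Real.cos (Real.pi / 15) ^ 8 * Real.sin (Real.pi / 15) ^ 8 + (232784 : ℝ) * Real.cos (Real.pi / 15) ^ 8 * Real.sin (Real.pi / 15) ^ 10 + (6400 : ℝ) * Real.cos (Real.pi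 / 15) ^ 8 * Real.sin (Real.pi / 15) ^ 12 + (11200 : ℝ) * Real.cos (Real.pi / 15) ^ 8 * Real.sin (Real.pi / 15) ^ 14 + (10496 : ℝ) * Real.cos (Real.pi / 15) ^ 8 * Real.sin (Real.pi / 15) ^ 16 + (14336 : ℝ) * Real.cos (Real.pi / 15) ^ 8 * Real.sin (Real.pi / 15) ^ 18 + (-768 : ℝ) * Real.cos (Real.pi / 15) ^ 8 * Real.sin (Real.pi / 15) ^ 20 + (-9216000 : ℝ) * Real.cos (Real.pi / 15) ^ 9 + (-6930432 : ℝ) * Real.cos (Real.pi / 15) ^ 9 * Real.sin (Real.pi / 15) ^ 2 + (-5047424 : ℝ) * Real.cos (Real.pi / 15) ^ 9 * Real.sin (Real.pi / 15) ^ 4 + (-3510016 : ℝ) * Real.cos (Real.pi / 15) ^ 9 * Real.sin (Real.pi / 15) ^ 6 + (-2275200 : ℝ) * Real.cos (Real.pi / 15) ^ 9 * Real.sin (Real.pi / 15) ^ 8 + (-814336 : ℝ) * Real.cos (Real.pi / 15) ^ 9 * Real.sin (Real.pi / 15) ^ 10 + (8192 : ℝ) * Real.cos (Real.pi / 15) ^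 9 * Real.sin (Real.pi / 15) ^ 12 + (-5376 : ℝ) * Real.cos (Real.pi / 15) ^ 9 * Real.sin (Real.pi / 15) ^ 14 + (-2048 : ℝ) * Real.cos (Real.pi / 15) ^ 9 * Real.sin (Real.pi / 15) ^ 16 + (-11520 : ℝ) * Real.cos (Real.pi / 15) ^ 9 * Real.sin (Real.pi / 15) ^ 18 + (-7553024 : ℝ) * Real.cos (Real.pi / 15) ^ 10 + (-5079040 : ℝ) * Real.cos (Real.pi / 15) ^ 10 * Real.sin (Real.pi / 15) ^ 2 + (-3209776 : ℝ) * Real.cos (Real.pi / 15) ^ 10 * Real.sin (Real.pi / 15) ^ 4 + (-1837472 : ℝ) * Real.cos (Real.pi / 15) ^ 10 * Real.sin (Real.pi / 15) ^ 6 + (-608976 : ℝ) * Real.cos (Real.pi / 15) ^ 10 * Real.sin (Real.pi / 15) ^ 8 + (-18560 : ℝ) * Real.cos (Real.pi / 15) ^ 10 * Real.sin (Real.pi / 15) ^ 10 + (-12352 : ℝ) * Real.cos (Real.pi / 15) ^ 10 * Real.sin (Real.pi / 15) ^ 12 + (7040 : ℝ) * Real.cos (Real.pi / 15) ^ 10 *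 Real.sin (Real.pi / 15) ^ 14 + (22016 : ℝ) * Real.cos (Real.pi / 15) ^ 10 * Real.sin (Real.pi / 15) ^ 16 + (14848 : ℝ) * Real.cos (Real.pi / 15) ^ 10 * Real.sin (Real.pi / 15) ^ 18 + (19709952 : ℝ) * Real.cos (Real.pi / 15) ^ 11 + (12779520 : ℝ) * Real.cos (Real.pi / 15) ^ 11 * Real.sin (Real.pi / 15) ^ 2 + (7731712 : ℝ) * Real.cos (Real.pi / 15) ^ 11 * Real.sin (Real.pi / 15) ^ 4 + (4210432 : ℝ) * Real.cos (Real.pi / 15) ^ 11 * Real.sin (Real.pi / 15) ^ 6 + (1554176 : ℝ) * Real.cos (Real.pi / 15) ^ 11 * Real.sin (Real.pi / 15) ^ 8 + (29696 : ℝ) * Real.cos (Real.pi / 15) ^ 11 * Real.sin (Real.pi / 15) ^ 10 + (58112 : ℝ) * Real.cos (Real.pi / 15) ^ 11 * Real.sin (Real.pi / 15) ^ 12 + (53760 : ℝ) * Real.cos (Real.pi / 15) ^ 11 * Real.sin (Real.pi / 15) ^ 14 + (1792 : ℝ) * Real.cos (Real.pi / 15) ^ 11 * Real.sin (Real.pi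 / 15) ^ 16 + (11173888 : ℝ) * Real.cos (Real.pi / 15) ^ 12 + (6094848 : ℝ) * Real.cos (Real.pi / 15) ^ 12 * Real.sin (Real.pi / 15) ^ 2 + (2883920 : ℝ) * Real.cos (Real.pi / 15) ^ 12 * Real.sin (Real.pi / 15) ^ 4 + (944656 : ℝ) * Real.cos (Real.pi / 15) ^ 12 * Real.sin (Real.pi / 15) ^ 6 + (-128 : ℝ) * Real.cos (Real.pi / 15) ^ 12 * Real.sin (Real.pi / 15) ^ 8 + (-12672 : ℝ) * Real.cos (Real.pi / 15) ^ 12 * Real.sin (Real.pi / 15) ^ 10 + (-10368 : ℝ) * Real.cos (Real.pi / 15) ^ 12 * Real.sin (Real.pi / 15) ^ 12 + (-19456 : ℝ) * Real.cos (Real.pi / 15) ^ 12 * Real.sin (Real.pi / 15) ^ 14 + (17920 : ℝ) * Real.cos (Real.pi / 15) ^ 12 * Real.sin (Real.pi / 15) ^ 16 + (-26804224 : ℝ) * Real.cos (Real.pi / 15) ^ 13 + (-14024704 : ℝ) * Real.cos (Real.pi / 15) ^ 13 * Real.sin (Real.pi / 15) ^ 2 + (-6292608 : ℝ) * Real.cos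 (Real.pi / 15) ^ 13 * Real.sin (Real.pi / 15) ^ 4 + (-2004224 : ℝ) * Real.cos (Real.pi / 15) ^ 13 * Real.sin (Real.pi / 15) ^ 6 + (-7168 : ℝ) * Real.cos (Real.pi / 15) ^ 13 * Real.sin (Real.pi / 15) ^ 8 + (25600 : ℝ) * Real.cos (Real.pi / 15) ^ 13 * Real.sin (Real.pi / 15) ^ 10 + (27136 : ℝ) * Real.cos (Real.pi / 15) ^ 13 * Real.sin (Real.pi / 15) ^ 12 + (34048 : ℝ) * Real.cos (Real.pi / 15) ^ 13 * Real.sin (Real.pi / 15) ^ 14 + (-10027008 : ℝ) * Real.cos (Real.pi / 15) ^ 14 + (-3932160 : ℝ) * Real.cos (Real.pi / 15) ^ 14 * Real.sin (Real.pi / 15) ^ 2 + (-1044112 : ℝ) * Real.cos (Real.pi / 15) ^ 14 * Real.sin (Real.pi / 15) ^ 4 + (10624 : ℝ) * Real.cos (Real.pi / 15) ^ 14 * Real.sin (Real.pi / 15) ^ 6 + (18560 : ℝ) * Real.cos (Real.pi / 15) ^ 14 * Real.sin (Real.pi / 15) ^ 8 + (8448 : ℝ) * Real.cos (Real.pi /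 15) ^ 14 * Real.sin (Real.pi / 15) ^ 10 + (-33280 : ℝ) * Real.cos (Real.pi / 15) ^ 14 * Real.sin (Real.pi / 15) ^ 12 + (-10752 : ℝ) * Real.cos (Real.pi / 15) ^ 14 * Real.sin (Real.pi / 15) ^ 14 + (22413312 : ℝ) * Real.cos (Real.pi / 15) ^ 15 + (8388608 : ℝ) * Real.cos (Real.pi / 15) ^ 15 * Real.sin (Real.pi / 15) ^ 2 + (2094848 : ℝ) * Real.cos (Real.pi / 15) ^ 15 * Real.sin (Real.pi / 15) ^ 4 + (-11264 : ℝ) * Real.cos (Real.pi / 15) ^ 15 * Real.sin (Real.pi / 15) ^ 6 + (-32768 : ℝ) * Real.cos (Real.pi / 15) ^ 15 * Real.sin (Real.pi / 15) ^ 8 + (-44032 : ℝ) * Real.cos (Real.pi / 15) ^ 15 * Real.sin (Real.pi / 15) ^ 10 + (33024 : ℝ) * Real.cos (Real.pi / 15) ^ 15 * Real.sin (Real.pi / 15) ^ 12 + (4980736 : ℝ) * Real.cos (Real.pi / 15) ^ 16 + (1048576 : ℝ) * Real.cos (Real.pi / 15) ^ 16 * Real.sin (Real.pi / 15) ^ 2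 + (-1344 : ℝ) * Real.cos (Real.pi / 15) ^ 16 * Real.sin (Real.pi / 15) ^ 4 + (13600 : ℝ) * Real.cos (Real.pi / 15) ^ 16 * Real.sin (Real.pi / 15) ^ 6 + (21760 : ℝ) * Real.cos (Real.pi / 15) ^ 16 * Real.sin (Real.pi / 15) ^ 8 + (6144 : ℝ) * Real.cos (Real.pi / 15) ^ 16 * Real.sin (Real.pi / 15) ^ 10 + (-30208 : ℝ) * Real.cos (Real.pi / 15) ^ 16 * Real.sin (Real.pi / 15) ^ 12 + (-10485760 : ℝ) * Real.cos (Real.pi / 15) ^ 17 + (-2097152 : ℝ) * Real.cos (Real.pi / 15) ^ 17 * Real.sin (Real.pi / 15) ^ 2 + (1536 : ℝ) * Real.cos (Real.pi / 15) ^ 17 * Real.sin (Real.pi / 15) ^ 4 + (-21120 : ℝ) * Real.cos (Real.pi / 15) ^ 17 * Real.sin (Real.pi / 15) ^ 6 + (-32256 : ℝ) * Real.cos (Real.pi / 15) ^ 17 * Real.sin (Real.pi / 15) ^ 8 + (-6784 : ℝ) * Real.cos (Real.pi / 15) ^ 17 * Real.sin (Real.pi / 15) ^ 10 + (-1048576 :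 ℝ) * Real.cos (Real.pi / 15) ^ 18 + (-480 : ℝ) * Real.cos (Real.pi / 15) ^ 18 * Real.sin (Real.pi / 15) ^ 4 + (4672 : ℝ) * Real.cos (Real.pi / 15) ^ 18 * Real.sin (Real.pi / 15) ^ 6 + (18176 : ℝ) * Real.cos (Real.pi / 15) ^ 18 * Real.sin (Real.pi / 15) ^ 8 + (-11008 : ℝ) * Real.cos (Real.pi / 15) ^ 18 * Real.sin (Real.pi / 15) ^ 10 + (2097152 : ℝ) * Real.cos (Real.pi / 15) ^ 19 + (-1152 : ℝ) * Real.cos (Real.pi / 15) ^ 19 * Real.sin (Real.pi / 15) ^ 4 + (6912 : ℝ) * Real.cos (Real.pi / 15) ^ 19 * Real.sin (Real.pi / 15) ^ 6 + (-28800 : ℝ) * Real.cos (Real.pi / 15) ^ 19 * Real.sin (Real.pi / 15) ^ 8 + (-2496 : ℝ) * Real.cos (Real.pi / 15) ^ 20 * Real.sin (Real.pi / 15) ^ 4 + (1536 : ℝ) * Real.cos (Real.pi / 15) ^ 20 * Real.sin (Real.pi / 15) ^ 6 + (11008 : ℝ) * Real.cos (Real.pi / 15) ^ 20 * Real.sin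 (Real.pi / 15) ^ 8 + (6912 : ℝ) * Real.cos (Real.pi / 15) ^ 21 * Real.sin (Real.pi / 15) ^ 4 + (-17280 : ℝ) * Real.cos (Real.pi / 15) ^ 21 * Real.sin (Real.pi / 15) ^ 6 + (-2304 : ℝ) * Real.cos (Real.pi / 15) ^ 22 * Real.sin (Real.pi / 15) ^ 4 + (9984 : ℝ) * Real.cos (Real.pi / 15) ^ 22 * Real.sin (Real.pi / 15) ^ 6 + (-3456 : ℝ) * Real.cos (Real.pi / 15) ^ 23 * Real.sin (Real.pi / 15) ^ 4 + (2304 : ℝ) * Real.cos (Real.pi / 15) ^ 24 * Real.sin (Real.pi / 15) ^ 4) * hs + ((-512 : ℝ) + (-1024 : ℝ) * Real.cos (Real.pi / 15) + (9728 : ℝ) * Real.cos (Real.pi / 15) ^ 2 + (15360 : ℝ) * Real.cos (Real.pi / 15) ^ 3 + (-77312 : ℝ) * Real.cos (Real.pi / 15) ^ 4 + (-93184 : ℝ) * Real.cos (Real.pi / 15) ^ 5 + (334336 : ℝ) * Real.cos (Real.pi / 15) ^ 6 + (295936 : ℝ) * Real.cos (Real.pi / 15) ^ 7 + (-858112 :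 ℝ) * Real.cos (Real.pi / 15) ^ 8 + (-532480 : ℝ) * Real.cos (Real.pi / 15) ^ 9 + (1337344 : ℝ) * Real.cos (Real.pi / 15) ^ 10 + (544768 : ℝ) * Real.cos (Real.pi / 15) ^ 11 + (-1236992 : ℝ) * Real.cos (Real.pi / 15) ^ 12 + (-294912 : ℝ) * Real.cos (Real.pi / 15) ^ 13 + (622592 : ℝ) * Real.cos (Real.pi / 15) ^ 14 + (65536 : ℝ) * Real.cos (Real.pi / 15) ^ 15 + (-131072 : ℝ) * Real.cos (Real.pi / 15) ^ 16) * hq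
  have hu0 : 0 ≤ u := norm_nonneg _
  have hv0 : 0 ≤ v := norm_nonneg _
  have h0 : (u * (a - c) - v * (c - b)) * (u * (a - c) + v * (c - b)) = 0 := by linear_combination hkey
  have hun : 0 ≤ u * (a - c) := mul_nonneg hu0 (by linarith)
  have hvn : 0 ≤ v * (c - b) := mul_nonneg hv0 (by linarith)
  have hfin : u * (a - c) = v * (c - b) := by rcases mul_eq_zero.mp h0 with h | h <;> linarith
  linear_combination hfin
end

section
/- Let ζ = exp(2πi/15) and consider the second pentadecagonal triangle with vertices A = ζ⁹, B = 1, C = ζ² in ℂ (its angles are ∠A = 2π/15, ∠B = 7π/15, ∠C = 2π/5). With side lengths a = dist(B,C), b = dist(C,A), c = dist(A,B), define the internal bisector foot A₁ = (b·B + c·C)/(b+c) and the external bisector feet B₂ = (c·C − a·A)/(c−a), C₂ = (b·B − a·A)/(b−a). Then dist(C₂, A₁) = dist(C₂, B₂); that is, the bisectral triangle A₁B₂C₂ of the second pentadecagonal triangle is isosceles. -/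
open Complex

private lemma abs_one_sub_exp (θ : ℝ) (h0 : 0 ≤ θ) (h1 : θ ≤ Real.pi) :
    ‖(1 - Complex.exp ((2 * θ : ℝ) * Complex.I))‖ = 2 * Real.sin θ := by
  have e : (1 : ℂ) - Complex.exp ((2 * θ : ℝ) * Complex.I)
      = ((1 - Real.cos (2*θ) : ℝ) : ℂ) + ((-(Real.sin (2*θ)) : ℝ) : ℂ) * Complex.I := by
    rw [Complex.exp_mul_I, ← Complex.ofReal_cos, ← Complex.ofReal_sin]
    push_cast
    ring
  rw [e, Complex.norm_add_mul_I]
  have hs : 0 ≤ Real.sin θ := Real.sin_nonneg_of_nonneg_of_le_pi h0 h1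
  have key : (1 - Real.cos (2*θ))^2 + (-(Real.sin (2*θ)))^2 = (2*Real.sin θ)^2 := by
    nlinarith [Real.sin_sq_add_cos_sq θ, Real.sin_sq_add_cos_sq (2*θ), Real.cos_two_mul θ]
  rw [key, Real.sqrt_sq (by linarith)]

private lemma two_sin_eq (θ : ℝ) (u v : ℂ) (hu : u = Complex.exp ((θ:ℂ)*Complex.I))
    (hv : v = Complex.exp ((-θ:ℂ)*Complex.I)) :
    ((2*Real.sin θ : ℝ) : ℂ) = (v - u) * Complex.I := by
  rw [hu, hv, Complex.exp_mul_I, Complex.exp_mul_I, Complex.cos_neg, Complex.sin_neg]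
  push_cast [Complex.ofReal_sin]
  linear_combination (2*Complex.sin (θ:ℂ)) * Complex.I_sq

theorem stmt_17 (ζ A B C : ℂ) (hζ : ζ = Complex.exp (2 * Real.pi * Complex.I / 15))
    (hA : A = ζ ^ 9) (hB : B = 1) (hC : C = ζ ^ 2)
    (a b c : ℝ) (ha : a = dist B C) (hb : b = dist C A) (hc : c = dist A B)
    (A₁ B₂ C₂ : ℂ)
    (hA₁ : A₁ = ((b : ℂ) * B + (c : ℂ) * C) / ((b : ℂ) + (c : ℂ)))
    (hB₂ : B₂ = ((c : ℂ) * C - (a : ℂ) * A) / ((c : ℂ) - (a : ℂ)))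
    (hC₂ : C₂ = ((b : ℂ) * B - (a : ℂ) * A) / ((b : ℂ) - (a : ℂ))) :
    dist C₂ A₁ = dist C₂ B₂ := by
  have hπ := Real.pi_pos
  set ω : ℂ := Complex.exp (Real.pi * Complex.I / 15) with hω
  have hpow : ∀ n : ℕ, ω ^ n = Complex.exp ((n : ℂ) * (Real.pi * Complex.I / 15)) := by
    intro n; rw [hω, ← Complex.exp_nat_mul]
  have hζω : ζ = ω ^ 2 := by
    rw [hζ, hpow 2]; congr 1; push_cast; ring
  have hω30 : ω ^ 30 = 1 := by
    rw [hpow 30, show ((30:ℕ) : ℂ) * (Real.pi * Complex.I / 15) = 2*Real.pi*Complex.I by push_cast; ring]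
    exact Complex.exp_two_pi_mul_I
  have hω15 : ω ^ 15 = -1 := by
    rw [hpow 15, show ((15:ℕ) : ℂ) * (Real.pi * Complex.I / 15) = Real.pi*Complex.I by push_cast; ring]
    exact Complex.exp_pi_mul_I
  have hrel : ω^10 - ω^5 + 1 = 0 := by
    have hu3 : (ω^5)^3 = -1 := by rw [← pow_mul]; exact hω15
    have hune : ω^5 + 1 ≠ 0 := by
      intro h
      have hre : (ω^5).re = Real.cos (Real.pi/3) := by
        rw [hpow 5, show ((5:ℕ) : ℂ) * (Real.pi * Complex.I / 15) = ((Real.pi/3 : ℝ):ℂ)*Complex.I by push_cast; ring]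
        exact Complex.exp_ofReal_mul_I_re _
      have h5 : ω^5 = -1 := by linear_combination h
      rw [h5, Real.cos_pi_div_three] at hre
      norm_num at hre
    have hsplit : (ω^5 + 1) * (ω^10 - ω^5 + 1) = 0 := by linear_combination hu3
    rcases mul_eq_zero.mp hsplit with h | h
    · exact absurd h hune
    · exact h
  -- distances as sines
  have ha' : a = 2 * Real.sin (2*Real.pi/15) := by
    rw [ha, hB, hC, hζω, Complex.dist_eq]
    rw [show ((ω^2)^2 : ℂ) = Complex.exp ((2*(2*Real.pi/15) : ℝ) * Complex.I) by
      rw [← pow_mul, hpow 4]; congr 1; push_cast; ring]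
    rw [abs_one_sub_exp _ (by positivity) (by linarith)]
  have hb' : b = 2 * Real.sin (7*Real.pi/15) := by
    rw [hb, hC, hA, hζω, Complex.dist_eq]
    rw [show ((ω^2)^2 - (ω^2)^9 : ℂ) = ω^4 * (1 - Complex.exp ((2*(7*Real.pi/15) : ℝ) * Complex.I)) by
      rw [show Complex.exp ((2*(7*Real.pi/15) : ℝ) * Complex.I) = ω^14 by
        rw [hpow 14]; congr 1; push_cast; ring]
      ring]
    rw [norm_mul]
    rw [show ‖ω^4‖ = 1 by
      rw [hpow 4, show ((4:ℕ) : ℂ) * (Real.pi * Complex.I / 15) = ((4*Real.pi/15 : ℝ):ℂ)*Complex.I by push_cast; ring]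
      exact Complex.norm_exp_ofReal_mul_I _]
    rw [one_mul, abs_one_sub_exp _ (by positivity) (by linarith)]
  have hc' : c = 2 * Real.sin (9*Real.pi/15) := by
    rw [hc, dist_comm, hA, hB, hζω, Complex.dist_eq]
    rw [show ((1 : ℂ) - (ω^2)^9) = 1 - Complex.exp ((2*(9*Real.pi/15) : ℝ) * Complex.I) by
      rw [show Complex.exp ((2*(9*Real.pi/15) : ℝ) * Complex.I) = ω^18 by
        rw [hpow 18]; congr 1; push_cast; ring]
      ring]
    rw [abs_one_sub_exp _ (by positivity) (by linarith)]
  -- positivity and strict inequalities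
  have hbpos : 0 < b := by
    rw [hb']
    have := Real.sin_pos_of_pos_of_lt_pi (x := 7*Real.pi/15) (by positivity) (by linarith)
    linarith
  have hcpos : 0 < c := by
    rw [hc']
    have := Real.sin_pos_of_pos_of_lt_pi (x := 9*Real.pi/15) (by positivity) (by linarith)
    linarith
  have hab : a < b := by
    rw [ha', hb']
    have := Real.sin_lt_sin_of_lt_of_le_pi_div_two (x := 2*Real.pi/15) (y := 7*Real.pi/15)
      (by linarith) (by linarith) (by linarith)
    linarith
  have hac : a < c := by
    rw [ha', hc']
    have h9 : Real.sin (9*Real.pi/15) = Real.sin (6*Real.pi/15) := by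
      rw [← Real.sin_pi_sub]; congr 1; ring
    rw [h9]
    have := Real.sin_lt_sin_of_lt_of_le_pi_div_two (x := 2*Real.pi/15) (y := 6*Real.pi/15)
      (by linarith) (by linarith) (by linarith)
    linarith
  -- complex casts of a b c
  have haC : (a : ℂ) = (ω^28 - ω^2) * Complex.I := by
    rw [ha']
    refine two_sin_eq _ _ _ ?_ ?_
    · rw [hpow 2]; congr 1; push_cast; ring
    · rw [show (-((2*Real.pi/15 : ℝ) : ℂ)) * Complex.I
          = ((28:ℕ) : ℂ) * (Real.pi * Complex.I / 15) + (-(2*Real.pi*Complex.I)) by push_cast; ring]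
      rw [Complex.exp_add, ← hpow 28, Complex.exp_neg, Complex.exp_two_pi_mul_I, inv_one, mul_one]
  have hbC : (b : ℂ) = (ω^23 - ω^7) * Complex.I := by
    rw [hb']
    refine two_sin_eq _ _ _ ?_ ?_
    · rw [hpow 7]; congr 1; push_cast; ring
    · rw [show (-((7*Real.pi/15 : ℝ) : ℂ)) * Complex.I
          = ((23:ℕ) : ℂ) * (Real.pi * Complex.I / 15) + (-(2*Real.pi*Complex.I)) by push_cast; ring]
      rw [Complex.exp_add, ← hpow 23, Complex.exp_neg, Complex.exp_two_pi_mul_I, inv_one, mul_one]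
  have hcC : (c : ℂ) = (ω^21 - ω^9) * Complex.I := by
    rw [hc']
    refine two_sin_eq _ _ _ ?_ ?_
    · rw [hpow 9]; congr 1; push_cast; ring
    · rw [show (-((9*Real.pi/15 : ℝ) : ℂ)) * Complex.I
          = ((21:ℕ) : ℂ) * (Real.pi * Complex.I / 15) + (-(2*Real.pi*Complex.I)) by push_cast; ring]
      rw [Complex.exp_add, ← hpow 21, Complex.exp_neg, Complex.exp_two_pi_mul_I, inv_one, mul_one]
  -- conjugation
  have hconjω : (starRingEnd ℂ) ω = ω⁻¹ := by
    rw [hω, ← Complex.exp_conj, ← Complex.exp_neg]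
    congr 1
    simp [map_div₀, map_ofNat]
    ring
  have hconj : ∀ k : ℕ, k ≤ 30 → (starRingEnd ℂ) (ω^k) = ω^(30-k) := by
    intro k hk
    have h1 : ω^(30-k) * ω^k = 1 := by rw [← pow_add, Nat.sub_add_cancel hk, hω30]
    rw [map_pow, hconjω, inv_pow]
    exact (eq_inv_of_mul_eq_one_left h1).symm
  have hBc : (starRingEnd ℂ) B = 1 := by rw [hB, map_one]
  have hCc : (starRingEnd ℂ) C = ω^26 := by
    rw [hC, hζω, show ((ω^2)^2 : ℂ) = ω^4 by ring]
    simpa using hconj 4 (by norm_num)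
  have hAc : (starRingEnd ℂ) A = ω^12 := by
    rw [hA, hζω, show ((ω^2)^9 : ℂ) = ω^18 by ring]
    simpa using hconj 18 (by norm_num)
  -- denominators nonzero
  have hD1 : (ω^23 - ω^7) + (ω^21 - ω^9) ≠ 0 := by
    intro h
    have h2 : ((b:ℂ) + (c:ℂ)) = 0 := by rw [hbC, hcC]; linear_combination Complex.I * h
    have h3 : b + c = 0 := by exact_mod_cast h2
    linarith
  have hD2 : (ω^21 - ω^9) - (ω^28 - ω^2) ≠ 0 := by
    intro h
    have h2 : ((c:ℂ) - (a:ℂ)) = 0 := by rw [haC, hcC]; linear_combination Complex.I * h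
    have h3 : c - a = 0 := by exact_mod_cast h2
    linarith
  have hD3 : (ω^23 - ω^7) - (ω^28 - ω^2) ≠ 0 := by
    intro h
    have h2 : ((b:ℂ) - (a:ℂ)) = 0 := by rw [haC, hbC]; linear_combination Complex.I * h
    have h3 : b - a = 0 := by exact_mod_cast h2
    linarith
  -- the three points in ω form
  have hA₁' : A₁ = ((ω^23 - ω^7) + (ω^21 - ω^9)*ω^4) / ((ω^23 - ω^7) + (ω^21 - ω^9)) := by
    rw [hA₁, hB, hC, hζω, hbC, hcC]
    rw [show (ω^23 - ω^7)*Complex.I*1 + (ω^21 - ω^9)*Complex.I*(ω^2)^2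
          = Complex.I * ((ω^23 - ω^7) + (ω^21 - ω^9)*ω^4) by ring,
        show (ω^23 - ω^7)*Complex.I + (ω^21 - ω^9)*Complex.I
          = Complex.I * ((ω^23 - ω^7) + (ω^21 - ω^9)) by ring,
        mul_div_mul_left _ _ Complex.I_ne_zero]
  have hB₂' : B₂ = ((ω^21 - ω^9)*ω^4 - (ω^28 - ω^2)*ω^18) / ((ω^21 - ω^9) - (ω^28 - ω^2)) := by
    rw [hB₂, hA, hC, hζω, haC, hcC]
    rw [show (ω^21 - ω^9)*Complex.I*(ω^2)^2 - (ω^28 - ω^2)*Complex.I*(ω^2)^9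
          = Complex.I * ((ω^21 - ω^9)*ω^4 - (ω^28 - ω^2)*ω^18) by ring,
        show (ω^21 - ω^9)*Complex.I - (ω^28 - ω^2)*Complex.I
          = Complex.I * ((ω^21 - ω^9) - (ω^28 - ω^2)) by ring,
        mul_div_mul_left _ _ Complex.I_ne_zero]
  have hC₂' : C₂ = ((ω^23 - ω^7) - (ω^28 - ω^2)*ω^18) / ((ω^23 - ω^7) - (ω^28 - ω^2)) := by
    rw [hC₂, hA, hB, hζω, haC, hbC]
    rw [show (ω^23 - ω^7)*Complex.I*1 - (ω^28 - ω^2)*Complex.I*(ω^2)^9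
          = Complex.I * ((ω^23 - ω^7) - (ω^28 - ω^2)*ω^18) by ring,
        show (ω^23 - ω^7)*Complex.I - (ω^28 - ω^2)*Complex.I
          = Complex.I * ((ω^23 - ω^7) - (ω^28 - ω^2)) by ring,
        mul_div_mul_left _ _ Complex.I_ne_zero]
  -- conjugates of the three points in ω form
  have hA₁c : (starRingEnd ℂ) A₁
      = ((ω^23 - ω^7) + (ω^21 - ω^9)*ω^26) / ((ω^23 - ω^7) + (ω^21 - ω^9)) := by
    rw [hA₁]
    simp only [map_div₀, map_add, map_mul, Complex.conj_ofReal, hBc, hCc]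
    rw [hbC, hcC]
    rw [show (ω^23 - ω^7)*Complex.I*1 + (ω^21 - ω^9)*Complex.I*ω^26
          = Complex.I * ((ω^23 - ω^7) + (ω^21 - ω^9)*ω^26) by ring,
        show (ω^23 - ω^7)*Complex.I + (ω^21 - ω^9)*Complex.I
          = Complex.I * ((ω^23 - ω^7) + (ω^21 - ω^9)) by ring,
        mul_div_mul_left _ _ Complex.I_ne_zero]
  have hB₂c : (starRingEnd ℂ) B₂
      = ((ω^21 - ω^9)*ω^26 - (ω^28 - ω^2)*ω^12) / ((ω^21 - ω^9) - (ω^28 - ω^2)) := by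
    rw [hB₂]
    simp only [map_div₀, map_sub, map_mul, Complex.conj_ofReal, hAc, hCc]
    rw [haC, hcC]
    rw [show (ω^21 - ω^9)*Complex.I*ω^26 - (ω^28 - ω^2)*Complex.I*ω^12
          = Complex.I * ((ω^21 - ω^9)*ω^26 - (ω^28 - ω^2)*ω^12) by ring,
        show (ω^21 - ω^9)*Complex.I - (ω^28 - ω^2)*Complex.I
          = Complex.I * ((ω^21 - ω^9) - (ω^28 - ω^2)) by ring,
        mul_div_mul_left _ _ Complex.I_ne_zero]
  have hC₂c : (starRingEnd ℂ) C₂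
      = ((ω^23 - ω^7) - (ω^28 - ω^2)*ω^12) / ((ω^23 - ω^7) - (ω^28 - ω^2)) := by
    rw [hC₂]
    simp only [map_div₀, map_sub, map_mul, Complex.conj_ofReal, hAc, hBc]
    rw [haC, hbC]
    rw [show (ω^23 - ω^7)*Complex.I*1 - (ω^28 - ω^2)*Complex.I*ω^12
          = Complex.I * ((ω^23 - ω^7) - (ω^28 - ω^2)*ω^12) by ring,
        show (ω^23 - ω^7)*Complex.I - (ω^28 - ω^2)*Complex.I
          = Complex.I * ((ω^23 - ω^7) - (ω^28 - ω^2)) by ring,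
        mul_div_mul_left _ _ Complex.I_ne_zero]
  -- final computation
  rw [Complex.dist_eq, Complex.dist_eq, Complex.norm_def, Complex.norm_def]
  congr 1
  apply Complex.ofReal_injective
  rw [← Complex.mul_conj, ← Complex.mul_conj, map_sub, map_sub,
      hC₂c, hA₁c, hB₂c, hC₂', hA₁', hB₂']
  rw [div_sub_div _ _ hD3 hD1, div_sub_div _ _ hD3 hD1,
      div_sub_div _ _ hD3 hD2, div_sub_div _ _ hD3 hD2,
      div_mul_div_comm, div_mul_div_comm,
      div_eq_div_iff (mul_ne_zero (mul_ne_zero hD3 hD1) (mul_ne_zero hD3 hD1))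
        (mul_ne_zero (mul_ne_zero hD3 hD2) (mul_ne_zero hD3 hD2))]
  linear_combination ((-1:ℂ) * ω ^ 246 + (-1:ℂ) * ω ^ 244 + (2:ℂ) * ω ^ 241 + (4:ℂ) * ω ^ 239 + (2:ℂ) * ω ^ 237 + (-1:ℂ) * ω ^ 236 + (-3:ℂ) * ω ^ 234 + (1:ℂ) * ω ^ 231 + (3:ℂ) * ω ^ 230 + (-2:ℂ) * ω ^ 229 + (1:ℂ) * ω ^ 228 + (-12:ℂ) * ω ^ 227 + (-1:ℂ) * ω ^ 226 + (-19:ℂ) * ω ^ 225 + (-11:ℂ) * ω ^ 223 + (11:ℂ) * ω ^ 222 + (-2:ℂ) * ω ^ 221 + (27:ℂ) * ω ^ 220 + (1:ℂ) * ω ^ 219 + (22:ℂ) * ω ^ 218 + (3:ℂ) * ω ^ 217 + (5:ℂ) * ω ^ 216 + (1:ℂ) * ω ^ 215 + (2:ℂ) * ω ^ 214 + (6:ℂ) * ω ^ 213 + (1:ℂ) * ω ^ 212 + (19:ℂ) * ω ^ 211 + (-9:ℂ) * ω ^ 210 + (18:ℂ) * ω ^ 209 + (-36:ℂ) * ω ^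 208 + (1:ℂ) * ω ^ 207 + (-72:ℂ) * ω ^ 206 + (-13:ℂ) * ω ^ 205 + (-72:ℂ) * ω ^ 204 + (-2:ℂ) * ω ^ 203 + (-38:ℂ) * ω ^ 202 + (50:ℂ) * ω ^ 201 + (-8:ℂ) * ω ^ 200 + (80:ℂ) * ω ^ 199 + (17:ℂ) * ω ^ 198 + (47:ℂ) * ω ^ 197 + (23:ℂ) * ω ^ 196 + (20:ℂ) * ω ^ 195 + (20:ℂ) * ω ^ 194 + (20:ℂ) * ω ^ 193 + (54:ℂ) * ω ^ 192 + (5:ℂ) * ω ^ 191 + (72:ℂ) * ω ^ 190 + (-48:ℂ) * ω ^ 189 + (37:ℂ) * ω ^ 188 + (-133:ℂ) * ω ^ 187 + (-15:ℂ) * ω ^ 186 + (-185:ℂ) * ω ^ 185 + (-38:ℂ) * ω ^ 184 + (-150:ℂ) * ω ^ 183 + (18:ℂ) * ω ^ 182 + (-87:ℂ) * ω ^ 181 + (110:ℂ) * ω ^ 180 + (-14:ℂ) * ω ^ 179 + (114:ℂ) * ω ^ 178 + (51:ℂ) * ω ^ 177 + (76:ℂ) * ω ^ 176 + (60:ℂ)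 * ω ^ 175 + (73:ℂ) * ω ^ 174 + (73:ℂ) * ω ^ 173 + (48:ℂ) * ω ^ 172 + (121:ℂ) * ω ^ 171 + (-10:ℂ) * ω ^ 170 + (110:ℂ) * ω ^ 169 + (-114:ℂ) * ω ^ 168 + (35:ℂ) * ω ^ 167 + (-235:ℂ) * ω ^ 166 + (-41:ℂ) * ω ^ 165 + (-275:ℂ) * ω ^ 164 + (-38:ℂ) * ω ^ 163 + (-230:ℂ) * ω ^ 162 + (72:ℂ) * ω ^ 161 + (-142:ℂ) * ω ^ 160 + (144:ℂ) * ω ^ 159 + (-7:ℂ) * ω ^ 158 + (132:ℂ) * ω ^ 157 + (69:ℂ) * ω ^ 156 + (141:ℂ) * ω ^ 155 + (87:ℂ) * ω ^ 154 + (125:ℂ) * ω ^ 153 + (133:ℂ) * ω ^ 152 + (38:ℂ) * ω ^ 151 + (142:ℂ) * ω ^ 150 + (-61:ℂ) * ω ^ 149 + (89:ℂ) * ω ^ 148 + (-175:ℂ) * ω ^ 147 + (20:ℂ) * ω ^ 146 + (-259:ℂ) * ω ^ 145 + (-35:ℂ) * ω ^ 144 + (-288:ℂ) * ω ^ 143 +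 (-270:ℂ) * ω ^ 141 + (86:ℂ) * ω ^ 140 + (-146:ℂ) * ω ^ 139 + (125:ℂ) * ω ^ 138 + (13:ℂ) * ω ^ 137 + (180:ℂ) * ω ^ 136 + (68:ℂ) * ω ^ 135 + (207:ℂ) * ω ^ 134 + (101:ℂ) * ω ^ 133 + (110:ℂ) * ω ^ 132 + (125:ℂ) * ω ^ 131 + (-4:ℂ) * ω ^ 130 + (87:ℂ) * ω ^ 129 + (-92:ℂ) * ω ^ 128 + (50:ℂ) * ω ^ 127 + (-170:ℂ) * ω ^ 126 + (19:ℂ) * ω ^ 125 + (-214:ℂ) * ω ^ 124 + (-6:ℂ) * ω ^ 123 + (-257:ℂ) * ω ^ 122 + (13:ℂ) * ω ^ 121 + (-236:ℂ) * ω ^ 120 + (36:ℂ) * ω ^ 119 + (-98:ℂ) * ω ^ 118 + (102:ℂ) * ω ^ 117 + (21:ℂ) * ω ^ 116 + (205:ℂ) * ω ^ 115 + (73:ℂ) * ω ^ 114 + (181:ℂ) * ω ^ 113 + (99:ℂ) * ω ^ 112 + (60:ℂ) * ω ^ 111 + (59:ℂ) * ω ^ 110 + (-18:ℂ) * ω ^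 109 + (28:ℂ) * ω ^ 108 + (-63:ℂ) * ω ^ 107 + (40:ℂ) * ω ^ 106 + (-98:ℂ) * ω ^ 105 + (27:ℂ) * ω ^ 104 + (-147:ℂ) * ω ^ 103 + (-1:ℂ) * ω ^ 102 + (-197:ℂ) * ω ^ 101 + (-18:ℂ) * ω ^ 100 + (-156:ℂ) * ω ^ 99 + (-59:ℂ) * ω ^ 97 + (88:ℂ) * ω ^ 96 + (14:ℂ) * ω ^ 95 + (140:ℂ) * ω ^ 94 + (65:ℂ) * ω ^ 93 + (86:ℂ) * ω ^ 92 + (60:ℂ) * ω ^ 91 + (27:ℂ) * ω ^ 90 + (19:ℂ) * ω ^ 89 + (-6:ℂ) * ω ^ 88 + (25:ℂ) * ω ^ 87 + (-20:ℂ) * ω ^ 86 + (40:ℂ) * ω ^ 85 + (-34:ℂ) * ω ^ 84 + (23:ℂ) * ω ^ 83 + (-79:ℂ) * ω ^ 82 + (-9:ℂ) * ω ^ 81 + (-105:ℂ) * ω ^ 80 + (-32:ℂ) * ω ^ 79 + (-75:ℂ) * ω ^ 78 + (-2:ℂ) * ω ^ 77 + (-33:ℂ) * ω ^ 76 + (48:ℂ)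 * ω ^ 75 + (9:ℂ) * ω ^ 74 + (46:ℂ) * ω ^ 73 + (33:ℂ) * ω ^ 72 + (19:ℂ) * ω ^ 71 + (15:ℂ) * ω ^ 70 + (9:ℂ) * ω ^ 69 + (12:ℂ) * ω ^ 68 + (27:ℂ) * ω ^ 66 + (-1:ℂ) * ω ^ 65 + (23:ℂ) * ω ^ 64 + (-8:ℂ) * ω ^ 63 + (9:ℂ) * ω ^ 62 + (-27:ℂ) * ω ^ 61 + (-6:ℂ) * ω ^ 60 + (-30:ℂ) * ω ^ 59 + (-15:ℂ) * ω ^ 58 + (-21:ℂ) * ω ^ 57 + (-9:ℂ) * ω ^ 55 + (10:ℂ) * ω ^ 54 + (5:ℂ) * ω ^ 53 + (3:ℂ) * ω ^ 52 + (7:ℂ) * ω ^ 51 + (1:ℂ) * ω ^ 50 + (1:ℂ) * ω ^ 48 + (6:ℂ) * ω ^ 47 + (9:ℂ) * ω ^ 45 + (1:ℂ) * ω ^ 44 + (5:ℂ) * ω ^ 43 + (-1:ℂ) * ω ^ 42 + (1:ℂ) * ω ^ 41 + (-4:ℂ) * ω ^ 40 + (-1:ℂ) * ω ^ 39 + (-3:ℂ)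 * ω ^ 38 + (-2:ℂ) * ω ^ 37 + (-2:ℂ) * ω ^ 36 + (1:ℂ) * ω ^ 32 + (-1:ℂ) * ω ^ 31 + (1:ℂ) * ω ^ 26) * hrel
end

section
/- Let ζ = exp(2πi/15) and consider the second pentadecagonal triangle with vertices A = ζ⁹, B = 1, C = ζ² in ℂ (its angles are ∠A = 2π/15, ∠B = 7π/15, ∠C = 2π/5). With side lengths a = dist(B,C), b = dist(C,A), c = dist(A,B), define the internal bisector foot A₁ = (b·B + c·C)/(b+c) and the external bisector foot B₂ = (c·C − a·A)/(c−a). Then dist(A, A₁) = dist(B, B₂); that is, the internal bisector from A equals in length the external bisector from B. -/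
open Complex Real

lemma ediff (α β : ℝ) :
    Complex.exp (α * Complex.I) - Complex.exp (β * Complex.I)
      = 2 * (Real.sin ((α - β) / 2) : ℂ) * Complex.I *
        Complex.exp ((((α + β) / 2 : ℝ) : ℂ) * Complex.I) := by
  have h1 := Complex.cos_sub_cos (α : ℂ) (β : ℂ)
  have h2 := Complex.sin_sub_sin (α : ℂ) (β : ℂ)
  rw [Complex.exp_mul_I, Complex.exp_mul_I, Complex.exp_mul_I]
  push_cast [Complex.ofReal_sin]
  linear_combination h1 + Complex.I * h2 + (-2 * Complex.sin (((α:ℂ) + β)/2) * Complex.sin (((α:ℂ) - β)/2)) * Complex.I_sq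

lemma esum (α β : ℝ) :
    Complex.exp (α * Complex.I) + Complex.exp (β * Complex.I)
      = 2 * (Real.cos ((α - β) / 2) : ℂ) *
        Complex.exp ((((α + β) / 2 : ℝ) : ℂ) * Complex.I) := by
  have h1 := Complex.cos_add_cos (α : ℂ) (β : ℂ)
  have h2 := Complex.sin_add_sin (α : ℂ) (β : ℂ)
  rw [Complex.exp_mul_I, Complex.exp_mul_I, Complex.exp_mul_I]
  push_cast [Complex.ofReal_cos]
  linear_combination h1 + Complex.I * h2

lemma habsI (r m : ℝ) :
    ‖(r : ℂ) * Complex.I * Complex.exp ((m : ℂ) * Complex.I)‖ = |r| := by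
  simp [map_mul, Complex.norm_exp_ofReal_mul_I, Complex.norm_real]

lemma habs (r m : ℝ) :
    ‖(r : ℂ) * Complex.exp ((m : ℂ) * Complex.I)‖ = |r| := by
  simp [map_mul, Complex.norm_exp_ofReal_mul_I, Complex.norm_real]

theorem stmt_18 (ζ A B C : ℂ) (hζ : ζ = Complex.exp (2 * Real.pi * Complex.I / 15))
    (hA : A = ζ ^ 9) (hB : B = 1) (hC : C = ζ ^ 2)
    (a b c : ℝ) (ha : a = dist B C) (hb : b = dist C A) (hc : c = dist A B)
    (A₁ B₂ : ℂ)
    (hA₁ : A₁ = ((b : ℂ) * B + (c : ℂ) * C) / ((b : ℂ) + (c : ℂ)))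
    (hB₂ : B₂ = ((c : ℂ) * C - (a : ℂ) * A) / ((c : ℂ) - (a : ℂ))) :
    dist A A₁ = dist B B₂ := by
  set u : ℝ := Real.pi / 15 with hu
  have hπ := Real.pi_pos
  have hu0 : 0 < u := by positivity
  -- exponential forms of the vertices
  have hζ' : ζ = Complex.exp ((2 * u : ℝ) * Complex.I) := by
    rw [hζ]; congr 1; push_cast [hu]; ring
  have hA9 : A = Complex.exp ((18 * u : ℝ) * Complex.I) := by
    rw [hA, hζ', ← Complex.exp_nat_mul]
    congr 1; push_cast; ring
  have hC2 : C = Complex.exp ((4 * u : ℝ) * Complex.I) := by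
    rw [hC, hζ', ← Complex.exp_nat_mul]
    congr 1; push_cast; ring
  have hB0 : B = Complex.exp ((0 : ℝ) * Complex.I) := by
    rw [hB]; norm_num
  -- differences
  have dAB : A - B = 2 * (Real.sin (9 * u) : ℂ) * Complex.I *
      Complex.exp ((9 * u : ℝ) * Complex.I) := by
    have h := ediff (18 * u) 0
    rw [show (18 * u - 0) / 2 = 9 * u by ring, show (18 * u + 0) / 2 = 9 * u by ring] at h
    rw [hA9, hB0, h]
  have dAC : A - C = 2 * (Real.sin (7 * u) : ℂ) * Complex.I *
      Complex.exp ((11 * u : ℝ) * Complex.I) := by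
    have h := ediff (18 * u) (4 * u)
    rw [show (18 * u - 4 * u) / 2 = 7 * u by ring, show (18 * u + 4 * u) / 2 = 11 * u by ring] at h
    rw [hA9, hC2, h]
  have dCB : C - B = 2 * (Real.sin (2 * u) : ℂ) * Complex.I *
      Complex.exp ((2 * u : ℝ) * Complex.I) := by
    have h := ediff (4 * u) 0
    rw [show (4 * u - 0) / 2 = 2 * u by ring, show (4 * u + 0) / 2 = 2 * u by ring] at h
    rw [hC2, hB0, h]
  -- positivity of the various sines and cosines
  have hs2 : 0 < Real.sin (2 * u) := Real.sin_pos_of_pos_of_lt_pi (by positivity) (by rw [hu]; linarith)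
  have hs7 : 0 < Real.sin (7 * u) := Real.sin_pos_of_pos_of_lt_pi (by positivity) (by rw [hu]; linarith)
  have hs9 : 0 < Real.sin (9 * u) := Real.sin_pos_of_pos_of_lt_pi (by positivity) (by rw [hu]; linarith)
  have hs35 : 0 < Real.sin (7 * u / 2) := Real.sin_pos_of_pos_of_lt_pi (by positivity) (by rw [hu]; linarith)
  have hcu : 0 < Real.cos u := Real.cos_pos_of_mem_Ioo ⟨by linarith, by rw [hu]; linarith⟩
  have hc55 : 0 < Real.cos (11 * u / 2) := Real.cos_pos_of_mem_Ioo ⟨by linarith, by rw [hu]; linarith⟩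
  -- side lengths
  have ha' : a = 2 * Real.sin (2 * u) := by
    rw [ha, dist_comm, Complex.dist_eq, show C - B = ((2 * Real.sin (2*u) : ℝ) : ℂ) * Complex.I *
      Complex.exp ((2 * u : ℝ) * Complex.I) by rw [dCB]; push_cast; ring, habsI,
      abs_of_pos (by linarith)]
  have hb' : b = 2 * Real.sin (7 * u) := by
    rw [hb, dist_comm, Complex.dist_eq, show A - C = ((2 * Real.sin (7*u) : ℝ) : ℂ) * Complex.I *
      Complex.exp ((11 * u : ℝ) * Complex.I) by rw [dAC]; push_cast; ring, habsI,
      abs_of_pos (by linarith)]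
  have hc' : c = 2 * Real.sin (9 * u) := by
    rw [hc, Complex.dist_eq, show A - B = ((2 * Real.sin (9*u) : ℝ) : ℂ) * Complex.I *
      Complex.exp ((9 * u : ℝ) * Complex.I) by rw [dAB]; push_cast; ring, habsI,
      abs_of_pos (by linarith)]
  -- sum / difference formulas
  have hbc : b + c = 4 * Real.sin (8 * u) * Real.cos u := by
    rw [hb', hc', show 7 * u = 8 * u - u by ring, show 9 * u = 8 * u + u by ring,
      Real.sin_add, Real.sin_sub]; ring
  have hca : c - a = 4 * Real.cos (11 * u / 2) * Real.sin (7 * u / 2) := by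
    rw [hc', ha', show 9 * u = 11 * u / 2 + 7 * u / 2 by ring,
      show 2 * u = 11 * u / 2 - 7 * u / 2 by ring, Real.sin_add, Real.sin_sub]; ring
  have hsin8 : Real.sin (8 * u) = Real.sin (7 * u) := by
    rw [show 8 * u = Real.pi - 7 * u by rw [hu]; ring, Real.sin_pi_sub]
  have hcos55 : Real.cos (11 * u / 2) = Real.sin (2 * u) := by
    rw [show 11 * u / 2 = Real.pi / 2 - 2 * u by rw [hu]; ring, Real.cos_pi_div_two_sub]
  have hbc0 : (0:ℝ) < b + c := by rw [hbc, hsin8]; positivity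
  have hca0 : (0:ℝ) < c - a := by rw [hca]; positivity
  have hbcC : ((b:ℂ) + (c:ℂ)) ≠ 0 := by
    rw [show (b:ℂ) + (c:ℂ) = ((b + c : ℝ) : ℂ) by push_cast; ring]
    exact_mod_cast ne_of_gt hbc0
  have hcaC : ((c:ℂ) - (a:ℂ)) ≠ 0 := by
    rw [show (c:ℂ) - (a:ℂ) = ((c - a : ℝ) : ℂ) by push_cast; ring]
    exact_mod_cast ne_of_gt hca0
  -- the internal bisector from A
  have hAA₁ : A - A₁ = ((b:ℂ) * (A - B) + (c:ℂ) * (A - C)) / ((b:ℂ) + (c:ℂ)) := by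
    rw [hA₁]; field_simp; ring
  have hsum : Complex.exp ((9 * u : ℝ) * Complex.I) + Complex.exp ((11 * u : ℝ) * Complex.I)
      = 2 * (Real.cos u : ℂ) * Complex.exp ((10 * u : ℝ) * Complex.I) := by
    have h := esum (11 * u) (9 * u)
    rw [show (11 * u - 9 * u) / 2 = u by ring, show (11 * u + 9 * u) / 2 = 10 * u by ring] at h
    rw [add_comm, h]
  have hN1 : (b:ℂ) * (A - B) + (c:ℂ) * (A - C)
      = ((8 * Real.sin (7*u) * Real.sin (9*u) * Real.cos u : ℝ) : ℂ) * Complex.I *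
        Complex.exp ((10 * u : ℝ) * Complex.I) := by
    rw [dAB, dAC, hb', hc']
    have h := hsum
    push_cast at h ⊢
    linear_combination (4 * Complex.sin (7*(u:ℂ)) * Complex.sin (9*(u:ℂ)) * Complex.I) * h
  have dA1 : dist A A₁ = 2 * Real.sin (9 * u) := by
    rw [Complex.dist_eq, hAA₁, hN1, norm_div, habsI,
      show (b:ℂ) + (c:ℂ) = ((b + c : ℝ) : ℂ) by push_cast; ring, Complex.norm_real, Real.norm_eq_abs,
      abs_of_pos (by positivity), abs_of_pos hbc0, hbc, hsin8]
    field_simp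
    ring
  -- the external bisector from B
  have hBB₂ : B - B₂ = ((a:ℂ) * (A - B) - (c:ℂ) * (C - B)) / ((c:ℂ) - (a:ℂ)) := by
    rw [hB₂]; field_simp; ring
  have hdiff : Complex.exp ((9 * u : ℝ) * Complex.I) - Complex.exp ((2 * u : ℝ) * Complex.I)
      = 2 * (Real.sin (7 * u / 2) : ℂ) * Complex.I * Complex.exp ((11 * u / 2 : ℝ) * Complex.I) := by
    have h := ediff (9 * u) (2 * u)
    rw [show (9 * u - 2 * u) / 2 = 7 * u / 2 by ring, show (9 * u + 2 * u) / 2 = 11 * u / 2 by ring] at h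
    rw [h]
  have hN2 : (a:ℂ) * (A - B) - (c:ℂ) * (C - B)
      = ((-(8 * Real.sin (2*u) * Real.sin (9*u) * Real.sin (7*u/2)) : ℝ) : ℂ) *
        Complex.exp ((11 * u / 2 : ℝ) * Complex.I) := by
    rw [dAB, dCB, ha', hc']
    have h := hdiff
    push_cast at h ⊢
    linear_combination (4 * Complex.sin (2*(u:ℂ)) * Complex.sin (9*(u:ℂ)) * Complex.I) * h
      + (8 * Complex.sin (2*(u:ℂ)) * Complex.sin (9*(u:ℂ)) * Complex.sin (7*(u:ℂ)/2) *
          Complex.exp (11 * (u:ℂ) / 2 * Complex.I)) * Complex.I_sq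
  have dB2 : dist B B₂ = 2 * Real.sin (9 * u) := by
    rw [Complex.dist_eq, hBB₂, hN2, norm_div, habs,
      show (c:ℂ) - (a:ℂ) = ((c - a : ℝ) : ℂ) by push_cast; ring, Complex.norm_real, Real.norm_eq_abs,
      abs_of_pos hca0, hca, hcos55, abs_neg, abs_of_pos (by positivity)]
    rw [div_eq_iff (by positivity)]
    ring
  rw [dA1, dB2]
end
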